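/- arXiv:1506.04114 — 14 statements merged into one kernel-verified Lean document; each statement's English description precedes it below -/
import Mathlib

section
/- Every connected graph G of order n ≥ 3 is an induced subgraph of some locally Dirac graph. -/
noncomputable def locDeg {V : Type*} (G : SimpleGraph V) (v u : V) : ℕ :=
  (G.neighborSet v ∩ G.neighborSet u).ncard

noncomputable def degN {V : Type*} (G : SimpleGraph V) (v : V) : ℕ :=
  (G.neighborSet v).ncard

def LocallyDirac {V : Type*} (G : SimpleGraph V) : Prop :=
  ∀ v u : V, G.Adj v u → degN G v ≤ 2 * locDeg G v u

/-!
The join `G + K_n` works. Every vertex is adjacent to the whole clique side except itself, so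
each common neighbourhood in the join contains all but at most two clique vertices. The only
tight edge joins a clique vertex `x`, of degree `2n - 1`, to a vertex `u` of `G`; their common
neighbourhood has size `deg_G(u) + n - 1`, so it suffices that `G` has no isolated vertex, which
holds for a connected graph on at least two vertices.
-/

open Set

namespace Set

variable {α β : Type*}

lemma image_inl_union_image_inr_inter (s s' : Set α) (t t' : Set β) :
    (Sum.inl '' s ∪ Sum.inr '' t) ∩ (Sum.inl '' s' ∪ Sum.inr '' t') =
      Sum.inl '' (s ∩ s') ∪ Sum.inr '' (t ∩ t') := by
  ext (a | b) <;> simp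

lemma ncard_image_inl_union_image_inr [Finite α] [Finite β] (s : Set α) (t : Set β) :
    (Sum.inl '' s ∪ Sum.inr '' t).ncard = s.ncard + t.ncard := by
  rw [ncard_union_eq disjoint_image_inl_image_inr, ncard_image_of_injective _ Sum.inl_injective,
    ncard_image_of_injective _ Sum.inr_injective]

end Set

namespace SimpleGraph

variable {V U : Type*}

lemma locDeg_comm (G : SimpleGraph V) (v w : V) : locDeg G v w = locDeg G w v := by
  rw [locDeg, locDeg, inter_comm]

lemma degN_le_card [Finite V] (G : SimpleGraph V) (v : V) : degN G v ≤ Nat.card V :=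
  ncard_le_card _

lemma degN_top [Finite V] (v : V) : degN (⊤ : SimpleGraph V) v = Nat.card V - 1 := by
  rw [degN, neighborSet_top, ncard_compl, ncard_singleton]

lemma locDeg_top [Finite V] {v w : V} (h : v ≠ w) :
    locDeg (⊤ : SimpleGraph V) v w = Nat.card V - 2 := by
  rw [locDeg, neighborSet_top, neighborSet_top, ← compl_union, singleton_union, ncard_compl,
    ncard_pair h]

def join (G : SimpleGraph V) (H : SimpleGraph U) : SimpleGraph (V ⊕ U) where
  Adj
    | Sum.inl a, Sum.inl b => G.Adj a b
    | Sum.inr a, Sum.inr b => H.Adj a b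
    | _, _ => True
  symm.symm
    | Sum.inl _, Sum.inl _ => G.adj_symm
    | Sum.inr _, Sum.inr _ => H.adj_symm
    | Sum.inl _, Sum.inr _ | Sum.inr _, Sum.inl _ => id
  loopless.irrefl
    | Sum.inl a => G.loopless.irrefl a
    | Sum.inr a => H.loopless.irrefl a

variable {G : SimpleGraph V} {H : SimpleGraph U}

@[simp] lemma join_adj_inl_inl {a b : V} : (G.join H).Adj (.inl a) (.inl b) ↔ G.Adj a b := Iff.rfl
@[simp] lemma join_adj_inr_inr {a b : U} : (G.join H).Adj (.inr a) (.inr b) ↔ H.Adj a b := Iff.rfl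
@[simp] lemma join_adj_inl_inr {a : V} {b : U} : (G.join H).Adj (.inl a) (.inr b) := trivial
@[simp] lemma join_adj_inr_inl {a : U} {b : V} : (G.join H).Adj (.inr a) (.inl b) := trivial

def Embedding.joinInl : G ↪g G.join H where
  toFun := Sum.inl
  inj' := Sum.inl_injective
  map_rel_iff' := Iff.rfl

lemma neighborSet_join_inl (v : V) :
    (G.join H).neighborSet (.inl v) = Sum.inl '' G.neighborSet v ∪ Sum.inr '' univ := by
  ext (w | w) <;> simp

lemma neighborSet_join_inr (u : U) :
    (G.join H).neighborSet (.inr u) = Sum.inl '' univ ∪ Sum.inr '' H.neighborSet u := by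
  ext (w | w) <;> simp

variable [Finite V] [Finite U]

lemma degN_join_inl (v : V) : degN (G.join H) (.inl v) = degN G v + Nat.card U := by
  rw [degN, neighborSet_join_inl, ncard_image_inl_union_image_inr, ncard_univ, degN]

lemma degN_join_inr (u : U) : degN (G.join H) (.inr u) = Nat.card V + degN H u := by
  rw [degN, neighborSet_join_inr, ncard_image_inl_union_image_inr, ncard_univ, degN]

lemma locDeg_join_inl_inl (v w : V) :
    locDeg (G.join H) (.inl v) (.inl w) = locDeg G v w + Nat.card U := by
  rw [locDeg, neighborSet_join_inl, neighborSet_join_inl, image_inl_union_image_inr_inter,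
    ncard_image_inl_union_image_inr, inter_self, ncard_univ, locDeg]

lemma locDeg_join_inl_inr (v : V) (u : U) :
    locDeg (G.join H) (.inl v) (.inr u) = degN G v + degN H u := by
  rw [locDeg, neighborSet_join_inl, neighborSet_join_inr, image_inl_union_image_inr_inter,
    ncard_image_inl_union_image_inr, inter_univ, univ_inter, degN, degN]

lemma locDeg_join_inr_inl (u : U) (v : V) :
    locDeg (G.join H) (.inr u) (.inl v) = degN G v + degN H u := by
  rw [locDeg_comm, locDeg_join_inl_inr]

lemma locDeg_join_inr_inr (u x : U) :
    locDeg (G.join H) (.inr u) (.inr x) = Nat.card V + locDeg H u x := by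
  rw [locDeg, neighborSet_join_inr, neighborSet_join_inr, image_inl_union_image_inr_inter,
    ncard_image_inl_union_image_inr, inter_self, ncard_univ, locDeg]

lemma locallyDirac_join_top (hG : ∀ v, (G.neighborSet v).Nonempty) :
    LocallyDirac (G.join (⊤ : SimpleGraph V)) := by
  have hpos (v : V) : 0 < degN G v := (ncard_pos (toFinite _)).mpr (hG v)
  rintro (v | v) (w | w) hvw
  · have := degN_le_card G v
    rw [degN_join_inl, locDeg_join_inl_inl]
    omega
  · have := hpos v
    rw [degN_join_inl, locDeg_join_inl_inr, degN_top]
    omega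
  · have := hpos w
    rw [degN_join_inr, locDeg_join_inr_inl, degN_top]
    omega
  · have hne : v ≠ w := by simpa using hvw
    have : 1 < Nat.card V := Finite.one_lt_card_iff_nontrivial.mpr ⟨v, w, hne⟩
    rw [degN_join_inr, locDeg_join_inr_inr, degN_top, locDeg_top hne]
    omega

end SimpleGraph

/-- Every connected graph of order `n ≥ 3` is an induced subgraph of some locally Dirac graph. -/
theorem stmt1 {V : Type} [Fintype V] (G : SimpleGraph V) (hc : G.Connected)
    (h3 : 3 ≤ Fintype.card V) :
    ∃ (W : Type) (_ : Fintype W) (H : SimpleGraph W),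
      LocallyDirac H ∧ Nonempty (G ↪g H) := by
  have : Nontrivial V := Fintype.one_lt_card_iff_nontrivial.mp (by omega)
  have hG (v : V) : (G.neighborSet v).Nonempty := hc.preconnected.exists_adj_of_nontrivial v
  exact ⟨V ⊕ V, inferInstance, G.join ⊤, SimpleGraph.locallyDirac_join_top hG,
    ⟨SimpleGraph.Embedding.joinInl⟩⟩
end

section
/- If G is a connected locally Ore graph of order n ≥ 4, then G is 3-connected. -/
/-- `G` is locally Ore: for every vertex `v` and every pair of distinct non-adjacent
vertices `u, w ∈ N(v)`, `deg_{⟨N(v)⟩}(u) + deg_{⟨N(v)⟩}(w) ≥ deg_G(v)`. -/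
def LocallyOre {V : Type*} (G : SimpleGraph V) : Prop :=
  ∀ v u w : V, G.Adj v u → G.Adj v w → u ≠ w → ¬ G.Adj u w →
    degN G v ≤ locDeg G v u + locDeg G v w

lemma common {V : Type*} [Fintype V] {G : SimpleGraph V} (ho : LocallyOre G) {v u w : V}
    (hu : G.Adj v u) (hw : G.Adj v w) (huw : u ≠ w) (hna : ¬ G.Adj u w) :
    2 ≤ (G.neighborSet v ∩ G.neighborSet u ∩ G.neighborSet w).ncard := by
  classical
  have hV : ∀ s : Set V, s.Finite := fun s => s.toFinite
  set A := G.neighborSet v ∩ G.neighborSet u with hA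
  set B := G.neighborSet v ∩ G.neighborSet w with hB
  have hsub : A ∪ B ⊆ G.neighborSet v \ {u, w} := by
    rintro z (⟨hz1, hz2⟩ | ⟨hz1, hz2⟩) <;> refine ⟨hz1, ?_⟩ <;>
      rw [SimpleGraph.mem_neighborSet] at hz2 <;> rintro (rfl | rfl)
    · exact G.irrefl hz2
    · exact hna hz2
    · exact hna (G.adj_symm hz2)
    · exact G.irrefl hz2
  have hpair : ({u, w} : Set V) ⊆ G.neighborSet v := by
    rintro z (rfl | rfl); exact hu; exact hw
  have hcard_pair : ({u, w} : Set V).ncard = 2 := Set.ncard_pair huw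
  have hdiff : (G.neighborSet v \ {u, w}).ncard = (G.neighborSet v).ncard - 2 := by
    rw [Set.ncard_diff hpair (hV _), hcard_pair]
  have h2le : 2 ≤ (G.neighborSet v).ncard := by
    rw [← hcard_pair]; exact Set.ncard_le_ncard hpair (hV _)
  have hUB : (A ∪ B).ncard ≤ (G.neighborSet v).ncard - 2 := by
    rw [← hdiff]; exact Set.ncard_le_ncard hsub (hV _)
  have hIE : (A ∪ B).ncard + (A ∩ B).ncard = A.ncard + B.ncard :=
    Set.ncard_union_add_ncard_inter A B (hV _) (hV _)
  have hore := ho v u w hu hw huw hna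
  simp only [degN, locDeg] at hore
  rw [← hA, ← hB] at hore
  have : A ∩ B = G.neighborSet v ∩ G.neighborSet u ∩ G.neighborSet w := by
    rw [hA, hB]; ext z; simp [SimpleGraph.mem_neighborSet]; tauto
  rw [← this]
  omega

lemma exists_common {V : Type*} [Fintype V] {G : SimpleGraph V} (ho : LocallyOre G)
    {S : Set V} (hS : S.ncard ≤ 2) {v u w : V} (hv : v ∈ S)
    (hu : G.Adj v u) (hw : G.Adj v w) (huw : u ≠ w) (hna : ¬ G.Adj u w) :
    ∃ z, z ∉ S ∧ G.Adj u z ∧ G.Adj w z := by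
  classical
  set T := G.neighborSet v ∩ G.neighborSet u ∩ G.neighborSet w with hT
  have h2 : 2 ≤ T.ncard := common ho hu hw huw hna
  by_contra hcon
  push_neg at hcon
  have hTS : T ⊆ S \ {v} := by
    rintro z ⟨⟨hz1, hz2⟩, hz3⟩
    rw [SimpleGraph.mem_neighborSet] at hz1 hz2 hz3
    constructor
    · by_contra hzS
      exact hcon z hzS hz2 hz3
    · rintro rfl; exact G.irrefl hz1
  have hle : (S \ {v}).ncard ≤ 1 := by
    have := Set.ncard_diff (Set.singleton_subset_iff.mpr hv) (Set.toFinite _)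
    simp only [Set.ncard_singleton] at this
    omega
  have := Set.ncard_le_ncard hTS (Set.toFinite _)
  omega

lemma key {V : Type*} [Fintype V] {G : SimpleGraph V} (ho : LocallyOre G)
    {S : Set V} (hS : S.ncard ≤ 2) :
    ∀ n (x y : V) (hx : x ∉ S) (hy : y ∉ S) (p : G.Walk x y), p.IsPath → p.length ≤ n →
      (G.induce Sᶜ).Reachable ⟨x, hx⟩ ⟨y, hy⟩ := by
  have edge : ∀ (a b : V) (ha : a ∉ S) (hb : b ∉ S), G.Adj a b →
      (G.induce Sᶜ).Reachable ⟨a, ha⟩ ⟨b, hb⟩ := fun a b ha hb hadj =>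
    SimpleGraph.Adj.reachable (by simpa using hadj)
  intro n
  induction n with
  | zero =>
    intro x y hx hy p hp hn
    cases p with
    | nil => exact SimpleGraph.Reachable.refl _
    | @cons _ b _ h q => simp at hn
  | succ n ih =>
    intro x y hx hy p hp hn
    cases p with
    | nil => exact SimpleGraph.Reachable.refl _
    | @cons _ b _ h q =>
      by_cases hb : b ∈ S
      · cases q with
        | nil => exact absurd hb hy
        | @cons _ c _ h2 q2 =>
          by_cases hcS : c ∈ S
          · -- b, c ∈ S, so S = {b, c}
            have hbc : b ≠ c := h2.ne
            have hSeq : S = {b, c} := by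
              refine (Set.eq_of_subset_of_ncard_le ?_ ?_ (Set.toFinite _)).symm
              · rintro z (rfl | rfl); exacts [hb, hcS]
              · rw [Set.ncard_pair hbc]; exact hS
            cases q2 with
            | nil => exact absurd hcS hy
            | @cons _ d _ h3 q3 =>
              have hsup := hp.support_nodup
              simp only [SimpleGraph.Walk.support_cons, List.nodup_cons, List.mem_cons] at hsup
              push_neg at hsup
              have hdmem : d ∈ q3.support := q3.start_mem_support
              obtain ⟨⟨hx1, hx2, hx3⟩, ⟨hb1, hb2⟩, hc1, _⟩ := hsup
              have hxc : x ≠ c := hx2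
              have hxd : x ≠ d := fun e => hx3 (e ▸ hdmem)
              have hbd : b ≠ d := fun e => hb2 (e ▸ hdmem)
              have hcd : c ≠ d := fun e => hc1 (e ▸ hdmem)
              have hdS : d ∉ S := by
                rw [hSeq]; rintro (rfl | rfl); exacts [hbd rfl, hcd rfl]
              have hlen : q3.length ≤ n := by
                simp only [SimpleGraph.Walk.length_cons] at hn; omega
              have hq3 : q3.IsPath := hp.of_cons.of_cons.of_cons
              have hrest := ih d y hdS hy q3 hq3 hlen
              refine SimpleGraph.Reachable.trans ?_ hrest
              by_cases hxc2 : G.Adj x c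
              · by_cases hxd2 : G.Adj x d
                · exact edge x d hx hdS hxd2
                · obtain ⟨z, hzS, hzx, hzd⟩ :=
                    exists_common ho hS hcS hxc2.symm h3 hxd hxd2
                  exact (edge x z hx hzS hzx).trans (edge z d hzS hdS hzd.symm)
              · obtain ⟨z, hzS, hzx, hzc⟩ :=
                  exists_common ho hS hb h.symm h2 hxc hxc2
                by_cases hzd : z = d
                · subst hzd; exact edge x z hx hzS hzx
                · by_cases hzd2 : G.Adj z d
                  · exact (edge x z hx hzS hzx).trans (edge z d hzS hdS hzd2)
                  · obtain ⟨z2, hz2S, hz2z, hz2d⟩ :=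
                      exists_common ho hS hcS hzc h3 hzd hzd2
                    exact ((edge x z hx hzS hzx).trans (edge z z2 hzS hz2S hz2z)).trans
                      (edge z2 d hz2S hdS hz2d.symm)
          · -- b ∈ S, c ∉ S
            have hsup := hp.support_nodup
            simp only [SimpleGraph.Walk.support_cons, List.nodup_cons, List.mem_cons] at hsup
            push_neg at hsup
            have hxc : x ≠ c := fun e => hsup.1.2 (e ▸ q2.start_mem_support)
            have hlen : q2.length ≤ n := by
              simp only [SimpleGraph.Walk.length_cons] at hn; omega
            have hq2 : q2.IsPath := hp.of_cons.of_cons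
            have hrest := ih c y hcS hy q2 hq2 hlen
            refine SimpleGraph.Reachable.trans ?_ hrest
            by_cases hadj : G.Adj x c
            · exact edge x c hx hcS hadj
            · obtain ⟨z, hzS, hzx, hzc⟩ := exists_common ho hS hb h.symm h2 hxc hadj
              exact (edge x z hx hzS hzx).trans (edge z c hzS hcS hzc.symm)
      · have hlen : q.length ≤ n := by
          simp only [SimpleGraph.Walk.length_cons] at hn; omega
        exact (edge x b hx hb h).trans (ih b y hb hy q hp.of_cons hlen)

/-- Every connected locally Ore graph of order `n ≥ 4` is 3-connected: it has more than 3
vertices and removing any set of at most 2 vertices leaves a connected graph. -/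
theorem stmt2 {V : Type*} [Fintype V] (G : SimpleGraph V) (hc : G.Connected)
    (ho : LocallyOre G) (h4 : 4 ≤ Fintype.card V) :
    3 < Fintype.card V ∧ ∀ S : Set V, S.ncard ≤ 2 → (G.induce Sᶜ).Connected := by
  classical
  refine ⟨by omega, fun S hSc => ?_⟩
  have hne : (Sᶜ : Set V).Nonempty := by
    rw [Set.nonempty_compl]
    rintro rfl
    rw [Set.ncard_univ, Nat.card_eq_fintype_card] at hSc
    omega
  haveI : Nonempty ↥(Sᶜ : Set V) := hne.to_subtype
  refine ⟨fun a b => ?_⟩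
  obtain ⟨x, hx⟩ := a
  obtain ⟨y, hy⟩ := b
  obtain ⟨w⟩ := hc.preconnected x y
  exact key ho hSc w.toPath.val.length x y hx hy w.toPath.val w.toPath.prop le_rfl
end

section
/- If G is a connected locally Dirac graph of order n ≥ 4, then G is 3-connected. -/
theorem Set.exists_subset_pair_of_ncard_le_two {α : Type*} [Finite α] {S : Set α}
    (hS : S.ncard ≤ 2) {a : α} (ha : a ∈ S) : ∃ b, S ⊆ {a, b} := by
  have : Nonempty α := ⟨a⟩
  have hdiff : (S \ {a}).ncard ≤ 1 := by
    rw [Set.ncard_sdiff_singleton_of_mem ha]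
    omega
  obtain ⟨b, hb⟩ := (Set.ncard_le_one_iff_subset_singleton).1 hdiff
  exact ⟨b, Set.sdiff_subset_iff.1 hb⟩

namespace SimpleGraph

variable {V : Type*} {G : SimpleGraph V}

theorem Reachable.prop_of_adj_closed {P : V → Prop} (hP : ∀ ⦃v w⦄, G.Adj v w → P v → P w)
    {u v : V} (huv : G.Reachable u v) (hu : P u) : P v := by
  obtain ⟨p⟩ := huv
  induction p with
  | nil => exact hu
  | cons hadj _ ih => exact ih (hP hadj hu)

end SimpleGraph

namespace LocallyDirac

open SimpleGraph

variable {V : Type*} [Finite V] {G : SimpleGraph V}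

theorem two_le_ncard_commonNeighbors (hd : LocallyDirac G) {s u w : V} (hsu : G.Adj s u)
    (hsw : G.Adj s w) (huw : u ≠ w) (hnadj : ¬ G.Adj u w) :
    2 ≤ (G.neighborSet s ∩ G.neighborSet u ∩ G.neighborSet w).ncard := by
  set A := G.neighborSet s ∩ G.neighborSet u
  set B := G.neighborSet s ∩ G.neighborSet w
  have hA : degN G s ≤ 2 * A.ncard := hd s u hsu
  have hB : degN G s ≤ 2 * B.ncard := hd s w hsw
  have hpair : ({u, w} : Set V) ⊆ G.neighborSet s := Set.pair_subset hsu hsw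
  have hunion : A ∪ B ⊆ G.neighborSet s \ {u, w} := by
    rintro t (⟨hst, hut⟩ | ⟨hst, hwt⟩) <;> refine ⟨hst, ?_⟩ <;> rintro (rfl | rfl)
    exacts [G.irrefl hut, hnadj hut, hnadj hwt.symm, G.irrefl hwt]
  have hrest : (G.neighborSet s \ {u, w}).ncard = degN G s - 2 := by
    rw [Set.ncard_sdiff hpair, Set.ncard_pair huw]
    rfl
  have htwo : 2 ≤ degN G s := Set.ncard_pair huw ▸ Set.ncard_le_ncard hpair
  have hinter : A ∩ B = G.neighborSet s ∩ G.neighborSet u ∩ G.neighborSet w := by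
    rw [← Set.inter_inter_distrib_left, Set.inter_assoc]
  have := Set.ncard_le_ncard hunion
  have := Set.ncard_union_add_ncard_inter A B
  rw [← hinter]
  omega

variable {S : Set V}

theorem exists_commonNeighbor_notMem (hd : LocallyDirac G) (hS : S.ncard ≤ 2) {s u w : V}
    (hs : s ∈ S) (hsu : G.Adj s u) (hsw : G.Adj s w) (huw : u ≠ w) (hnadj : ¬ G.Adj u w) :
    ∃ t ∉ S, G.Adj s t ∧ G.Adj u t ∧ G.Adj w t := by
  obtain ⟨z, hSz⟩ := Set.exists_subset_pair_of_ncard_le_two hS hs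
  obtain ⟨t, ⟨⟨hst, hut⟩, hwt⟩, htz⟩ :=
    Set.exists_ne_of_one_lt_ncard (hd.two_le_ncard_commonNeighbors hsu hsw huw hnadj) z
  refine ⟨t, fun htS => ?_, hst, hut, hwt⟩
  rcases hSz htS with rfl | rfl
  exacts [G.irrefl hst, htz rfl]

theorem induce_compl_reachable_of_adj (hd : LocallyDirac G) (hS : S.ncard ≤ 2) {s : V}
    (hs : s ∈ S) {u w : ↥Sᶜ} (hsu : G.Adj s u) (hsw : G.Adj s w) :
    (G.induce Sᶜ).Reachable u w := by
  by_cases huw : u = w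
  · exact huw ▸ .refl u
  by_cases hadj : G.Adj u w
  · exact Adj.reachable hadj
  obtain ⟨t, htS, -, hut, hwt⟩ :=
    hd.exists_commonNeighbor_notMem hS hs hsu hsw (Subtype.val_injective.ne huw) hadj
  exact (Adj.reachable (G := G.induce Sᶜ) (v := ⟨t, htS⟩) hut).trans (Adj.reachable hwt.symm)

theorem exists_adj_induce_compl_reachable (hd : LocallyDirac G) (hS : S.ncard ≤ 2) {s s' : V}
    (hs : s ∈ S) (hs' : s' ∈ S) (hss' : G.Adj s s') {u : ↥Sᶜ} (hsu : G.Adj s u) :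
    ∃ t : ↥Sᶜ, G.Adj s' t ∧ (G.induce Sᶜ).Reachable u t := by
  by_cases hs'u : G.Adj s' u
  · exact ⟨u, hs'u, .refl u⟩
  have hus' : (u : V) ≠ s' := fun h => u.2 (h ▸ hs')
  obtain ⟨t, htS, -, hut, hs't⟩ :=
    hd.exists_commonNeighbor_notMem hS hs hsu hss' hus' fun h => hs'u h.symm
  exact ⟨⟨t, htS⟩, hs't, Adj.reachable hut⟩

theorem near_component_of_adj (hd : LocallyDirac G) (hS : S.ncard ≤ 2) {x : ↥Sᶜ} {v v' : V}
    (hvv' : G.Adj v v')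
    (hv : ∃ u : ↥Sᶜ, ((u : V) = v ∨ G.Adj v u) ∧ (G.induce Sᶜ).Reachable x u) :
    ∃ u : ↥Sᶜ, ((u : V) = v' ∨ G.Adj v' u) ∧ (G.induce Sᶜ).Reachable x u := by
  obtain ⟨u, huv, hxu⟩ := hv
  by_cases hvS : v ∈ S
  · have hvu : G.Adj v u := huv.resolve_left fun h => u.2 (h ▸ hvS)
    by_cases hv'S : v' ∈ S
    · obtain ⟨t, hv't, hut⟩ := hd.exists_adj_induce_compl_reachable hS hvS hv'S hvv' hvu
      exact ⟨t, Or.inr hv't, hxu.trans hut⟩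
    · exact ⟨⟨v', hv'S⟩, Or.inl rfl,
        hxu.trans (hd.induce_compl_reachable_of_adj hS hvS (w := ⟨v', hv'S⟩) hvu hvv')⟩
  · have hxv : (G.induce Sᶜ).Reachable x ⟨v, hvS⟩ := by
      rcases huv with rfl | hvu
      · exact hxu
      · exact hxu.trans (Adj.reachable hvu.symm)
    by_cases hv'S : v' ∈ S
    · exact ⟨⟨v, hvS⟩, Or.inr hvv'.symm, hxv⟩
    · exact ⟨⟨v', hv'S⟩, Or.inl rfl, hxv.trans (Adj.reachable hvv')⟩

theorem induce_compl_preconnected (hd : LocallyDirac G) (hc : G.Preconnected)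
    (hS : S.ncard ≤ 2) : (G.induce Sᶜ).Preconnected := by
  intro x y
  have hy : ∃ u : ↥Sᶜ, ((u : V) = y ∨ G.Adj y u) ∧ (G.induce Sᶜ).Reachable x u :=
    (hc x y).prop_of_adj_closed (fun _ _ h => hd.near_component_of_adj hS h)
      ⟨x, Or.inl rfl, .refl x⟩
  obtain ⟨u, huy | hyu, hxu⟩ := hy
  · exact Subtype.ext huy ▸ hxu
  · exact hxu.trans (Adj.reachable hyu.symm)

end LocallyDirac

/-- Every connected locally Dirac graph of order `n ≥ 4` is 3-connected: it has more than 3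
vertices and removing any set of at most 2 vertices leaves a connected graph. -/
theorem stmt3 {V : Type*} [Fintype V] (G : SimpleGraph V) (hc : G.Connected)
    (hd : LocallyDirac G) (h4 : 4 ≤ Fintype.card V) :
    3 < Fintype.card V ∧ ∀ S : Set V, S.ncard ≤ 2 → (G.induce Sᶜ).Connected := by
  refine ⟨h4, fun S hS => ?_⟩
  have hcompl : Sᶜ.Nonempty := by
    rw [Set.nonempty_compl]
    rintro rfl
    rw [Set.ncard_univ, Nat.card_eq_fintype_card] at hS
    omega
  have : Nonempty ↥Sᶜ := hcompl.to_subtype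
  exact ⟨hd.induce_compl_preconnected hc.preconnected hS⟩
end

section
/- If G is a connected locally Dirac graph of order n ≥ 8, then the minimum degree of G is at least 5. -/
namespace Stmt4Aux

variable {V : Type*} [Fintype V] {G : SimpleGraph V} {v u w a b : V}

lemma cm_succ_le (h : G.Adj v u) :
    (G.neighborSet v ∩ G.neighborSet u).ncard + 1 ≤ (G.neighborSet v).ncard := by
  have hnot : u ∉ G.neighborSet v ∩ G.neighborSet u := fun hz => G.irrefl hz.2
  have hsub : insert u (G.neighborSet v ∩ G.neighborSet u) ⊆ G.neighborSet v := by
    rintro z hz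
    rcases Set.mem_insert_iff.mp hz with rfl | hz
    · exact h
    · exact hz.1
  have h2 := Set.ncard_le_ncard hsub (Set.toFinite _)
  rwa [Set.ncard_insert_of_notMem hnot (Set.toFinite _)] at h2

lemma deg_split (h : G.Adj v u) :
    (G.neighborSet u).ncard = (G.neighborSet u ∩ G.neighborSet v).ncard
      + (G.neighborSet u \ (G.neighborSet v ∪ {v})).ncard + 1 := by
  have heq : G.neighborSet u =
      insert v ((G.neighborSet u ∩ G.neighborSet v)
        ∪ (G.neighborSet u \ (G.neighborSet v ∪ {v}))) := by
    ext z
    simp only [Set.mem_insert_iff, Set.mem_union, Set.mem_inter_iff, Set.mem_diff,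
      Set.mem_singleton_iff, SimpleGraph.mem_neighborSet]
    constructor
    · intro hz
      by_cases hzv : z = v
      · exact Or.inl hzv
      · by_cases hzn : G.Adj v z
        · exact Or.inr (Or.inl ⟨hz, hzn⟩)
        · exact Or.inr (Or.inr ⟨hz, fun hcon => hcon.elim hzn hzv⟩)
    · rintro (rfl | h' | h')
      · exact h.symm
      · exact h'.1
      · exact h'.1
  have hvnot : v ∉ (G.neighborSet u ∩ G.neighborSet v)
      ∪ (G.neighborSet u \ (G.neighborSet v ∪ {v})) := by
    rintro (hz | hz)
    · exact G.irrefl hz.2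
    · exact hz.2 (Or.inr rfl)
  have hdis : Disjoint (G.neighborSet u ∩ G.neighborSet v)
      (G.neighborSet u \ (G.neighborSet v ∪ {v})) :=
    Set.disjoint_left.mpr fun {z} hz1 hz2 => hz2.2 (Or.inl hz1.2)
  conv_lhs => rw [heq]
  rw [Set.ncard_insert_of_notMem hvnot (Set.toFinite _),
    Set.ncard_union_eq hdis (Set.toFinite _) (Set.toFinite _)]

lemma outside_le
    (hd : ∀ x y, G.Adj x y → (G.neighborSet x).ncard
      ≤ 2 * (G.neighborSet x ∩ G.neighborSet y).ncard)
    (h : G.Adj v u) :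
    (G.neighborSet u \ (G.neighborSet v ∪ {v})).ncard + 2 ≤ (G.neighborSet v).ncard := by
  have h1 := deg_split h
  have h2 := hd u v h.symm
  have h3 := cm_succ_le h
  rw [Set.inter_comm] at h3
  omega

lemma common3
    (hd : ∀ x y, G.Adj x y → (G.neighborSet x).ncard
      ≤ 2 * (G.neighborSet x ∩ G.neighborSet y).ncard)
    (hvu : G.Adj v u) (huw : G.Adj u w) (hnadj : ¬ G.Adj v w) (hne : v ≠ w) :
    3 ≤ (G.neighborSet v ∩ G.neighborSet w).ncard := by
  have h1 := deg_split hvu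
  have h2 := hd u v hvu.symm
  have hwMu : w ∈ G.neighborSet u \ (G.neighborSet v ∪ {v}) := by
    refine ⟨huw, ?_⟩
    rintro (hw | hw)
    · exact hnadj hw
    · exact hne hw.symm
  have h4 := Set.ncard_diff_singleton_add_one hwMu (Set.toFinite _)
  have h5 : (G.neighborSet u ∩ G.neighborSet w) ⊆
      ((G.neighborSet v ∩ G.neighborSet w) ∩ G.neighborSet u)
        ∪ ((G.neighborSet u \ (G.neighborSet v ∪ {v})) \ {w}) := by
    rintro z ⟨hzu, hzw⟩
    by_cases hzv : z ∈ G.neighborSet v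
    · exact Or.inl ⟨⟨hzv, hzw⟩, hzu⟩
    · refine Or.inr ⟨⟨hzu, ?_⟩, ?_⟩
      · rintro (hz | hz)
        · exact hzv hz
        · rw [Set.mem_singleton_iff] at hz
          subst hz
          exact hnadj hzw.symm
      · intro hzw'
        rw [Set.mem_singleton_iff] at hzw'
        subst hzw'
        exact G.irrefl hzw
  have h6 := le_trans (Set.ncard_le_ncard h5 (Set.toFinite _)) (Set.ncard_union_le _ _)
  have h7 := hd u w huw
  have h9 : ((G.neighborSet v ∩ G.neighborSet w) ∩ G.neighborSet u).ncard + 1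
      ≤ (G.neighborSet v ∩ G.neighborSet w).ncard := by
    have hnot : u ∉ (G.neighborSet v ∩ G.neighborSet w) ∩ G.neighborSet u :=
      fun hz => G.irrefl hz.2
    have hsub : insert u ((G.neighborSet v ∩ G.neighborSet w) ∩ G.neighborSet u)
        ⊆ G.neighborSet v ∩ G.neighborSet w := by
      rintro z hz
      rcases Set.mem_insert_iff.mp hz with rfl | hz
      · exact ⟨hvu, huw.symm⟩
      · exact hz.1
    have hc := Set.ncard_le_ncard hsub (Set.toFinite _)
    rwa [Set.ncard_insert_of_notMem hnot (Set.toFinite _)] at hc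
  omega

lemma no_dist3
    (hd : ∀ x y, G.Adj x y → (G.neighborSet x).ncard
      ≤ 2 * (G.neighborSet x ∩ G.neighborSet y).ncard)
    (hv4 : (G.neighborSet v).ncard ≤ 4)
    (hvu : G.Adj v u) (hua : G.Adj u a) (hna : ¬ G.Adj v a) (hane : a ≠ v)
    (hab : G.Adj a b) (hb1 : ¬ G.Adj v b) (hb2 : b ≠ v)
    (hb3 : ¬ ∃ u', G.Adj v u' ∧ G.Adj u' b) : False := by
  have hvna : v ≠ a := Ne.symm hane
  have hB3 : 3 ≤ (G.neighborSet v ∩ G.neighborSet a).ncard := common3 hd hvu hua hna hvna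
  have hdisj : ∀ z, z ∈ G.neighborSet v → z ∉ G.neighborSet b := by
    intro z hzv hzb
    exact hb3 ⟨z, hzv, hzb.symm⟩
  have hsub1 : insert b ((G.neighborSet v ∩ G.neighborSet a)
      ∪ (G.neighborSet a ∩ G.neighborSet b)) ⊆ G.neighborSet a := by
    rintro z hz
    rcases Set.mem_insert_iff.mp hz with rfl | hz'
    · exact hab
    · rcases hz' with hz' | hz'
      · exact hz'.2
      · exact hz'.1
  have hbnot : b ∉ (G.neighborSet v ∩ G.neighborSet a)
      ∪ (G.neighborSet a ∩ G.neighborSet b) := by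
    rintro (hz | hz)
    · exact hb1 hz.1
    · exact G.irrefl hz.2
  have hdisj2 : Disjoint (G.neighborSet v ∩ G.neighborSet a)
      (G.neighborSet a ∩ G.neighborSet b) :=
    Set.disjoint_left.mpr fun {z} hz1 hz2 => hdisj z hz1.1 hz2.2
  have h1 : (G.neighborSet v ∩ G.neighborSet a).ncard
      + (G.neighborSet a ∩ G.neighborSet b).ncard + 1 ≤ (G.neighborSet a).ncard := by
    have hc := Set.ncard_le_ncard hsub1 (Set.toFinite _)
    rwa [Set.ncard_insert_of_notMem hbnot (Set.toFinite _),
      Set.ncard_union_eq hdisj2 (Set.toFinite _) (Set.toFinite _)] at hc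
  have h2 := hd a b hab
  have h3 := hd a u hua.symm
  have h4 : (G.neighborSet a ∩ G.neighborSet u).ncard + 2 ≤ (G.neighborSet u).ncard := by
    have hnotv : v ∉ insert a (G.neighborSet a ∩ G.neighborSet u) := by
      rintro hz
      rcases Set.mem_insert_iff.mp hz with h' | h'
      · exact hvna h'
      · exact hna h'.1.symm
    have hnota : a ∉ G.neighborSet a ∩ G.neighborSet u := fun hz => G.irrefl hz.1
    have hsub : insert v (insert a (G.neighborSet a ∩ G.neighborSet u))
        ⊆ G.neighborSet u := by
      rintro z hz
      rcases Set.mem_insert_iff.mp hz with rfl | hz'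
      · exact hvu.symm
      · rcases Set.mem_insert_iff.mp hz' with rfl | hz''
        · exact hua
        · exact hz''.2
    have hc := Set.ncard_le_ncard hsub (Set.toFinite _)
    rw [Set.ncard_insert_of_notMem hnotv (Set.toFinite _),
      Set.ncard_insert_of_notMem hnota (Set.toFinite _)] at hc
    omega
  have h5 := hd u v hvu.symm
  have h6 : (G.neighborSet u ∩ G.neighborSet v).ncard + 1 ≤ (G.neighborSet v).ncard := by
    have hc := cm_succ_le hvu
    rwa [Set.inter_comm] at hc
  have hpair : ({v, a} : Set V) ⊆ G.neighborSet u := by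
    rintro z hz
    rcases Set.mem_insert_iff.mp hz with rfl | hz'
    · exact hvu.symm
    · rw [Set.mem_singleton_iff] at hz'
      subst hz'
      exact hua
  have h7 := Set.ncard_diff_add_ncard_of_subset hpair (Set.toFinite _)
  rw [Set.ncard_pair hvna] at h7
  have h8 : (G.neighborSet a ∩ G.neighborSet u) ⊆ G.neighborSet u \ {v, a} := by
    rintro z ⟨hza, hzu⟩
    refine ⟨hzu, ?_⟩
    rintro hz
    rcases Set.mem_insert_iff.mp hz with rfl | hz'
    · exact hna hza.symm
    · rw [Set.mem_singleton_iff] at hz'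
      subst hz'
      exact G.irrefl hza
  have h9 : (G.neighborSet a ∩ G.neighborSet u) = G.neighborSet u \ {v, a} :=
    Set.eq_of_subset_of_ncard_le h8 (by omega) (Set.toFinite _)
  have h10 : insert u (G.neighborSet u ∩ G.neighborSet v)
      ⊆ G.neighborSet v ∩ G.neighborSet a := by
    rintro z hz
    rcases Set.mem_insert_iff.mp hz with rfl | hz'
    · exact ⟨hvu, hua.symm⟩
    · refine ⟨hz'.2, ?_⟩
      have hz3 : z ∈ G.neighborSet u \ {v, a} := by
        refine ⟨hz'.1, ?_⟩
        rintro hz4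
        rcases Set.mem_insert_iff.mp hz4 with rfl | hz5
        · exact G.irrefl hz'.2
        · rw [Set.mem_singleton_iff] at hz5
          subst hz5
          exact hna hz'.2
      rw [← h9] at hz3
      exact hz3.1
  have h11 : (G.neighborSet u ∩ G.neighborSet v).ncard + 1
      ≤ (G.neighborSet v ∩ G.neighborSet a).ncard := by
    have hnot : u ∉ G.neighborSet u ∩ G.neighborSet v := fun hz => G.irrefl hz.1
    have hc := Set.ncard_le_ncard h10 (Set.toFinite _)
    rwa [Set.ncard_insert_of_notMem hnot (Set.toFinite _)] at hc
  omega

lemma three_m2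
    (hd : ∀ x y, G.Adj x y → (G.neighborSet x).ncard
      ≤ 2 * (G.neighborSet x ∩ G.neighborSet y).ncard)
    (hv4 : (G.neighborSet v).ncard ≤ 4)
    {w1 w2 w3 : V} (h12 : w1 ≠ w2) (h13 : w1 ≠ w3) (h23 : w2 ≠ w3)
    (hm : ∀ w, w = w1 ∨ w = w2 ∨ w = w3 →
      ¬ G.Adj v w ∧ w ≠ v ∧ ∃ u', G.Adj v u' ∧ G.Adj u' w) : False := by
  have hS3 : ∀ w, w = w1 ∨ w = w2 ∨ w = w3 →
      3 ≤ (G.neighborSet v ∩ G.neighborSet w).ncard := by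
    intro w hw
    obtain ⟨hna, hne, u', hvu', hu'w⟩ := hm w hw
    exact common3 hd hvu' hu'w hna (Ne.symm hne)
  have hIE : ∀ s t : Set V, s ⊆ G.neighborSet v → t ⊆ G.neighborSet v →
      s.ncard + t.ncard ≤ (s ∩ t).ncard + (G.neighborSet v).ncard := by
    intro s t hs ht
    have h1 := Set.ncard_inter_add_ncard_union s t (Set.toFinite _) (Set.toFinite _)
    have h2 : (s ∪ t).ncard ≤ (G.neighborSet v).ncard :=
      Set.ncard_le_ncard (Set.union_subset hs ht) (Set.toFinite _)
    omega
  have i12 := hIE (G.neighborSet v ∩ G.neighborSet w1) (G.neighborSet v ∩ G.neighborSet w2)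
    Set.inter_subset_left Set.inter_subset_left
  have i123 := hIE ((G.neighborSet v ∩ G.neighborSet w1) ∩ (G.neighborSet v ∩ G.neighborSet w2))
    (G.neighborSet v ∩ G.neighborSet w3)
    (Set.inter_subset_left.trans Set.inter_subset_left) Set.inter_subset_left
  have c1 := hS3 w1 (Or.inl rfl)
  have c2 := hS3 w2 (Or.inr (Or.inl rfl))
  have c3 := hS3 w3 (Or.inr (Or.inr rfl))
  have hpos : 0 < (((G.neighborSet v ∩ G.neighborSet w1) ∩ (G.neighborSet v ∩ G.neighborSet w2))
      ∩ (G.neighborSet v ∩ G.neighborSet w3)).ncard := by omega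
  obtain ⟨u', hu'⟩ := (Set.ncard_pos (Set.toFinite _)).mp hpos
  obtain ⟨⟨⟨hu'v, hu'1⟩, ⟨-, hu'2⟩⟩, ⟨-, hu'3⟩⟩ := hu'
  have hadj : ∀ w, w = w1 ∨ w = w2 ∨ w = w3 → w ∈ G.neighborSet u' := by
    rintro w (rfl | rfl | rfl)
    · exact hu'1.symm
    · exact hu'2.symm
    · exact hu'3.symm
  have hsub3 : ({w1, w2, w3} : Set V)
      ⊆ G.neighborSet u' \ (G.neighborSet v ∪ {v}) := by
    intro z hz
    have hz' : z = w1 ∨ z = w2 ∨ z = w3 := by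
      rcases Set.mem_insert_iff.mp hz with h' | h'
      · exact Or.inl h'
      · rcases Set.mem_insert_iff.mp h' with h'' | h''
        · exact Or.inr (Or.inl h'')
        · exact Or.inr (Or.inr (Set.mem_singleton_iff.mp h''))
    obtain ⟨hna, hne, -⟩ := hm z hz'
    refine ⟨hadj z hz', ?_⟩
    rintro (hc | hc)
    · exact hna hc
    · exact hne (Set.mem_singleton_iff.mp hc)
  have hcard3 : ({w1, w2, w3} : Set V).ncard = 3 := by
    rw [Set.ncard_insert_of_notMem (by simp [h12, h13]) (Set.toFinite _),
      Set.ncard_pair h23]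
  have hle := Set.ncard_le_ncard hsub3 (Set.toFinite _)
  have hout := outside_le hd hu'v
  omega

end Stmt4Aux

/-- If `G` is a connected locally Dirac graph of order `n ≥ 8`, then `δ(G) ≥ 5`. -/
theorem stmt4 {V : Type*} [Fintype V] (G : SimpleGraph V) (hc : G.Connected)
    (hd : LocallyDirac G) (h8 : 8 ≤ Fintype.card V) :
    ∀ v : V, 5 ≤ degN G v := by
  classical
  intro v
  by_contra hlt
  push_neg at hlt
  have hd' : ∀ x y, G.Adj x y → (G.neighborSet x).ncard
      ≤ 2 * (G.neighborSet x ∩ G.neighborSet y).ncard := fun x y h => hd x y h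
  have hv4 : (G.neighborSet v).ncard ≤ 4 := by
    have : degN G v < 5 := hlt
    simp only [degN] at this
    omega
  -- the set of vertices at distance exactly two
  set M2 : Set V := {w | ¬ G.Adj v w ∧ w ≠ v ∧ ∃ u, G.Adj v u ∧ G.Adj u w} with hM2def
  set S : Set V := ({v} ∪ G.neighborSet v) ∪ M2 with hSdef
  have hclosed : ∀ a ∈ S, ∀ b, G.Adj a b → b ∈ S := by
    rintro a ha b hab
    by_cases hb1 : G.Adj v b
    · exact Or.inl (Or.inr hb1)
    by_cases hb2 : b = v
    · exact Or.inl (Or.inl hb2)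
    rcases ha with (ha | ha) | ha
    · exact absurd (Set.mem_singleton_iff.mp ha ▸ hab) hb1
    · exact Or.inr (show _ ∧ _ ∧ _ from ⟨hb1, hb2, a, ha, hab⟩)
    · by_cases hb3 : ∃ u', G.Adj v u' ∧ G.Adj u' b
      · exact Or.inr (show _ ∧ _ ∧ _ from ⟨hb1, hb2, hb3⟩)
      · exfalso
        obtain ⟨hna, hane, u, hvu, hua⟩ := ha
        exact Stmt4Aux.no_dist3 hd' hv4 hvu hua hna hane hab hb1 hb2 hb3
  have key : ∀ (x z : V), G.Walk x z → x ∈ S → z ∈ S := by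
    intro x z p
    induction p with
    | nil => exact id
    | cons h q ih => exact fun hx => ih (hclosed _ hx _ h)
  have hvS : v ∈ S := Or.inl (Or.inl rfl)
  have huniv : ∀ z : V, z ∈ S := fun z => (hc.preconnected v z).elim fun p => key v z p hvS
  have hM2card : M2.ncard ≤ 2 := by
    by_contra hgt
    have h3' : 2 < M2.ncard := by omega
    obtain ⟨w1, hw1, w2, hw2, w3, hw3, h12, h13, h23⟩ :=
      (Set.two_lt_ncard (Set.toFinite _)).mp h3'
    refine Stmt4Aux.three_m2 hd' hv4 h12 h13 h23 ?_
    rintro w (rfl | rfl | rfl)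
    · exact hw1
    · exact hw2
    · exact hw3
  have hcount : (Set.univ : Set V).ncard ≤ 1 + (G.neighborSet v).ncard + M2.ncard := by
    have h1 : (Set.univ : Set V).ncard ≤ S.ncard :=
      Set.ncard_le_ncard (fun z _ => huniv z) (Set.toFinite _)
    have h2 : S.ncard ≤ (({v} : Set V) ∪ G.neighborSet v).ncard + M2.ncard :=
      Set.ncard_union_le _ _
    have h3 : (({v} : Set V) ∪ G.neighborSet v).ncard ≤ 1 + (G.neighborSet v).ncard := by
      have h4 := Set.ncard_union_le ({v} : Set V) (G.neighborSet v)
      simpa using h4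
    omega
  rw [Set.ncard_univ, Nat.card_eq_fintype_card] at hcount
  omega
end

section
/- Every locally Dirac graph of order n ≥ 8 is non-planar. -/
/-- `H` is a minor of `G`, witnessed by disjoint nonempty connected branch sets. -/
def HasMinor {V : Type*} {W : Type*} (G : SimpleGraph V) (H : SimpleGraph W) : Prop :=
  ∃ B : W → Set V,
    (∀ w, (B w).Nonempty) ∧
    (∀ w, (G.induce (B w)).Connected) ∧
    (∀ w₁ w₂, w₁ ≠ w₂ → Disjoint (B w₁) (B w₂)) ∧
    (∀ w₁ w₂, H.Adj w₁ w₂ → ∃ a ∈ B w₁, ∃ b ∈ B w₂, G.Adj a b)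

/-- Planarity, via the Kuratowski–Wagner characterization: a graph is planar iff it has
neither a `K₅` nor a `K₃,₃` minor. -/
def Planar {V : Type*} (G : SimpleGraph V) : Prop :=
  ¬ HasMinor G (SimpleGraph.completeGraph (Fin 5)) ∧
  ¬ HasMinor G (completeBipartiteGraph (Fin 3) (Fin 3))

/-!
If a vertex `v` has degree `d ≥ 5`, every neighbour of `v` has at least `d / 2 ≥ 3` neighbours
inside `N(v)`, and this forces a `K₄` minor in `N(v)`: a triangle with a common neighbour; a
triangle whose complement `D` in `N(v)` is connected (any two closed neighbourhoods in `D` meet)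
and adjacent to each triangle vertex; or, if `N(v)` is triangle-free, a complete bipartite graph
with both sides of size at least 3. Adding `{v}` as a fifth branch set gives a `K₅` minor.

If every degree is at most 4, a neighbour `u` of `v` has at least `deg u / 2` common neighbours
with `v`, hence at most one neighbour `x` outside `N[v]`, and then `x` is adjacent to all common
neighbours of `u` and `v`, so it sees at least three vertices of `N(v)`. Hence there is at most one
vertex at distance two from `v`, it has no neighbour at distance three, and the connected graph has
at most `1 + 4 + 1 = 6` vertices.
-/

open Set SimpleGraph

namespace SimpleGraph

variable {V : Type*} {G : SimpleGraph V}

lemma Preconnected.mem_of_forall_adj_mem (hc : G.Preconnected) {S : Set V} {v : V} (hv : v ∈ S)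
    (hS : ∀ x ∈ S, ∀ y, G.Adj x y → y ∈ S) (w : V) : w ∈ S := by
  obtain ⟨p⟩ := hc v w
  induction p with
  | nil => exact hv
  | cons h _ ih => exact ih (hS _ hv _ h)

lemma induce_singleton_connected (v : V) : (G.induce {v}).Connected :=
  ⟨.of_subsingleton⟩

structure IsCliqueModel {ι : Type*} (G : SimpleGraph V) (B : ι → Set V) : Prop where
  connected : ∀ i, (G.induce (B i)).Connected
  disjoint : Pairwise fun i j ↦ Disjoint (B i) (B j)
  adj : Pairwise fun i j ↦ ∃ a ∈ B i, ∃ b ∈ B j, G.Adj a b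

namespace IsCliqueModel

variable {ι : Type*} {B : ι → Set V}

lemma nonempty (hB : G.IsCliqueModel B) (i : ι) : (B i).Nonempty :=
  nonempty_coe_sort.mp (hB.connected i).nonempty

lemma hasMinor (hB : G.IsCliqueModel B) : HasMinor G (completeGraph ι) :=
  ⟨B, hB.nonempty, hB.connected, fun _ _ h ↦ hB.disjoint h, fun _ _ h ↦ hB.adj h⟩

lemma of_lt [LinearOrder ι] (hconn : ∀ i, (G.induce (B i)).Connected)
    (hdisj : ∀ i j, i < j → Disjoint (B i) (B j))
    (hadj : ∀ i j, i < j → ∃ a ∈ B i, ∃ b ∈ B j, G.Adj a b) : G.IsCliqueModel B where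
  connected := hconn
  disjoint i j hij := hij.lt_or_gt.elim (hdisj i j) fun h ↦ (hdisj j i h).symm
  adj i j hij := hij.lt_or_gt.elim (hadj i j) fun h ↦ by
    obtain ⟨a, ha, b, hb, hab⟩ := hadj j i h
    exact ⟨b, hb, a, ha, hab.symm⟩

lemma singleton {f : ι → V} (hf : Pairwise fun i j ↦ G.Adj (f i) (f j)) :
    G.IsCliqueModel fun i ↦ {f i} where
  connected i := induce_singleton_connected (f i)
  disjoint _ _ hij := disjoint_singleton.mpr (hf hij).ne
  adj i j hij := ⟨f i, rfl, f j, rfl, hf hij⟩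

lemma cons {n : ℕ} {B : Fin n → Set V} (hB : G.IsCliqueModel B) {v : V}
    (hBv : ∀ i, B i ⊆ G.neighborSet v) :
    G.IsCliqueModel (Fin.cons {v} B : Fin (n + 1) → Set V) where
  connected i := by
    cases i using Fin.cases
    · exact induce_singleton_connected v
    · exact hB.connected _
  disjoint i j hij := by
    have hv : ∀ k, Disjoint {v} (B k) := fun k ↦
      disjoint_singleton_left.mpr fun h ↦ G.loopless.irrefl v (hBv k h)
    cases i using Fin.cases <;> cases j using Fin.cases
    · exact absurd rfl hij
    · exact hv _
    · exact (hv _).symm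
    · exact hB.disjoint (fun h ↦ hij (congrArg Fin.succ h))
  adj i j hij := by
    have hv : ∀ k, ∃ b ∈ B k, G.Adj v b := fun k ↦
      (hB.nonempty k).imp fun b hb ↦ ⟨hb, hBv k hb⟩
    cases i using Fin.cases <;> cases j using Fin.cases
    · exact absurd rfl hij
    · exact ⟨v, rfl, hv _⟩
    · obtain ⟨b, hb, hvb⟩ := hv _
      exact ⟨b, hb, v, rfl, hvb.symm⟩
    · exact hB.adj (fun h ↦ hij (congrArg Fin.succ h))

end IsCliqueModel

section Finite

variable [Finite V] {S : Set V}

lemma induce_connected_of_ncard_lt {D : Set V} (hD : D.Nonempty)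
    (h : ∀ p ∈ D, ∀ q ∈ D,
      D.ncard < (D ∩ G.neighborSet p).ncard + (D ∩ G.neighborSet q).ncard + 2) :
    (G.induce D).Connected := by
  have : Nonempty D := hD.to_subtype
  refine ⟨fun ⟨p, hp⟩ ⟨q, hq⟩ ↦ ?_⟩
  have hcard : ∀ s, (insert s (D ∩ G.neighborSet s)).ncard = (D ∩ G.neighborSet s).ncard + 1 :=
    fun s ↦ ncard_insert_of_notMem fun h ↦ G.loopless.irrefl s h.2
  have hmeet : ¬ Disjoint (insert p (D ∩ G.neighborSet p)) (insert q (D ∩ G.neighborSet q)) := by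
    intro hdisj
    have hsub : insert p (D ∩ G.neighborSet p) ∪ insert q (D ∩ G.neighborSet q) ⊆ D :=
      union_subset (insert_subset hp inter_subset_left) (insert_subset hq inter_subset_left)
    have := ncard_le_ncard hsub
    rw [ncard_union_eq hdisj, hcard, hcard] at this
    have := h p hp q hq
    omega
  obtain ⟨r, hrp, hrq⟩ := not_disjoint_iff.mp hmeet
  have hr : r ∈ D := by rcases hrp with rfl | hrp; exacts [hp, hrp.1]
  have hreach : ∀ s (hs : s ∈ D), r ∈ insert s (D ∩ G.neighborSet s) →
      (G.induce D).Reachable ⟨s, hs⟩ ⟨r, hr⟩ := by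
    rintro s hs (rfl | ⟨-, hsr⟩)
    exacts [.rfl, Adj.reachable hsr]
  exact (hreach p hp hrp).trans (hreach q hq hrq).symm

lemma exists_isCliqueModel_of_triangle (hS : 5 ≤ S.ncard)
    (hdir : ∀ u ∈ S, S.ncard ≤ 2 * (S ∩ G.neighborSet u).ncard) {x y z : V}
    (hx : x ∈ S) (hy : y ∈ S) (hz : z ∈ S) (hxy : G.Adj x y) (hxz : G.Adj x z) (hyz : G.Adj y z) :
    ∃ B : Fin 4 → Set V, G.IsCliqueModel B ∧ ∀ i, B i ⊆ S := by
  set T : Set V := {x, y, z}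
  by_cases hapex : ∃ u ∈ S, ∀ w ∈ T, G.Adj u w
  · obtain ⟨u, hu, hT⟩ := hapex
    have hux : G.Adj u x := hT x (by simp [T])
    have huy : G.Adj u y := hT y (by simp [T])
    have huz : G.Adj u z := hT z (by simp [T])
    refine ⟨fun i ↦ {![x, y, z, u] i}, .singleton (Pairwise.of_lt ?_), ?_⟩
    · intro i j hij
      fin_cases i <;> fin_cases j <;> simp_all [Fin.lt_def, G.adj_comm]
    · intro i
      fin_cases i <;> simpa
  push Not at hapex
  set D := S \ T
  have hT : T.ncard = 3 := ncard_eq_three.mpr ⟨x, y, z, hxy.ne, hxz.ne, hyz.ne, rfl⟩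
  have hD : D.ncard = S.ncard - 3 := by
    rw [ncard_sdiff (by simp [T, insert_subset_iff, hx, hy, hz]), hT]
  have hDdeg : ∀ p ∈ S, (S ∩ G.neighborSet p).ncard ≤ (D ∩ G.neighborSet p).ncard + 2 := by
    intro p hp
    obtain ⟨w, hwT, hpw⟩ := hapex p hp
    calc (S ∩ G.neighborSet p).ncard ≤ (T \ {w} ∪ D ∩ G.neighborSet p).ncard := by
          refine ncard_le_ncard fun a ⟨haS, hpa⟩ ↦ ?_
          by_cases haT : a ∈ T
          · exact .inl ⟨haT, fun h ↦ hpw (h ▸ hpa)⟩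
          · exact .inr ⟨⟨haS, haT⟩, hpa⟩
      _ ≤ (T \ {w}).ncard + (D ∩ G.neighborSet p).ncard := ncard_union_le _ _
      _ = (D ∩ G.neighborSet p).ncard + 2 := by rw [ncard_sdiff_singleton_of_mem hwT, hT]; ring
  have hDadj : ∀ p ∈ S, ∃ b ∈ D, G.Adj p b := by
    intro p hp
    have := hdir p hp
    have := hDdeg p hp
    exact nonempty_of_ncard_ne_zero (s := D ∩ G.neighborSet p) (by omega)
  have hDconn : (G.induce D).Connected := by
    refine induce_connected_of_ncard_lt (nonempty_of_ncard_ne_zero (by omega)) fun p hp q hq ↦ ?_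
    have := hdir p hp.1
    have := hdir q hq.1
    have := hDdeg p hp.1
    have := hDdeg q hq.1
    omega
  have hxD : x ∉ D := fun h ↦ h.2 (by simp [T])
  have hyD : y ∉ D := fun h ↦ h.2 (by simp [T])
  have hzD : z ∉ D := fun h ↦ h.2 (by simp [T])
  refine ⟨![{x}, {y}, {z}, D], .of_lt ?_ ?_ ?_, ?_⟩
  · intro i
    fin_cases i
    exacts [induce_singleton_connected x, induce_singleton_connected y,
      induce_singleton_connected z, hDconn]
  · intro i j hij
    fin_cases i <;> fin_cases j <;> simp_all [Fin.lt_def, hxy.ne, hxz.ne, hyz.ne]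
  · intro i j hij
    fin_cases i <;> fin_cases j <;> simp_all [Fin.lt_def]
  · intro i
    fin_cases i <;> simp [hx, hy, hz, D]

lemma inter_neighborSet_eq_of_triangleFree
    (hdir : ∀ u ∈ S, S.ncard ≤ 2 * (S ∩ G.neighborSet u).ncard)
    (htf : ∀ a ∈ S, ∀ b ∈ S, ∀ c ∈ S, G.Adj a b → G.Adj a c → ¬ G.Adj b c)
    {x y p : V} (hx : x ∈ S) (hy : y ∈ S) (hxy : G.Adj x y) (hp : p ∈ S ∩ G.neighborSet y) :
    S ∩ G.neighborSet p = S ∩ G.neighborSet x := by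
  have hdisj : Disjoint (S ∩ G.neighborSet x) (S ∩ G.neighborSet y) :=
    Set.disjoint_left.mpr fun w hwx hwy ↦ htf x hx y hy w hwx.1 hxy hwx.2 hwy.2
  have hcard := ncard_union_eq hdisj
  have hcover : S ∩ G.neighborSet x ∪ S ∩ G.neighborSet y = S := by
    refine eq_of_subset_of_ncard_le (union_subset inter_subset_left inter_subset_left) ?_
    have := hdir x hx
    have := hdir y hy
    omega
  refine eq_of_subset_of_ncard_le (fun w hw ↦ ?_) ?_
  · rcases hcover ▸ hw.1 with hwx | hwy
    · exact hwx
    · exact absurd hw.2 (htf y hy p hp.1 w hw.1 hp.2 hwy.2)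
  · rw [hcover] at hcard
    have := hdir p hp.1
    have := hdir y hy
    omega

lemma exists_isCliqueModel_of_triangleFree (hS : 5 ≤ S.ncard)
    (hdir : ∀ u ∈ S, S.ncard ≤ 2 * (S ∩ G.neighborSet u).ncard)
    (htf : ∀ a ∈ S, ∀ b ∈ S, ∀ c ∈ S, G.Adj a b → G.Adj a c → ¬ G.Adj b c) :
    ∃ B : Fin 4 → Set V, G.IsCliqueModel B ∧ ∀ i, B i ⊆ S := by
  obtain ⟨x, hx⟩ := nonempty_of_ncard_ne_zero (s := S) (by omega)
  obtain ⟨y, hyS, hxy⟩ := nonempty_of_ncard_ne_zero (s := S ∩ G.neighborSet x)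
    (by have := hdir x hx; omega)
  set P := S ∩ G.neighborSet y
  set Q := S ∩ G.neighborSet x
  have hPQ : ∀ p ∈ P, ∀ q ∈ Q, G.Adj p q := fun p hp q hq ↦
    ((inter_neighborSet_eq_of_triangleFree hdir htf hx hyS hxy hp).ge hq).2
  have hxP : x ∈ P := ⟨hx, hxy.symm⟩
  have hyQ : y ∈ Q := ⟨hyS, hxy⟩
  obtain ⟨x₂, x₃, ⟨hx₂, hx₂x⟩, ⟨hx₃, hx₃x⟩, hx₂₃⟩ := (one_lt_ncard_iff (s := P \ {x})).mp <| by
    rw [ncard_sdiff_singleton_of_mem hxP]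
    have : S.ncard ≤ 2 * P.ncard := hdir y hyS
    omega
  obtain ⟨y₂, y₃, ⟨hy₂, hy₂y⟩, ⟨hy₃, hy₃y⟩, hy₂₃⟩ := (one_lt_ncard_iff (s := Q \ {y})).mp <| by
    rw [ncard_sdiff_singleton_of_mem hyQ]
    have : S.ncard ≤ 2 * Q.ncard := hdir x hx
    omega
  simp only [mem_singleton_iff] at hx₂x hx₃x hy₂y hy₃y
  refine ⟨![{x}, {y}, {x₂, y₂}, {x₃, y₃}], .of_lt ?_ ?_ ?_, ?_⟩
  · intro i
    fin_cases i
    exacts [induce_singleton_connected x, induce_singleton_connected y,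
      induce_pair_connected_of_adj (hPQ _ hx₂ _ hy₂),
      induce_pair_connected_of_adj (hPQ _ hx₃ _ hy₃)]
  · intro i j hij
    fin_cases i <;> fin_cases j <;> simp at hij ⊢ <;> grind [SimpleGraph.irrefl]
  · intro i j hij
    fin_cases i <;> fin_cases j <;> simp at hij ⊢ <;> grind [SimpleGraph.adj_symm]
  · intro i
    fin_cases i <;> simp [insert_subset_iff, hx, hyS, hx₂.1, hx₃.1, hy₂.1, hy₃.1]

lemma exists_isCliqueModel_four (hS : 5 ≤ S.ncard)
    (hdir : ∀ u ∈ S, S.ncard ≤ 2 * (S ∩ G.neighborSet u).ncard) :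
    ∃ B : Fin 4 → Set V, G.IsCliqueModel B ∧ ∀ i, B i ⊆ S := by
  by_cases htri : ∃ a ∈ S, ∃ b ∈ S, ∃ c ∈ S, G.Adj a b ∧ G.Adj a c ∧ G.Adj b c
  · obtain ⟨a, ha, b, hb, c, hc, hab, hac, hbc⟩ := htri
    exact exists_isCliqueModel_of_triangle hS hdir ha hb hc hab hac hbc
  · push Not at htri
    exact exists_isCliqueModel_of_triangleFree hS hdir htri

end Finite

end SimpleGraph

namespace LocallyDirac

variable {V : Type*} {G : SimpleGraph V}

lemma ncard_neighborSet_le (hd : LocallyDirac G) {v u : V} (h : G.Adj v u) :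
    (G.neighborSet v).ncard ≤ 2 * (G.neighborSet v ∩ G.neighborSet u).ncard :=
  hd v u h

variable [Finite V]

theorem hasMinor_completeGraph_five (hd : LocallyDirac G) {v : V}
    (hv : 5 ≤ (G.neighborSet v).ncard) : HasMinor G (completeGraph (Fin 5)) := by
  obtain ⟨B, hB, hBv⟩ := exists_isCliqueModel_four hv fun _ hu ↦ hd.ncard_neighborSet_le hu
  exact (hB.cons hBv).hasMinor

lemma eq_of_adj_of_notMem (hd : LocallyDirac G) {u v x x' : V}
    (hu : (G.neighborSet u).ncard ≤ 4) (huv : G.Adj u v) (hux : G.Adj u x) (hux' : G.Adj u x')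
    (hx : x ∉ insert v (G.neighborSet v)) (hx' : x' ∉ insert v (G.neighborSet v)) : x = x' := by
  by_contra hne
  simp only [mem_insert_iff, mem_neighborSet, not_or] at hx hx'
  have hsub : insert v (insert x (insert x' (G.neighborSet u ∩ G.neighborSet v))) ⊆
      G.neighborSet u := by
    simp [insert_subset_iff, huv, hux, hux']
  have hcard := ncard_le_ncard hsub
  rw [ncard_insert_of_notMem (by simp [Ne.symm hx.1, Ne.symm hx'.1]),
    ncard_insert_of_notMem (by simp [hne, hx.2]),
    ncard_insert_of_notMem (by simp [hx'.2])] at hcard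
  have := hd.ncard_neighborSet_le huv
  omega

lemma three_le_ncard_inter_neighborSet (hd : LocallyDirac G) {u v x : V}
    (hu : (G.neighborSet u).ncard ≤ 4) (huv : G.Adj u v) (hux : G.Adj u x)
    (hx : x ∉ insert v (G.neighborSet v)) : 3 ≤ (G.neighborSet x ∩ G.neighborSet v).ncard := by
  have hsub : G.neighborSet u ∩ G.neighborSet x ⊆ G.neighborSet u ∩ G.neighborSet v := by
    rintro w ⟨huw, hxw⟩
    refine ⟨huw, by_contra fun hvw ↦ ?_⟩
    have hw : w ∉ insert v (G.neighborSet v) := by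
      rintro (rfl | h)
      exacts [hx (.inr (hxw : G.Adj x w).symm), hvw h]
    exact G.loopless.irrefl x (hd.eq_of_adj_of_notMem hu huv huw hux hw hx ▸ hxw)
  have hnbhd : insert v (insert x (G.neighborSet u ∩ G.neighborSet v)) ⊆ G.neighborSet u := by
    simp [insert_subset_iff, huv, hux]
  have hcard := ncard_le_ncard hnbhd
  simp only [mem_insert_iff, mem_neighborSet, not_or] at hx
  rw [ncard_insert_of_notMem (by simp [Ne.symm hx.1]),
    ncard_insert_of_notMem (by simp [hx.2])] at hcard
  have := ncard_le_ncard hsub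
  have := hd.ncard_neighborSet_le hux
  have heq := eq_of_subset_of_ncard_le hsub (by omega)
  have hsub' : insert u (G.neighborSet u ∩ G.neighborSet v) ⊆
      G.neighborSet x ∩ G.neighborSet v :=
    insert_subset ⟨hux.symm, huv.symm⟩ fun w hw ↦ ⟨(heq ▸ hw).2, hw.2⟩
  have := ncard_le_ncard hsub'
  rw [ncard_insert_of_notMem (fun h ↦ G.loopless.irrefl u h.1)] at this
  omega

lemma eq_of_adj_of_adj_of_notMem (hd : LocallyDirac G)
    (hΔ : ∀ w, (G.neighborSet w).ncard ≤ 4) {v u u' x x' : V} (hu : G.Adj v u)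
    (hu' : G.Adj v u') (hux : G.Adj u x) (hux' : G.Adj u' x')
    (hx : x ∉ insert v (G.neighborSet v)) (hx' : x' ∉ insert v (G.neighborSet v)) : x = x' := by
  by_contra hne
  have hdisj :
      Disjoint (G.neighborSet x ∩ G.neighborSet v) (G.neighborSet x' ∩ G.neighborSet v) :=
    Set.disjoint_left.mpr fun w hw hw' ↦
      hne (hd.eq_of_adj_of_notMem (hΔ w) hw.2.symm hw.1.symm hw'.1.symm hx hx')
  have hsub : (G.neighborSet x ∩ G.neighborSet v) ∪ (G.neighborSet x' ∩ G.neighborSet v) ⊆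
      G.neighborSet v := union_subset inter_subset_right inter_subset_right
  have := ncard_le_ncard hsub
  rw [ncard_union_eq hdisj] at this
  have := hd.three_le_ncard_inter_neighborSet (hΔ u) hu.symm hux hx
  have := hd.three_le_ncard_inter_neighborSet (hΔ u') hu'.symm hux' hx'
  have := hΔ v
  omega

lemma adj_of_adj_of_notMem (hd : LocallyDirac G) (hΔ : ∀ w, (G.neighborSet w).ncard ≤ 4)
    {v u x y : V} (hu : G.Adj v u) (hux : G.Adj u x) (hx : x ∉ insert v (G.neighborSet v))
    (hxy : G.Adj x y) : G.Adj v y := by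
  by_contra hvy
  have hyv : y ≠ v := fun h ↦ hx (.inr (h ▸ hxy).symm)
  have hy : y ∉ insert v (G.neighborSet v) := by
    rintro (h | h)
    exacts [hyv h, hvy h]
  have h3 := hd.three_le_ncard_inter_neighborSet (hΔ u) hu.symm hux hx
  have := ncard_le_ncard (inter_subset_left (s := G.neighborSet x) (t := G.neighborSet v))
  have := hd.ncard_neighborSet_le hxy
  obtain ⟨w, hxw, hyw⟩ := nonempty_of_ncard_ne_zero
    (s := G.neighborSet x ∩ G.neighborSet y) (by omega)
  by_cases hvw : G.Adj v w
  · exact G.loopless.irrefl x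
      (hd.eq_of_adj_of_adj_of_notMem hΔ hu hvw hux (hyw : G.Adj y w).symm hx hy ▸ hxy)
  · have hsub : insert y (insert w (G.neighborSet x ∩ G.neighborSet v)) ⊆ G.neighborSet x := by
      simp [insert_subset_iff, hxy, hxw.out]
    have := ncard_le_ncard hsub
    rw [ncard_insert_of_notMem (by simp [(hyw : G.Adj y w).ne, hvy]),
      ncard_insert_of_notMem (by simp [hvw])] at this
    have := hΔ x
    omega

theorem card_le_six (hd : LocallyDirac G) (hc : G.Connected)
    (hΔ : ∀ w, (G.neighborSet w).ncard ≤ 4) : Nat.card V ≤ 6 := by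
  obtain ⟨v⟩ := hc.nonempty
  set X := {x | x ∉ insert v (G.neighborSet v) ∧ ∃ u, G.Adj v u ∧ G.Adj u x}
  have hX : X.ncard ≤ 1 := (ncard_le_one_iff (toFinite X)).mpr
    fun ⟨hx, _, hu, hux⟩ ⟨hx', _, hu', hux'⟩ ↦
      hd.eq_of_adj_of_adj_of_notMem hΔ hu hu' hux hux' hx hx'
  have hclosed : ∀ a ∈ insert v (G.neighborSet v) ∪ X, ∀ b, G.Adj a b →
      b ∈ insert v (G.neighborSet v) ∪ X := by
    rintro a ((rfl | ha) | ⟨ha, u, hu, hua⟩) b hab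
    · exact .inl (.inr hab)
    · by_cases hb : b ∈ insert v (G.neighborSet v)
      · exact .inl hb
      · exact .inr ⟨hb, a, ha, hab⟩
    · exact .inl (.inr (hd.adj_of_adj_of_notMem hΔ hu hua ha hab))
  have huniv := eq_univ_of_forall
    (hc.preconnected.mem_of_forall_adj_mem (.inl (mem_insert v _)) hclosed)
  calc Nat.card V = (insert v (G.neighborSet v) ∪ X).ncard := by rw [huniv, ncard_univ]
    _ ≤ (insert v (G.neighborSet v)).ncard + X.ncard := ncard_union_le _ _
    _ ≤ ((G.neighborSet v).ncard + 1) + 1 := add_le_add (ncard_insert_le _ _) hX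
    _ ≤ 6 := by have := hΔ v; omega

end LocallyDirac

/-- Every (connected) locally Dirac graph of order `n ≥ 8` is non-planar. -/
theorem stmt5 {V : Type*} [Fintype V] (G : SimpleGraph V) (hc : G.Connected)
    (hd : LocallyDirac G) (h8 : 8 ≤ Fintype.card V) :
    ¬ Planar G := by
  intro hP
  by_cases hΔ : ∃ v, 5 ≤ (G.neighborSet v).ncard
  · obtain ⟨v, hv⟩ := hΔ
    exact hP.1 (hd.hasMinor_completeGraph_five hv)
  · push Not at hΔ
    have := hd.card_le_six hc fun w ↦ Nat.le_of_lt_succ (hΔ w)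
    rw [Nat.card_eq_fintype_card] at this
    omega
end

section
/- If G is a connected locally Dirac graph of order n ≥ 9, then the diameter of G is at most ⌊n/3⌋ − 1. -/
section Aux

open SimpleGraph Set

variable {V : Type*} [Fintype V] {G : SimpleGraph V}

/-- For a path `p q r` with `p` and `r` non-adjacent and distinct, in a locally Dirac
graph there are at least two common neighbours of `p`, `q`, `r`. -/
private lemma aux_triple (hd : LocallyDirac G) {p q r : V}
    (hpq : G.Adj p q) (hqr : G.Adj q r) (hpr : ¬ G.Adj p r) (hne : p ≠ r) :
    2 ≤ (G.neighborSet p ∩ G.neighborSet q ∩ G.neighborSet r).ncard := by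
  classical
  set A := G.neighborSet q ∩ G.neighborSet p with hA
  set B := G.neighborSet q ∩ G.neighborSet r with hB
  have h1 : degN G q ≤ 2 * A.ncard := hd q p hpq.symm
  have h2 : degN G q ≤ 2 * B.ncard := hd q r hqr
  have hpmem : p ∉ insert r (A ∪ B) := by
    intro hmem
    rcases Set.mem_insert_iff.1 hmem with h | h
    · exact hne h
    · rcases h with h | h
      · exact G.irrefl h.2
      · exact hpr (h.2.symm)
  have hrmem : r ∉ A ∪ B := by
    intro hmem
    rcases hmem with h | h
    · exact hpr h.2
    · exact G.irrefl h.2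
  have hsub : insert p (insert r (A ∪ B)) ⊆ G.neighborSet q := by
    intro w hw
    rcases Set.mem_insert_iff.1 hw with h | h
    · subst h; exact hpq.symm
    · rcases Set.mem_insert_iff.1 h with h | h
      · subst h; exact hqr
      · rcases h with h | h
        · exact h.1
        · exact h.1
  have h3 : (A ∪ B).ncard + 2 ≤ degN G q := by
    have hcard : (insert p (insert r (A ∪ B))).ncard = (A ∪ B).ncard + 2 := by
      rw [Set.ncard_insert_of_notMem hpmem, Set.ncard_insert_of_notMem hrmem]
    have := Set.ncard_le_ncard hsub
    rw [hcard] at this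
    exact this
  have h4 : (A ∪ B).ncard + (A ∩ B).ncard = A.ncard + B.ncard :=
    Set.ncard_union_add_ncard_inter A B
  have hAB : A ∩ B = G.neighborSet p ∩ G.neighborSet q ∩ G.neighborSet r := by
    ext w
    simp only [hA, hB, Set.mem_inter_iff]
    tauto
  rw [← hAB]
  omega

/-- If a vertex starts a geodesic of length 3 in a locally Dirac graph,
then it has degree at least 5. -/
private lemma aux_degfive (hd : LocallyDirac G) {x0 x1 x2 x3 : V}
    (a01 : G.Adj x0 x1) (a12 : G.Adj x1 x2) (a23 : G.Adj x2 x3)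
    (h02 : ¬ G.Adj x0 x2) (h13 : ¬ G.Adj x1 x3) (n02 : x0 ≠ x2) (n13 : x1 ≠ x3)
    (h03 : G.neighborSet x0 ∩ G.neighborSet x3 = ∅) :
    5 ≤ degN G x0 := by
  classical
  set n0 := G.neighborSet x0 with hn0
  set n1 := G.neighborSet x1 with hn1
  set n2 := G.neighborSet x2 with hn2
  set n3 := G.neighborSet x3 with hn3
  set T0 := n0 ∩ n1 with hT0
  set T1 := n1 ∩ n2 with hT1
  -- h1 : T0.ncard + 1 ≤ degN G x0
  have h1 : T0.ncard + 1 ≤ degN G x0 := by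
    have hx1T0 : x1 ∉ T0 := fun h => G.irrefl h.2
    have hsub : insert x1 T0 ⊆ n0 := by
      intro w hw
      rcases Set.mem_insert_iff.1 hw with h | h
      · subst h; exact a01
      · exact h.1
    have := Set.ncard_le_ncard hsub
    rw [Set.ncard_insert_of_notMem hx1T0] at this
    exact this
  -- h2 : degN G x1 ≤ 2 * T0.ncard
  have h2 : degN G x1 ≤ 2 * T0.ncard := by
    have := hd x1 x0 a01.symm
    have hcomm : G.neighborSet x1 ∩ G.neighborSet x0 = T0 := by
      rw [hT0, hn0, hn1, Set.inter_comm]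
    rw [locDeg, hcomm] at this
    exact this
  -- h3 : (T0 ∪ T1).ncard + 2 ≤ degN G x1
  have h3 : (T0 ∪ T1).ncard + 2 ≤ degN G x1 := by
    have hx0mem : x0 ∉ insert x2 (T0 ∪ T1) := by
      intro hmem
      rcases Set.mem_insert_iff.1 hmem with h | h
      · exact n02 h
      · rcases h with h | h
        · exact G.irrefl h.1
        · exact h02 (h.2.symm)
    have hx2mem : x2 ∉ T0 ∪ T1 := by
      intro hmem
      rcases hmem with h | h
      · exact h02 h.1
      · exact G.irrefl h.2
    have hsub : insert x0 (insert x2 (T0 ∪ T1)) ⊆ n1 := by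
      intro w hw
      rcases Set.mem_insert_iff.1 hw with h | h
      · subst h; exact a01.symm
      · rcases Set.mem_insert_iff.1 h with h | h
        · subst h; exact a12
        · rcases h with h | h
          · exact h.2
          · exact h.1
    have := Set.ncard_le_ncard hsub
    rw [Set.ncard_insert_of_notMem hx0mem, Set.ncard_insert_of_notMem hx2mem] at this
    exact this
  -- h4 : inclusion-exclusion
  have h4 : (T0 ∪ T1).ncard + (T0 ∩ T1).ncard = T0.ncard + T1.ncard :=
    Set.ncard_union_add_ncard_inter T0 T1
  -- h5 : 2 ≤ |n1 ∩ n2 ∩ n3|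
  have h5 : 2 ≤ (n1 ∩ n2 ∩ n3).ncard := aux_triple hd a12 a23 h13 n13
  -- h6 : the two subsets of T1 are disjoint
  have h6 : (n1 ∩ n2 ∩ n3).ncard + (T0 ∩ T1).ncard ≤ T1.ncard := by
    have hdisj : Disjoint (n1 ∩ n2 ∩ n3) (T0 ∩ T1) := by
      rw [Set.disjoint_left]
      intro w hw1 hw2
      have : w ∈ n0 ∩ n3 := ⟨hw2.1.1, hw1.2⟩
      rw [h03] at this
      exact this
    have hsub : (n1 ∩ n2 ∩ n3) ∪ (T0 ∩ T1) ⊆ T1 := by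
      intro w hw
      rcases hw with h | h
      · exact ⟨h.1.1, h.1.2⟩
      · exact h.2
    have := Set.ncard_le_ncard hsub
    rw [Set.ncard_union_eq hdisj] at this
    exact this
  omega

end Aux

section Dist

open SimpleGraph

variable {V : Type*} {G : SimpleGraph V}

private lemma aux_dist_getVert_le (hc : G.Connected) {u v : V} (p : G.Walk u v) :
    ∀ i, G.dist u (p.getVert i) ≤ i := by
  induction p with
  | @nil a =>
    intro i
    have hg := SimpleGraph.Walk.getVert_of_length_le (SimpleGraph.Walk.nil : G.Walk a a)
      (show (SimpleGraph.Walk.nil : G.Walk a a).length ≤ i by simp)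
    rw [hg]
    simp [SimpleGraph.dist_self]
  | @cons a b c h q ih =>
    intro i
    cases i with
    | zero => simp [SimpleGraph.Walk.getVert_zero, SimpleGraph.dist_self]
    | succ i =>
      have hg : (SimpleGraph.Walk.cons h q).getVert (i + 1) = q.getVert i :=
        SimpleGraph.Walk.getVert_cons_succ q h
      rw [hg]
      calc G.dist a (q.getVert i) ≤ G.dist a b + G.dist b (q.getVert i) :=
            hc.dist_triangle
        _ ≤ 1 + i := by
            have hab : G.dist a b = 1 := SimpleGraph.dist_eq_one_iff_adj.2 h
            have := ih i
            omega
        _ = i + 1 := by omega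

private lemma aux_dist_getVert_le' (hc : G.Connected) {u v : V} (p : G.Walk u v) :
    ∀ i, G.dist (p.getVert i) v ≤ p.length - i := by
  induction p with
  | @nil a =>
    intro i
    have hg := SimpleGraph.Walk.getVert_of_length_le (SimpleGraph.Walk.nil : G.Walk a a)
      (show (SimpleGraph.Walk.nil : G.Walk a a).length ≤ i by simp)
    rw [hg]
    simp [SimpleGraph.dist_self]
  | @cons a b c h q ih =>
    intro i
    cases i with
    | zero =>
      simp only [SimpleGraph.Walk.getVert_zero, SimpleGraph.Walk.length_cons, Nat.sub_zero]
      calc G.dist a c ≤ G.dist a b + G.dist b c := hc.dist_triangle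
        _ ≤ 1 + q.length := by
            have hab : G.dist a b = 1 := SimpleGraph.dist_eq_one_iff_adj.2 h
            have : G.dist b c ≤ q.length := SimpleGraph.dist_le q
            omega
        _ = q.length + 1 := by omega
    | succ i =>
      have hg : (SimpleGraph.Walk.cons h q).getVert (i + 1) = q.getVert i :=
        SimpleGraph.Walk.getVert_cons_succ q h
      rw [hg]
      have := ih i
      simp only [SimpleGraph.Walk.length_cons]
      omega

end Dist

/-- If `G` is a connected locally Dirac graph of order `n ≥ 9`, then
`diam(G) ≤ ⌊n/3⌋ - 1`. -/
theorem stmt6 {V : Type*} [Fintype V] (G : SimpleGraph V) (hc : G.Connected)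
    (hd : LocallyDirac G) (h9 : 9 ≤ Fintype.card V) :
    ∀ u v : V, G.dist u v ≤ Fintype.card V / 3 - 1 := by
  classical
  intro u v
  set n := Fintype.card V with hn
  by_cases hsmall : G.dist u v ≤ 2
  · omega
  push_neg at hsmall
  set d := G.dist u v with hdd
  have hd3 : 3 ≤ d := hsmall
  obtain ⟨p, hp⟩ := hc.exists_walk_length_eq_dist u v
  set x : ℕ → V := p.getVert with hx
  have hx0 : x 0 = u := p.getVert_zero
  have hxdv : x d = v := by
    rw [hx, hdd, ← hp]
    exact p.getVert_length
  have hadj : ∀ i, i < d → G.Adj (x i) (x (i + 1)) := by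
    intro i hi
    exact p.adj_getVert_succ (by omega)
  have hdle : ∀ i, G.dist u (x i) ≤ i := fun i => aux_dist_getVert_le hc p i
  have hdle' : ∀ i, G.dist (x i) v ≤ d - i := by
    intro i
    have := aux_dist_getVert_le' hc p i
    rwa [hp, ← hdd] at this
  have hxe : ∀ i, i ≤ d → G.dist u (x i) = i := by
    intro i hi
    refine le_antisymm (hdle i) ?_
    have htri : G.dist u v ≤ G.dist u (x i) + G.dist (x i) v := hc.dist_triangle
    have := hdle' i
    omega
  -- separation along the geodesic
  have hsep : ∀ i j, i ≤ j → j ≤ d → j - i ≤ G.dist (x i) (x j) := by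
    intro i j hij hjd
    have htri : G.dist u (x j) ≤ G.dist u (x i) + G.dist (x i) (x j) := hc.dist_triangle
    have h1 := hxe i (le_trans hij hjd)
    have h2 := hxe j hjd
    omega
  have hnonadj : ∀ i j, i + 2 ≤ j → j ≤ d → ¬ G.Adj (x i) (x j) := by
    intro i j hij hjd hadj'
    have h1 : G.dist (x i) (x j) = 1 := SimpleGraph.dist_eq_one_iff_adj.2 hadj'
    have := hsep i j (by omega) hjd
    omega
  have hne : ∀ i j, i + 1 ≤ j → j ≤ d → x i ≠ x j := by
    intro i j hij hjd heq
    have := hsep i j (by omega) hjd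
    rw [heq, SimpleGraph.dist_self] at this
    omega
  have hnocommon : ∀ i j, i + 3 ≤ j → j ≤ d →
      G.neighborSet (x i) ∩ G.neighborSet (x j) = ∅ := by
    intro i j hij hjd
    rw [Set.eq_empty_iff_forall_notMem]
    intro w hw
    have h1 : G.dist (x i) w = 1 := SimpleGraph.dist_eq_one_iff_adj.2 hw.1
    have h2 : G.dist w (x j) = 1 := SimpleGraph.dist_eq_one_iff_adj.2 hw.2.symm
    have htri : G.dist (x i) (x j) ≤ G.dist (x i) w + G.dist w (x j) := hc.dist_triangle
    have := hsep i j (by omega) hjd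
    omega
  -- degree of u is at least 5
  have hu5 : 5 ≤ degN G u := by
    rw [← hx0]
    exact aux_degfive hd (hadj 0 (by omega)) (hadj 1 (by omega)) (hadj 2 (by omega))
      (hnonadj 0 2 (by omega) (by omega)) (hnonadj 1 3 (by omega) (by omega))
      (hne 0 2 (by omega) (by omega)) (hne 1 3 (by omega) (by omega))
      (hnocommon 0 3 (by omega) (by omega))
  -- degree of v is at least 5
  have hv5 : 5 ≤ degN G v := by
    rw [← hxdv]
    have e1 : d - 1 + 1 = d := by omega
    have e2 : d - 2 + 1 = d - 1 := by omega
    have e3 : d - 3 + 1 = d - 2 := by omega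
    have a1 : G.Adj (x d) (x (d - 1)) := by
      have := hadj (d - 1) (by omega); rw [e1] at this; exact this.symm
    have a2 : G.Adj (x (d - 1)) (x (d - 2)) := by
      have := hadj (d - 2) (by omega); rw [e2] at this; exact this.symm
    have a3 : G.Adj (x (d - 2)) (x (d - 3)) := by
      have := hadj (d - 3) (by omega); rw [e3] at this; exact this.symm
    have na1 : ¬ G.Adj (x d) (x (d - 2)) := by
      intro h; exact hnonadj (d - 2) d (by omega) (by omega) h.symm
    have na2 : ¬ G.Adj (x (d - 1)) (x (d - 3)) := by
      intro h; exact hnonadj (d - 3) (d - 1) (by omega) (by omega) h.symm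
    have ne1 : x d ≠ x (d - 2) := fun h => hne (d - 2) d (by omega) (by omega) h.symm
    have ne2 : x (d - 1) ≠ x (d - 3) := fun h => hne (d - 3) (d - 1) (by omega) (by omega) h.symm
    have nc : G.neighborSet (x d) ∩ G.neighborSet (x (d - 3)) = ∅ := by
      rw [Set.inter_comm]
      exact hnocommon (d - 3) d (by omega) (by omega)
    exact aux_degfive hd a1 a2 a3 na1 na2 ne1 ne2 nc
  -- middle levels have at least 3 vertices
  have hlevel : ∀ j, 2 ≤ j → j ≤ d - 2 →
      3 ≤ (Finset.univ.filter (fun w => G.dist u w = j)).card := by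
    intro j hj2 hjd
    have ej : j - 1 + 1 = j := by omega
    have aPQ : G.Adj (x (j - 1)) (x j) := by
      have := hadj (j - 1) (by omega); rw [ej] at this; exact this
    have aQR : G.Adj (x j) (x (j + 1)) := hadj j (by omega)
    have naPR : ¬ G.Adj (x (j - 1)) (x (j + 1)) :=
      hnonadj (j - 1) (j + 1) (by omega) (by omega)
    have nePR : x (j - 1) ≠ x (j + 1) := hne (j - 1) (j + 1) (by omega) (by omega)
    have hM := aux_triple hd aPQ aQR naPR nePR
    set M := G.neighborSet (x (j - 1)) ∩ G.neighborSet (x j) ∩ G.neighborSet (x (j + 1)) with hMdef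
    have hMfin : M.Finite := Set.toFinite M
    obtain ⟨m1, hm1, m2, hm2, hm12⟩ := (Set.one_lt_ncard hMfin).1 (by omega)
    have hdistM : ∀ m ∈ M, G.dist u m = j := by
      intro m hm
      have hup : G.dist u m ≤ G.dist u (x (j - 1)) + G.dist (x (j - 1)) m := hc.dist_triangle
      have h1 : G.dist (x (j - 1)) m = 1 := SimpleGraph.dist_eq_one_iff_adj.2 hm.1.1
      have hlow : G.dist u (x (j + 1)) ≤ G.dist u m + G.dist m (x (j + 1)) := hc.dist_triangle
      have h2 : G.dist m (x (j + 1)) = 1 := SimpleGraph.dist_eq_one_iff_adj.2 hm.2.symm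
      have e1 := hxe (j - 1) (by omega)
      have e2 := hxe (j + 1) (by omega)
      have := hdle j
      have hxej := hxe j (by omega)
      omega
    have hmq1 : m1 ≠ x j := fun h => G.irrefl (h ▸ hm1.1.2)
    have hmq2 : m2 ≠ x j := fun h => G.irrefl (h ▸ hm2.1.2)
    have hsub : ({x j, m1, m2} : Finset V) ⊆
        Finset.univ.filter (fun w => G.dist u w = j) := by
      intro w hw
      simp only [Finset.mem_insert, Finset.mem_singleton] at hw
      rcases hw with h | h | h
      · simp only [Finset.mem_filter, Finset.mem_univ, true_and, h]
        exact hxe j (by omega)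
      · simp only [Finset.mem_filter, Finset.mem_univ, true_and, h]
        exact hdistM m1 hm1
      · simp only [Finset.mem_filter, Finset.mem_univ, true_and, h]
        exact hdistM m2 hm2
    have hcard : ({x j, m1, m2} : Finset V).card = 3 := by
      rw [Finset.card_insert_of_notMem (by simp [hmq1.symm, hmq2.symm]),
        Finset.card_insert_of_notMem (by simp [hm12]), Finset.card_singleton]
    calc 3 = ({x j, m1, m2} : Finset V).card := hcard.symm
      _ ≤ _ := Finset.card_le_card hsub
  -- counting
  set Bu : Finset V := Finset.univ.filter (fun w => G.dist u w ≤ 1) with hBu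
  set Bv : Finset V := Finset.univ.filter (fun w => d - 1 ≤ G.dist u w) with hBv
  set Bm : ℕ → Finset V := fun j => Finset.univ.filter (fun w => G.dist u w = j) with hBm
  have hBucard : 6 ≤ Bu.card := by
    have hsub : insert u (G.neighborFinset u) ⊆ Bu := by
      intro w hw
      rcases Finset.mem_insert.1 hw with h | h
      · subst h; simp [hBu, SimpleGraph.dist_self]
      · have hadjw : G.Adj u w := (SimpleGraph.mem_neighborFinset G u w).1 h
        have : G.dist u w = 1 := SimpleGraph.dist_eq_one_iff_adj.2 hadjw
        simp [hBu, this]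
    have hnotmem : u ∉ G.neighborFinset u := by simp
    have hdeg : degN G u = (G.neighborFinset u).card := by
      rw [degN, SimpleGraph.neighborFinset_def, Set.ncard_eq_toFinset_card']
    have := Finset.card_le_card hsub
    rw [Finset.card_insert_of_notMem hnotmem] at this
    omega
  have hBvcard : 6 ≤ Bv.card := by
    have hsub : insert v (G.neighborFinset v) ⊆ Bv := by
      intro w hw
      rcases Finset.mem_insert.1 hw with h | h
      · subst h
        simp only [hBv, Finset.mem_filter, Finset.mem_univ, true_and]
        omega
      · have hadjw : G.Adj v w := (SimpleGraph.mem_neighborFinset G v w).1 h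
        have h1 : G.dist w v = 1 := SimpleGraph.dist_eq_one_iff_adj.2 hadjw.symm
        have htri : G.dist u v ≤ G.dist u w + G.dist w v := hc.dist_triangle
        simp only [hBv, Finset.mem_filter, Finset.mem_univ, true_and]
        omega
    have hnotmem : v ∉ G.neighborFinset v := by simp
    have hdeg : degN G v = (G.neighborFinset v).card := by
      rw [degN, SimpleGraph.neighborFinset_def, Set.ncard_eq_toFinset_card']
    have := Finset.card_le_card hsub
    rw [Finset.card_insert_of_notMem hnotmem] at this
    omega
  have hdisjuv : Disjoint Bu Bv := by
    rw [Finset.disjoint_left]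
    intro w hw1 hw2
    simp only [hBu, hBv, Finset.mem_filter, Finset.mem_univ, true_and] at hw1 hw2
    omega
  have hdisjm : ∀ j ∈ Finset.Icc 2 (d - 2), ∀ k ∈ Finset.Icc 2 (d - 2), j ≠ k →
      Disjoint (Bm j) (Bm k) := by
    intro j _ k _ hjk
    rw [Finset.disjoint_left]
    intro w hw1 hw2
    simp only [hBm, Finset.mem_filter, Finset.mem_univ, true_and] at hw1 hw2
    omega
  have hdisjBig : Disjoint (Bu ∪ Bv) ((Finset.Icc 2 (d - 2)).biUnion Bm) := by
    rw [Finset.disjoint_left]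
    intro w hw1 hw2
    rcases Finset.mem_biUnion.1 hw2 with ⟨j, hj, hwj⟩
    rw [Finset.mem_Icc] at hj
    simp only [hBm, Finset.mem_filter, Finset.mem_univ, true_and] at hwj
    rcases Finset.mem_union.1 hw1 with h | h <;>
      simp only [hBu, hBv, Finset.mem_filter, Finset.mem_univ, true_and] at h <;> omega
  have hsum : Bu.card + Bv.card + ∑ j ∈ Finset.Icc 2 (d - 2), (Bm j).card ≤ n := by
    have h1 : ((Finset.Icc 2 (d - 2)).biUnion Bm).card
        = ∑ j ∈ Finset.Icc 2 (d - 2), (Bm j).card := Finset.card_biUnion hdisjm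
    have h2 : (Bu ∪ Bv).card = Bu.card + Bv.card := Finset.card_union_of_disjoint hdisjuv
    have h3 : ((Bu ∪ Bv) ∪ (Finset.Icc 2 (d - 2)).biUnion Bm).card
        = (Bu ∪ Bv).card + ((Finset.Icc 2 (d - 2)).biUnion Bm).card :=
      Finset.card_union_of_disjoint hdisjBig
    have h4 : ((Bu ∪ Bv) ∪ (Finset.Icc 2 (d - 2)).biUnion Bm).card ≤ n := by
      rw [hn]
      exact Finset.card_le_card (Finset.subset_univ _) |>.trans (by rw [Finset.card_univ])
    omega
  have hsumlow : 3 * (d - 3) ≤ ∑ j ∈ Finset.Icc 2 (d - 2), (Bm j).card := by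
    calc 3 * (d - 3) = ∑ _j ∈ Finset.Icc 2 (d - 2), 3 := by
          rw [Finset.sum_const, Nat.card_Icc, smul_eq_mul]
          ring_nf
          omega
      _ ≤ ∑ j ∈ Finset.Icc 2 (d - 2), (Bm j).card := by
          refine Finset.sum_le_sum ?_
          intro j hj
          rw [Finset.mem_Icc] at hj
          exact hlevel j hj.1 hj.2
  omega
end

section
/- For every m ≥ 3, the strong product P_m ⊠ K_3 of a path on m vertices with a complete graph on 3 vertices is a connected locally Dirac graph of order 3m with diameter m − 1. -/
/-- The strong product `G ⊠ H`. -/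
def strongProd {α β : Type*} (G : SimpleGraph α) (H : SimpleGraph β) :
    SimpleGraph (α × β) where
  Adj a b :=
    (a.1 = b.1 ∧ H.Adj a.2 b.2) ∨ (a.2 = b.2 ∧ G.Adj a.1 b.1) ∨
      (G.Adj a.1 b.1 ∧ H.Adj a.2 b.2)
  symm := by
    constructor
    rintro a b (⟨h1, h2⟩ | ⟨h1, h2⟩ | ⟨h1, h2⟩)
    · exact Or.inl ⟨h1.symm, h2.symm⟩
    · exact Or.inr (Or.inl ⟨h1.symm, h2.symm⟩)
    · exact Or.inr (Or.inr ⟨h1.symm, h2.symm⟩)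
  loopless := by
    constructor
    rintro a (⟨-, h⟩ | ⟨-, h⟩ | ⟨h, -⟩) <;> exact h.ne rfl

/-!
Closed neighbourhoods multiply in a strong product: `N[(a, b)] = N[a] ×ˢ N[b]`. With `K₃` as the
second factor, a vertex `(a, b)` of `P_m ⊠ K₃` therefore has `3 |N[a]| - 1 ≤ 8` neighbours, while
two adjacent vertices `(a, b)`, `(c, d)` have `3 |N[a] ∩ N[c]| - 2 ≥ 4` common ones, since
`|N[a] ∩ N[c]| ≥ 2` whether `a = c` or `a ~ c`. For the diameter, a walk in `P_m ⊠ K₃` projects to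
a walk in `P_m` that is no longer, and conversely any non-trivial walk in `P_m` lifts to one
between arbitrary `K₃`-coordinates, because the strong product lets both coordinates move at once.
-/

open SimpleGraph

def closedNeighborSet {V : Type*} (G : SimpleGraph V) (v : V) : Set V :=
  insert v (G.neighborSet v)

section ClosedNeighborhoods

variable {V : Type*} [Finite V] {G : SimpleGraph V}

lemma ncard_closedNeighborSet (v : V) : (closedNeighborSet G v).ncard = degN G v + 1 :=
  Set.ncard_insert_of_notMem (G.notMem_neighborSet_self)

lemma ncard_inter_closedNeighborSet {u v : V} (h : G.Adj u v) :
    (closedNeighborSet G u ∩ closedNeighborSet G v).ncard = locDeg G u v + 2 := by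
  have hsplit : closedNeighborSet G u ∩ closedNeighborSet G v =
      insert u (insert v (G.neighborSet u ∩ G.neighborSet v)) := by
    ext w
    simp only [closedNeighborSet, Set.mem_inter_iff, Set.mem_insert_iff, mem_neighborSet]
    grind [G.adj_symm, G.loopless]
  rw [hsplit, Set.ncard_insert_of_notMem (by simp [h.ne]), Set.ncard_insert_of_notMem (by simp)]
  rfl

end ClosedNeighborhoods

lemma SimpleGraph.dist_lt_card {V : Type*} [Fintype V] (G : SimpleGraph V) (u v : V) :
    G.dist u v < Fintype.card V := by
  by_cases h : G.Reachable u v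
  · obtain ⟨p, hp, hlen⟩ := h.exists_path_of_dist
    exact hlen ▸ hp.length_lt
  · rw [dist_eq_zero_of_not_reachable h]
    exact Fintype.card_pos_iff.mpr ⟨u⟩

section StrongProduct

variable {α β : Type*} {G : SimpleGraph α} {H : SimpleGraph β}

lemma boxProd_le_strongProd : G.boxProd H ≤ strongProd G H := by
  rintro p q (⟨hG, h⟩ | ⟨hH, h⟩)
  · exact Or.inr (Or.inl ⟨h, hG⟩)
  · exact Or.inl ⟨h, hH⟩

lemma SimpleGraph.Connected.strongProd (hG : G.Connected) (hH : H.Connected) :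
    (strongProd G H).Connected :=
  (hG.boxProd hH).mono boxProd_le_strongProd

lemma closedNeighborSet_strongProd (p : α × β) :
    closedNeighborSet (strongProd G H) p =
      closedNeighborSet G p.1 ×ˢ closedNeighborSet H p.2 := by
  ext q
  simp only [closedNeighborSet, Set.mem_insert_iff, Set.mem_prod, mem_neighborSet, strongProd,
    Prod.ext_iff]
  grind

lemma degN_strongProd_add_one [Finite α] [Finite β] (p : α × β) :
    degN (strongProd G H) p + 1 =
      (closedNeighborSet G p.1).ncard * (closedNeighborSet H p.2).ncard := by
  rw [← ncard_closedNeighborSet, closedNeighborSet_strongProd, Set.ncard_prod]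

lemma locDeg_strongProd_add_two [Finite α] [Finite β] {p q : α × β}
    (h : (strongProd G H).Adj p q) :
    locDeg (strongProd G H) p q + 2 =
      (closedNeighborSet G p.1 ∩ closedNeighborSet G q.1).ncard *
        (closedNeighborSet H p.2 ∩ closedNeighborSet H q.2).ncard := by
  rw [← ncard_inter_closedNeighborSet h, closedNeighborSet_strongProd,
    closedNeighborSet_strongProd, Set.prod_inter_prod, Set.ncard_prod]

lemma exists_walk_fst_length_le {u v : α × β} (w : (strongProd G H).Walk u v) :
    ∃ p : G.Walk u.1 v.1, p.length ≤ w.length := by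
  induction w with
  | nil => exact ⟨Walk.nil, le_rfl⟩
  | cons h _ ih =>
    obtain ⟨p, hp⟩ := ih
    rw [Walk.length_cons]
    rcases h with ⟨h, -⟩ | ⟨-, h⟩ | ⟨h, -⟩
    · exact ⟨p.copy h.symm rfl, by rw [Walk.length_copy]; omega⟩
    all_goals exact ⟨Walk.cons h p, by rw [Walk.length_cons]; omega⟩

lemma dist_fst_le_dist_strongProd {u v : α × β} (h : (strongProd G H).Reachable u v) :
    G.dist u.1 v.1 ≤ (strongProd G H).dist u v := by
  obtain ⟨w, hw⟩ := h.exists_walk_length_eq_dist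
  obtain ⟨p, hp⟩ := exists_walk_fst_length_le w
  exact (dist_le p).trans (hw ▸ hp)

end StrongProduct

section CompleteFactor

variable {α β : Type*} {G : SimpleGraph α}

lemma strongProd_top_adj_of_adj {a c : α} (h : G.Adj a c) (b d : β) :
    (strongProd G ⊤).Adj (a, b) (c, d) := by
  by_cases hbd : b = d
  · exact Or.inr (Or.inl ⟨hbd, h⟩)
  · exact Or.inr (Or.inr ⟨h, hbd⟩)

lemma exists_walk_strongProd_top {a c : α} (p : G.Walk a c) (hp : p.length ≠ 0) (b d : β) :
    ∃ w : (strongProd G ⊤).Walk (a, b) (c, d), w.length = p.length := by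
  induction p generalizing b with
  | nil => simp at hp
  | cons h p ih =>
    by_cases hp' : p.length = 0
    · obtain rfl := p.eq_of_length_eq_zero hp'
      exact ⟨Walk.cons (strongProd_top_adj_of_adj h b d) Walk.nil, by simp [hp']⟩
    · obtain ⟨w, hw⟩ := ih hp' b
      exact ⟨Walk.cons (strongProd_top_adj_of_adj h b b) w,
        by rw [Walk.length_cons, Walk.length_cons, hw]⟩

lemma dist_strongProd_top_le {a c : α} (hac : a ≠ c) (hr : G.Reachable a c) (b d : β) :
    (strongProd G ⊤).dist (a, b) (c, d) ≤ G.dist a c := by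
  obtain ⟨p, hp⟩ := hr.exists_walk_length_eq_dist
  obtain ⟨w, hw⟩ := exists_walk_strongProd_top p (fun h => hac (p.eq_of_length_eq_zero h)) b d
  exact hp ▸ hw ▸ dist_le w

lemma dist_strongProd_top_fst_eq_le_one (a : α) (b d : β) :
    (strongProd G ⊤).dist (a, b) (a, d) ≤ 1 := by
  by_cases hbd : b = d
  · simp [hbd]
  · exact (dist_eq_one_iff_adj.mpr (Or.inl ⟨rfl, hbd⟩)).le

lemma closedNeighborSet_top (b : β) : closedNeighborSet (⊤ : SimpleGraph β) b = Set.univ :=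
  insert_neighborSet_eq_univ.mpr fun _ => id

theorem locallyDirac_strongProd_top_fin_three [Finite α] (hdeg : ∀ a, degN G a ≤ 2)
    (hnbr : ∀ a, ∃ x, G.Adj a x) : LocallyDirac (strongProd G (⊤ : SimpleGraph (Fin 3))) := by
  intro p q hpq
  have hdegN := degN_strongProd_add_one (G := G) (H := ⊤) p
  have hlocDeg := locDeg_strongProd_add_two hpq
  simp only [closedNeighborSet_top, Set.inter_self, Set.ncard_univ, Nat.card_eq_fintype_card,
    Fintype.card_fin, ncard_closedNeighborSet] at hdegN hlocDeg
  have hcommon : 2 ≤ (closedNeighborSet G p.1 ∩ closedNeighborSet G q.1).ncard := by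
    rcases hpq with ⟨h, -⟩ | ⟨-, h⟩ | ⟨h, -⟩
    · obtain ⟨x, hx⟩ := hnbr p.1
      rw [← h, Set.inter_self, ncard_closedNeighborSet, Nat.succ_le_succ_iff,
        Nat.one_le_iff_ne_zero]
      exact (Set.ncard_pos (Set.toFinite _)).mpr ⟨x, hx⟩ |>.ne'
    all_goals rw [ncard_inter_closedNeighborSet h]; omega
  have hdeg_fst := hdeg p.1
  omega

end CompleteFactor

section PathGraph

lemma degN_pathGraph_le_two {n : ℕ} (a : Fin n) : degN (pathGraph n) a ≤ 2 := by
  have hsub : Fin.val '' (pathGraph n).neighborSet a ⊆ {a.val - 1, a.val + 1} := by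
    rintro _ ⟨x, hx, rfl⟩
    rw [mem_neighborSet, pathGraph_adj] at hx
    simp only [Set.mem_insert_iff, Set.mem_singleton_iff]
    omega
  calc degN (pathGraph n) a = (Fin.val '' (pathGraph n).neighborSet a).ncard :=
        (Set.ncard_image_of_injective _ Fin.val_injective).symm
    _ ≤ ({a.val - 1, a.val + 1} : Set ℕ).ncard := Set.ncard_le_ncard hsub
    _ ≤ 2 := (Set.ncard_insert_le _ _).trans (by simp)

lemma pathGraph_exists_adj {n : ℕ} (hn : 2 ≤ n) (a : Fin n) : ∃ x, (pathGraph n).Adj a x := by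
  by_cases ha : a.val + 1 < n
  · exact ⟨⟨a.val + 1, ha⟩, by simp [pathGraph_adj]⟩
  · exact ⟨⟨a.val - 1, by omega⟩, by simp only [pathGraph_adj]; omega⟩

lemma pathGraph_val_sub_le_length {n : ℕ} {a c : Fin n} (p : (pathGraph n).Walk a c) :
    c.val - a.val ≤ p.length := by
  induction p with
  | nil => simp
  | cons h _ ih =>
    rw [pathGraph_adj] at h
    simp only [Walk.length_cons]
    omega

lemma pathGraph_val_sub_le_dist {n : ℕ} (a c : Fin n) :
    c.val - a.val ≤ (pathGraph n).dist a c := by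
  obtain ⟨p, hp⟩ := (pathGraph_preconnected n a c).exists_walk_length_eq_dist
  exact hp ▸ pathGraph_val_sub_le_length p

end PathGraph

/-- For `m ≥ 3`, the strong product `P_m ⊠ K_3` is a connected locally Dirac graph of
order `3m` with diameter `m - 1`. -/
theorem stmt7 (m : ℕ) (hm : 3 ≤ m) :
    (strongProd (SimpleGraph.pathGraph m) (⊤ : SimpleGraph (Fin 3))).Connected ∧
    LocallyDirac (strongProd (SimpleGraph.pathGraph m) (⊤ : SimpleGraph (Fin 3))) ∧
    Fintype.card (Fin m × Fin 3) = 3 * m ∧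
    (∀ u v : Fin m × Fin 3,
      (strongProd (SimpleGraph.pathGraph m) (⊤ : SimpleGraph (Fin 3))).dist u v ≤ m - 1) ∧
    (∃ u v : Fin m × Fin 3,
      (strongProd (SimpleGraph.pathGraph m) (⊤ : SimpleGraph (Fin 3))).dist u v = m - 1) := by
  have : Nonempty (Fin m) := ⟨⟨0, by omega⟩⟩
  have hconn : (strongProd (pathGraph m) (⊤ : SimpleGraph (Fin 3))).Connected :=
    Connected.strongProd ⟨pathGraph_preconnected m⟩ connected_top
  have hdist : ∀ u v : Fin m × Fin 3,
      (strongProd (pathGraph m) (⊤ : SimpleGraph (Fin 3))).dist u v ≤ m - 1 := by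
    rintro ⟨a, b⟩ ⟨c, d⟩
    rcases eq_or_ne a c with rfl | hac
    · exact (dist_strongProd_top_fst_eq_le_one a b d).trans (by omega)
    · have := (pathGraph m).dist_lt_card a c
      rw [Fintype.card_fin] at this
      exact (dist_strongProd_top_le hac (pathGraph_preconnected m a c) b d).trans (by omega)
  refine ⟨hconn, locallyDirac_strongProd_top_fin_three degN_pathGraph_le_two
    (pathGraph_exists_adj (by omega)), by simp [mul_comm], hdist, ?_⟩
  let u : Fin m × Fin 3 := (⟨0, by omega⟩, 0)
  let v : Fin m × Fin 3 := (⟨m - 1, by omega⟩, 0)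
  refine ⟨u, v, le_antisymm (hdist u v) ?_⟩
  calc m - 1 = v.1.val - u.1.val := rfl
    _ ≤ (pathGraph m).dist u.1 v.1 := pathGraph_val_sub_le_dist _ _
    _ ≤ _ := dist_fst_le_dist_strongProd (hconn.preconnected u v)
end

section
/- If G is a connected locally Dirac graph of order n ≥ 3, then the edge-connectivity of G equals the minimum degree of G. -/
/-- Minimum degree of `G`. -/
noncomputable def minDeg {V : Type*} [Fintype V] (G : SimpleGraph V) : ℕ :=
  sInf {n | ∃ v : V, degN G v = n}

/-- Edge-connectivity of `G`: the least number of edges whose deletion disconnects `G`. -/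
noncomputable def edgeConn {V : Type*} [Fintype V] (G : SimpleGraph V) : ℕ :=
  sInf {n | ∃ F : Finset (Sym2 V), ↑F ⊆ G.edgeSet ∧ F.card = n ∧
    ¬ (G.deleteEdges ↑F).Connected}

/-!
Let `F` be a set of edges whose deletion disconnects `G`, and `S` a component of `G - F`, so that
`F` contains every edge of `G` leaving `S`. Pick `u ∈ S` with a neighbour outside `S`, and split
`N(u)` into `A = N(u) ∩ S` and `B = N(u) \ S`, of sizes `s` and `t`. Then `F` contains the `t`
edges from `u` to `B` and all edges between `A` and `B`. By the local Dirac condition every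
`x ∈ A` has at least `deg u / 2` neighbours in `N(u)`, at most `s - 1` of them in `A`; likewise
for `y ∈ B`. If `s ≤ t`, every `x ∈ A` therefore has a neighbour in `B` and `|F| ≥ t + s = deg u`.
If `2 ≤ t ≤ s`, summing over `B` gives `|F| ≥ t + t (deg u / 2 - t + 1) ≥ deg u`. If `t = 1 < s`,
the only neighbour `b` of `u` outside `S` has a common neighbour with `u`, which lies in `S`, so
`b`, seen from the complement of `S`, falls under the case `t ≥ 2`. Hence `λ(G) ≥ δ(G)`, and the
edges at a vertex of minimum degree give the reverse inequality.
-/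

open Finset

namespace SimpleGraph

variable {V : Type*} (G : SimpleGraph V)

lemma degN_eq_degree [Fintype V] [DecidableRel G.Adj] (v : V) : degN G v = G.degree v := by
  rw [degN, Set.ncard_eq_toFinset_card', ← card_neighborFinset_eq_degree, neighborFinset]

lemma locDeg_eq_card [Fintype V] [DecidableEq V] [DecidableRel G.Adj] (v u : V) :
    locDeg G v u = #(G.neighborFinset v ∩ G.neighborFinset u) := by
  rw [locDeg, ← Set.ncard_coe_finset, coe_inter, coe_neighborFinset, coe_neighborFinset]

lemma minDeg_le_degN [Fintype V] (v : V) : minDeg G ≤ degN G v :=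
  Nat.sInf_le ⟨v, rfl⟩

lemma exists_degN_eq_minDeg [Fintype V] [Nonempty V] : ∃ v, degN G v = minDeg G :=
  Nat.sInf_mem (⟨_, Classical.arbitrary V, rfl⟩ : {n | ∃ v : V, degN G v = n}.Nonempty)

lemma exists_card_eq_degN_not_connected [Fintype V] [Nontrivial V] (v : V) :
    ∃ F : Finset (Sym2 V), ↑F ⊆ G.edgeSet ∧ #F = degN G v ∧ ¬ (G.deleteEdges ↑F).Connected := by
  classical
  refine ⟨G.incidenceFinset v, ?_, ?_, fun hconn => ?_⟩
  · simpa using G.incidenceSet_subset v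
  · rw [card_incidenceFinset_eq_degree, degN_eq_degree]
  · rw [coe_incidenceFinset] at hconn
    refine hconn.preconnected.not_isIsolated v fun w hvw => ?_
    exact (deleteIncidenceSet_adj.mp hvw).2.1 rfl

lemma degN_eq_card_inter_add_card_sdiff [Fintype V] [DecidableEq V] [DecidableRel G.Adj]
    (S : Finset V) (u : V) : degN G u = #(G.neighborFinset u ∩ S) + #(G.neighborFinset u \ S) := by
  rw [card_inter_add_card_sdiff, card_neighborFinset_eq_degree, degN_eq_degree]

lemma sum_card_filter_adj_comm [DecidableRel G.Adj] (X Y : Finset V) :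
    ∑ x ∈ X, #{y ∈ Y | G.Adj x y} = ∑ y ∈ Y, #{x ∈ X | G.Adj y x} := by
  refine (sum_card_bipartiteAbove_eq_sum_card_bipartiteBelow G.Adj).trans
    (sum_congr rfl fun y _ => ?_)
  exact congrArg card (filter_congr fun x _ => G.adj_comm x y)

def ContainsBoundary (S : Finset V) (F : Finset (Sym2 V)) : Prop :=
  ∀ p ∈ S, ∀ q ∉ S, G.Adj p q → s(p, q) ∈ F

variable {G}

lemma ContainsBoundary.compl [Fintype V] [DecidableEq V] {S : Finset V} {F : Finset (Sym2 V)}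
    (hF : G.ContainsBoundary S F) : G.ContainsBoundary Sᶜ F := by
  intro p hp q hq hpq
  rw [Sym2.eq_swap]
  exact hF q (by simpa using hq) p (mem_compl.mp hp) hpq.symm

section

variable [DecidableRel G.Adj] {S X Y : Finset V} {F : Finset (Sym2 V)}

lemma ContainsBoundary.sum_card_filter_adj_le_card (hF : G.ContainsBoundary S F) (hX : X ⊆ S)
    (hY : Disjoint Y S) : ∑ x ∈ X, #{y ∈ Y | G.Adj x y} ≤ #F := by
  rw [← card_sigma]
  refine card_le_card_of_injOn (fun p => s(p.1, p.2)) ?_ ?_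
  · rintro ⟨x, y⟩ hxy
    simp only [coe_sigma, Set.mem_sigma_iff, mem_coe, mem_filter] at hxy
    exact hF x (hX hxy.1) y (Finset.disjoint_left.mp hY hxy.2.1) hxy.2.2
  · rintro ⟨x, y⟩ hxy ⟨x', y'⟩ hxy' he
    simp only [coe_sigma, Set.mem_sigma_iff, mem_coe, mem_filter] at hxy hxy'
    rcases Sym2.eq_iff.mp he with ⟨rfl, rfl⟩ | ⟨rfl, -⟩
    · rfl
    · exact absurd (hX hxy.1) (Finset.disjoint_left.mp hY hxy'.2.1)

lemma ContainsBoundary.card_sdiff_add_sum_le_card [Fintype V] [DecidableEq V] {u : V}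
    (hF : G.ContainsBoundary S F) (hu : u ∈ S) :
    #(G.neighborFinset u \ S) + ∑ x ∈ G.neighborFinset u ∩ S,
      #{y ∈ G.neighborFinset u \ S | G.Adj x y} ≤ #F := by
  have h := hF.sum_card_filter_adj_le_card (X := insert u (G.neighborFinset u ∩ S))
    (Y := G.neighborFinset u \ S) (insert_subset hu inter_subset_right) sdiff_disjoint
  rwa [sum_insert (by simp), filter_true_of_mem fun y hy => (mem_neighborFinset ..).mp
    (mem_sdiff.mp hy).1] at h

end

end SimpleGraph

open SimpleGraph

namespace LocallyDirac

variable {V : Type*} [Fintype V] {G : SimpleGraph V} {S : Finset V} {F : Finset (Sym2 V)}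

section

variable [DecidableEq V] [DecidableRel G.Adj] {P Q : Finset V} {u : V}

lemma degN_le_of_subset_union (hd : LocallyDirac G) (hPQ : G.neighborFinset u ⊆ P ∪ Q)
    {x : V} (hx : x ∈ P) (hux : G.Adj u x) : degN G u ≤ 2 * (#P - 1 + #{y ∈ Q | G.Adj x y}) := by
  refine (hd u x hux).trans (Nat.mul_le_mul_left 2 ?_)
  have hsub : G.neighborFinset u ∩ G.neighborFinset x ⊆ P.erase x ∪ {y ∈ Q | G.Adj x y} := by
    intro z hz
    rw [mem_inter, mem_neighborFinset, mem_neighborFinset] at hz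
    rcases mem_union.mp (hPQ ((mem_neighborFinset ..).mpr hz.1)) with h | h
    · exact mem_union_left _ (mem_erase.mpr ⟨hz.2.ne', h⟩)
    · exact mem_union_right _ (mem_filter.mpr ⟨h, hz.2⟩)
  calc locDeg G u x
      ≤ #(P.erase x ∪ {y ∈ Q | G.Adj x y}) := (G.locDeg_eq_card u x).trans_le (card_le_card hsub)
    _ ≤ #P - 1 + #{y ∈ Q | G.Adj x y} := by
      rw [← card_erase_of_mem hx]
      exact card_union_le _ _

lemma degN_le_card_of_le (hd : LocallyDirac G) (hF : G.ContainsBoundary S F) (hu : u ∈ S)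
    (hle : #(G.neighborFinset u ∩ S) ≤ #(G.neighborFinset u \ S)) : degN G u ≤ #F := by
  have hdeg := G.degN_eq_card_inter_add_card_sdiff S u
  have hcount := hF.card_sdiff_add_sum_le_card hu
  set A := G.neighborFinset u ∩ S
  set B := G.neighborFinset u \ S
  have hsplit : G.neighborFinset u ⊆ A ∪ B := by rw [union_comm, sdiff_union_inter]
  have hA : ∀ x ∈ A, 1 ≤ #{y ∈ B | G.Adj x y} := by
    intro x hx
    have hx1 : 1 ≤ #A := card_pos.mpr ⟨x, hx⟩
    have := hd.degN_le_of_subset_union hsplit hx ((mem_neighborFinset ..).mp (mem_inter.mp hx).1)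
    omega
  have hsum := card_nsmul_le_sum A _ 1 hA
  rw [smul_eq_mul, mul_one] at hsum
  omega

lemma degN_le_card_of_two_le (hd : LocallyDirac G) (hF : G.ContainsBoundary S F) (hu : u ∈ S)
    (h2 : 2 ≤ #(G.neighborFinset u \ S))
    (hle : #(G.neighborFinset u \ S) ≤ #(G.neighborFinset u ∩ S)) : degN G u ≤ #F := by
  have hdeg := G.degN_eq_card_inter_add_card_sdiff S u
  have hcount := hF.card_sdiff_add_sum_le_card hu
  rw [sum_card_filter_adj_comm] at hcount
  set A := G.neighborFinset u ∩ S
  set B := G.neighborFinset u \ S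
  have hsplit : G.neighborFinset u ⊆ B ∪ A := by rw [sdiff_union_inter]
  have hB : ∀ y ∈ B, degN G u + 2 ≤ 2 * #B + 2 * #{x ∈ A | G.Adj y x} := by
    intro y hy
    have := hd.degN_le_of_subset_union hsplit hy ((mem_neighborFinset ..).mp (mem_sdiff.mp hy).1)
    omega
  have hsum := card_nsmul_le_sum B _ _ hB
  rw [smul_eq_mul, sum_add_distrib, sum_const, smul_eq_mul, ← mul_sum] at hsum
  -- what remains is `(t - 2) (deg u - 2 t) ≥ 0`
  nlinarith

lemma degN_le_card_of_cut (hd : LocallyDirac G) (hF : G.ContainsBoundary S F) (hu : u ∈ S)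
    (hcase : #(G.neighborFinset u ∩ S) ≤ #(G.neighborFinset u \ S) ∨
      2 ≤ #(G.neighborFinset u \ S)) : degN G u ≤ #F := by
  by_cases hle : #(G.neighborFinset u ∩ S) ≤ #(G.neighborFinset u \ S)
  · exact hd.degN_le_card_of_le hF hu hle
  · exact hd.degN_le_card_of_two_le hF hu (hcase.resolve_left hle) (not_le.mp hle).le

end

lemma exists_degN_le_card (hd : LocallyDirac G) (hF : G.ContainsBoundary S F) {a b : V}
    (ha : a ∈ S) (hb : b ∉ S) (hab : G.Adj a b) : ∃ v, degN G v ≤ #F := by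
  classical
  by_cases hcase : #(G.neighborFinset a ∩ S) ≤ #(G.neighborFinset a \ S) ∨
      2 ≤ #(G.neighborFinset a \ S)
  · exact ⟨a, hd.degN_le_card_of_cut hF ha hcase⟩
  rw [not_or, not_le, not_le] at hcase
  obtain ⟨w, hw⟩ : (G.neighborFinset a ∩ G.neighborFinset b).Nonempty := by
    have hdirac := hd a b hab
    rw [degN_eq_degree, locDeg_eq_card] at hdirac
    have := hab.degree_pos_left
    exact card_pos.mp (by omega)
  rw [mem_inter, mem_neighborFinset, mem_neighborFinset] at hw
  have hwS : w ∈ S := by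
    by_contra hwS
    exact hw.2.ne (card_le_one.mp (Nat.le_of_lt_succ hcase.2) b (by simp [hab, hb])
      w (by simp [hw.1, hwS]))
  refine ⟨b, hd.degN_le_card_of_cut hF.compl (mem_compl.mpr hb) (Or.inr ?_)⟩
  rw [sdiff_compl]
  exact one_lt_card.mpr ⟨a, by simp [hab.symm, ha], w, by simp [hw.2, hwS], hw.1.ne⟩

lemma minDeg_le_card (hd : LocallyDirac G) (hc : G.Connected)
    (hF : ¬ (G.deleteEdges ↑F).Connected) : minDeg G ≤ #F := by
  classical
  obtain ⟨x, y, hxy⟩ : ∃ x y, ¬ (G.deleteEdges ↑F).Reachable x y := by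
    by_contra! h
    exact hF (connected_iff _ |>.mpr ⟨h, hc.nonempty⟩)
  let S : Finset V := {z | (G.deleteEdges ↑F).Reachable x z}
  have hS : G.ContainsBoundary S F := fun p hp q hq hpq => by
    by_contra h
    simp only [S, mem_filter, mem_univ, true_and] at hp hq
    exact hq (hp.trans (deleteEdges_adj.mpr ⟨hpq, h⟩).reachable)
  obtain ⟨d, -, hd₁, hd₂⟩ := (hc.preconnected x y).some.exists_boundary_dart (S : Set V)
    (by simp [S]) (by simpa [S] using hxy)
  obtain ⟨v, hv⟩ := hd.exists_degN_le_card hS hd₁ hd₂ d.adj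
  exact (minDeg_le_degN G v).trans hv

end LocallyDirac

/-- If `G` is a connected locally Dirac graph of order `n ≥ 3`, then `λ(G) = δ(G)`. -/
theorem stmt8 {V : Type*} [Fintype V] (G : SimpleGraph V) (hc : G.Connected)
    (hd : LocallyDirac G) (h3 : 3 ≤ Fintype.card V) :
    edgeConn G = minDeg G := by
  have : Nontrivial V := Fintype.one_lt_card_iff_nontrivial.mp (by omega)
  obtain ⟨v, hv⟩ := G.exists_degN_eq_minDeg
  obtain ⟨F, hF⟩ := G.exists_card_eq_degN_not_connected v
  refine le_antisymm (hv ▸ Nat.sInf_le ⟨F, hF⟩) (le_csInf ⟨_, F, hF⟩ ?_)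
  rintro _ ⟨F', -, rfl, hF'⟩
  exact hd.minDeg_le_card hc hF'
end

section
/- For every integer k ≥ 3 there exists a locally Ore graph G_k with minimum degree k²+1 and edge-connectivity k². Explicitly, G_k is obtained from two disjoint copies of K_{k²+2} by adding all k² edges between a fixed set of k vertices in one copy and a fixed set of k vertices in the other copy. -/
/-- `Gk k`: two disjoint copies of `K_{k²+2}`, with all `k²` edges added between the first
`k` vertices of one copy and the first `k` vertices of the other copy. -/
def Gk (k : ℕ) : SimpleGraph (Fin (k ^ 2 + 2) ⊕ Fin (k ^ 2 + 2)) where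
  Adj x y :=
    match x, y with
    | Sum.inl a, Sum.inl b => a ≠ b
    | Sum.inl a, Sum.inr b => a.val < k ∧ b.val < k
    | Sum.inr a, Sum.inl b => a.val < k ∧ b.val < k
    | Sum.inr a, Sum.inr b => a ≠ b
  symm := by
    constructor
    rintro (a | a) (b | b) h
    · exact Ne.symm h
    · exact ⟨h.2, h.1⟩
    · exact ⟨h.2, h.1⟩
    · exact Ne.symm h
  loopless := by
    constructor
    rintro (a | a) h
    · exact h rfl
    · exact h rfl

/-!
Inside a copy of `K_{k²+2}` two vertices have `k²` common neighbours, so they are joined by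
`k² + 1` edge-disjoint paths of length at most two; fewer than `k²` deleted edges therefore leave
each copy connected and miss one of the `k²` edges between the copies, while deleting those `k²`
edges disconnects the graph. The degrees are `k² + 1`, or `k² + 1 + k` at the `2k` joined
vertices. The only non-adjacent pairs in a neighbourhood `N(v)` consist of an unjoined vertex of
the copy of `v` and a joined vertex of the other copy; their degrees in `⟨N(v)⟩` are `k²` and
`2(k - 1)`, whose sum is at least `k² + 1 + k` exactly when `k ≥ 3`.
-/

open Set SimpleGraph

section General

variable {V W : Type*} {G : SimpleGraph V} {H : SimpleGraph W}

theorem Set.ncard_eq_ncard_preimage_inl_add_ncard_preimage_inr {α β : Type*} [Finite α]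
    [Finite β] (s : Set (α ⊕ β)) : s.ncard = (Sum.inl ⁻¹' s).ncard + (Sum.inr ⁻¹' s).ncard := by
  rw [← ncard_image_of_injective (Sum.inl ⁻¹' s) Sum.inl_injective,
    ← ncard_image_of_injective (Sum.inr ⁻¹' s) Sum.inr_injective,
    ← ncard_union_eq disjoint_image_inl_image_inr]
  congr 1
  ext (a | b) <;> simp

theorem neighborSet_iso (e : G ≃g H) (v : V) : H.neighborSet (e v) = e '' G.neighborSet v := by
  ext w
  obtain ⟨w, rfl⟩ := e.surjective w
  simp [e.injective.mem_set_image, e.map_adj_iff]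

theorem degN_iso (e : G ≃g H) (v : V) : degN H (e v) = degN G v := by
  rw [degN, neighborSet_iso, ncard_image_of_injective _ e.injective, degN]

theorem locDeg_iso (e : G ≃g H) (v u : V) : locDeg H (e v) (e u) = locDeg G v u := by
  rw [locDeg, neighborSet_iso, neighborSet_iso, ← image_inter e.injective,
    ncard_image_of_injective _ e.injective, locDeg]

def IsOreAt (G : SimpleGraph V) (v : V) : Prop :=
  ∀ u w : V, G.Adj v u → G.Adj v w → u ≠ w → ¬ G.Adj u w →
    degN G v ≤ locDeg G v u + locDeg G v w

theorem IsOreAt.iso {v : V} (h : IsOreAt G v) (e : G ≃g H) : IsOreAt H (e v) := by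
  intro u w hu hw huw hnadj
  obtain ⟨u, rfl⟩ := e.surjective u
  obtain ⟨w, rfl⟩ := e.surjective w
  rw [degN_iso, locDeg_iso, locDeg_iso]
  rw [e.map_adj_iff] at hu hw hnadj
  exact h u w hu hw (e.injective.ne_iff.mp huw) hnadj

theorem minDeg_eq_of_forall_le [Fintype V] {d : ℕ} (hle : ∀ v, d ≤ degN G v) (v₀ : V)
    (hv₀ : degN G v₀ = d) : minDeg G = d :=
  le_antisymm (Nat.sInf_le ⟨v₀, hv₀⟩) (le_csInf ⟨d, v₀, hv₀⟩ (by rintro _ ⟨v, rfl⟩; exact hle v))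

theorem edgeConn_eq_of_forall_card_lt [Fintype V] {n : ℕ} (F₀ : Finset (Sym2 V))
    (hF₀ : ↑F₀ ⊆ G.edgeSet) (hcard : F₀.card = n) (hcut : ¬ (G.deleteEdges ↑F₀).Connected)
    (hconn : ∀ F : Finset (Sym2 V), F.card < n → (G.deleteEdges ↑F).Connected) :
    edgeConn G = n := by
  refine le_antisymm (Nat.sInf_le ⟨F₀, hF₀, hcard, hcut⟩) (le_csInf ⟨n, F₀, hF₀, hcard, hcut⟩ ?_)
  rintro _ ⟨F, -, rfl, hF⟩
  exact not_lt.mp fun h => hF (hconn F h)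

theorem not_connected_deleteEdges_of_boundary_subset {F : Set (Sym2 V)} {S : Set V}
    (hF : ∀ x y, G.Adj x y → x ∈ S → y ∉ S → s(x, y) ∈ F) {u v : V} (hu : u ∈ S) (hv : v ∉ S) :
    ¬ (G.deleteEdges F).Connected := by
  intro hconn
  obtain ⟨d, -, hd₁, hd₂⟩ := (hconn.preconnected u v).some.exists_boundary_dart S hu hv
  obtain ⟨hadj, hdF⟩ := deleteEdges_adj.mp d.adj
  exact hdF (hF _ _ hadj hd₁ hd₂)

theorem reachable_deleteEdges_of_card_le_ncard_commonNeighbors [Finite V] {u v : V}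
    (huv : G.Adj u v) {F : Finset (Sym2 V)} (hF : F.card ≤ (G.commonNeighbors u v).ncard) :
    (G.deleteEdges ↑F).Reachable u v := by
  classical
  by_contra hnreach
  have huvF : s(u, v) ∈ F := by
    by_contra h
    exact hnreach (deleteEdges_adj.mpr ⟨huv, h⟩).reachable
  -- Every path `u - w - v` through a common neighbour `w` loses an edge to `F`, and these
  -- edges are distinct from each other and from `s(u, v)`.
  have hpath (w : V) (hw : w ∈ G.commonNeighbors u v) : s(u, w) ∉ F → s(w, v) ∈ F := by
    intro huw
    by_contra hwv
    exact hnreach ((deleteEdges_adj.mpr ⟨hw.1, huw⟩).reachable.trans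
      (deleteEdges_adj.mpr ⟨hw.2.symm, hwv⟩).reachable)
  let f (w : V) : Sym2 V := if s(u, w) ∈ F then s(u, w) else s(w, v)
  have hmaps : ∀ w ∈ G.commonNeighbors u v, f w ∈ (↑(F.erase s(u, v)) : Set (Sym2 V)) := by
    intro w hw
    have hwu : w ≠ u := hw.1.ne.symm
    have hwv : w ≠ v := hw.2.ne.symm
    by_cases h : s(u, w) ∈ F <;> simp [f, h, hpath w hw, hwu, hwv, huv.ne]
  have hinj : InjOn f (G.commonNeighbors u v) := by
    intro w hw w' hw' heq
    have := hw.1.ne; have := hw.2.ne; have := hw'.1.ne; have := hw'.2.ne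
    by_cases h : s(u, w) ∈ F <;> by_cases h' : s(u, w') ∈ F <;>
      simp only [f, h, h', if_true, if_false, Sym2.eq_iff] at heq <;> grind
  have := ncard_le_ncard_of_injOn f hmaps hinj (Finset.finite_toSet _)
  rw [ncard_coe_finset, Finset.card_erase_of_mem huvF] at this
  have : 0 < F.card := Finset.card_pos.mpr ⟨_, huvF⟩
  omega

end General

theorem Fin.ncard_setOf_val_lt {n m : ℕ} (h : m ≤ n) : {i : Fin n | i.val < m}.ncard = m := by
  rw [← Finset.coe_filter_univ, ncard_coe_finset, Fin.card_filter_val_lt, min_eq_right h]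

namespace Gk

variable {k : ℕ}

def swap : Gk k ≃g Gk k where
  toEquiv := Equiv.sumComm _ _
  map_rel_iff' := by rintro (a | a) (b | b) <;> rfl

theorem le_sq_add_two (k : ℕ) : k ≤ k ^ 2 + 2 := by nlinarith

theorem degN_inl (a : Fin (k ^ 2 + 2)) :
    degN (Gk k) (.inl a) = k ^ 2 + 1 + if a.val < k then k else 0 := by
  have hl : Sum.inl ⁻¹' (Gk k).neighborSet (.inl a) = {a}ᶜ := by
    ext; simp [Gk, eq_comm]
  have hr : Sum.inr ⁻¹' (Gk k).neighborSet (.inl a) = if a.val < k then {b | b.val < k} else ∅ := by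
    split_ifs with ha <;> ext <;> simp [Gk, ha]
  have := ncard_add_ncard_compl {a}
  rw [ncard_singleton, Nat.card_eq_fintype_card, Fintype.card_fin] at this
  rw [degN, ncard_eq_ncard_preimage_inl_add_ncard_preimage_inr, hl, hr]
  split_ifs
  · rw [Fin.ncard_setOf_val_lt (le_sq_add_two k)]; omega
  · rw [ncard_empty]; omega

theorem sq_le_locDeg_inl_inl {a b : Fin (k ^ 2 + 2)} (hab : a ≠ b) :
    k ^ 2 ≤ locDeg (Gk k) (.inl a) (.inl b) := by
  have hl : Sum.inl ⁻¹' ((Gk k).neighborSet (.inl a) ∩ (Gk k).neighborSet (.inl b)) = {a, b}ᶜ := by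
    ext; simp [Gk, eq_comm, not_or]
  have := ncard_add_ncard_compl {a, b}
  rw [ncard_pair hab, Nat.card_eq_fintype_card, Fintype.card_fin] at this
  rw [locDeg, ncard_eq_ncard_preimage_inl_add_ncard_preimage_inr, hl]
  omega

theorem locDeg_inl_inr {a c : Fin (k ^ 2 + 2)} (ha : a.val < k) (hc : c.val < k) :
    locDeg (Gk k) (.inl a) (.inr c) = (k - 1) + (k - 1) := by
  have hl : Sum.inl ⁻¹' ((Gk k).neighborSet (.inl a) ∩ (Gk k).neighborSet (.inr c)) =
      {x | x.val < k} \ {a} := by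
    ext; simp [Gk, hc, eq_comm, and_comm]
  have hr : Sum.inr ⁻¹' ((Gk k).neighborSet (.inl a) ∩ (Gk k).neighborSet (.inr c)) =
      {x | x.val < k} \ {c} := by
    ext; simp [Gk, ha, eq_comm]
  rw [locDeg, ncard_eq_ncard_preimage_inl_add_ncard_preimage_inr, hl, hr,
    ncard_sdiff_singleton_of_mem (show a ∈ {x : Fin _ | x.val < k} from ha),
    ncard_sdiff_singleton_of_mem (show c ∈ {x : Fin _ | x.val < k} from hc),
    Fin.ncard_setOf_val_lt (le_sq_add_two k)]

theorem sq_le_locDeg_inr_inr {a b : Fin (k ^ 2 + 2)} (hab : a ≠ b) :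
    k ^ 2 ≤ locDeg (Gk k) (.inr a) (.inr b) :=
  locDeg_iso swap (.inl a) (.inl b) ▸ sq_le_locDeg_inl_inl hab

theorem le_degN (v : Fin (k ^ 2 + 2) ⊕ Fin (k ^ 2 + 2)) : k ^ 2 + 1 ≤ degN (Gk k) v := by
  obtain ⟨a, rfl | rfl⟩ : ∃ a, v = .inl a ∨ v = swap (.inl a) := by
    rcases v with a | a
    exacts [⟨a, .inl rfl⟩, ⟨a, .inr rfl⟩]
  · rw [degN_inl]; omega
  · rw [degN_iso, degN_inl]; omega

theorem isOreAt_inl (hk : 3 ≤ k) (a : Fin (k ^ 2 + 2)) : IsOreAt (Gk k) (.inl a) := by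
  -- The only non-adjacent pairs of neighbours of `inl a` are `inl b`, `inr c` with `b ≥ k > c`.
  have key (b c : Fin (k ^ 2 + 2)) (hab : (Gk k).Adj (.inl a) (.inl b))
      (hac : (Gk k).Adj (.inl a) (.inr c)) (hbc : ¬ (Gk k).Adj (.inl b) (.inr c)) :
      degN (Gk k) (.inl a) ≤ locDeg (Gk k) (.inl a) (.inl b) + locDeg (Gk k) (.inl a) (.inr c) := by
    rw [degN_inl, if_pos hac.1, locDeg_inl_inr hac.1 hac.2]
    have := sq_le_locDeg_inl_inl hab
    omega
  rintro (b | b) (c | c) hu hw huw hnadj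
  · exact absurd (fun h => huw (congrArg _ h)) hnadj
  · exact key b c hu hw hnadj
  · exact (key c b hw hu fun h => hnadj h.symm).trans_eq (add_comm _ _)
  · exact absurd (fun h => huw (congrArg _ h)) hnadj

theorem locallyOre (hk : 3 ≤ k) : LocallyOre (Gk k) := by
  rintro (a | a)
  exacts [isOreAt_inl hk a, (isOreAt_inl hk a).iso swap]

theorem minDeg_eq : minDeg (Gk k) = k ^ 2 + 1 :=
  minDeg_eq_of_forall_le le_degN (.inl ⟨k, by nlinarith⟩) (by simp [degN_inl])

def crossEdges (k : ℕ) : Finset (Sym2 (Fin (k ^ 2 + 2) ⊕ Fin (k ^ 2 + 2))) :=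
  let S : Finset (Fin (k ^ 2 + 2)) := {i | i.val < k}
  (S ×ˢ S).image fun p => s(.inl p.1, .inr p.2)

theorem mk_mem_crossEdges {a b : Fin (k ^ 2 + 2)} :
    s(.inl a, .inr b) ∈ crossEdges k ↔ a.val < k ∧ b.val < k := by
  simp [crossEdges]

theorem card_crossEdges : (crossEdges k).card = k ^ 2 := by
  rw [crossEdges, Finset.card_image_of_injective, Finset.card_product, Fin.card_filter_val_lt,
    min_eq_right (le_sq_add_two k), sq]
  rintro ⟨a, b⟩ ⟨a', b'⟩ h
  simpa [Sym2.eq_iff] using h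

theorem crossEdges_subset_edgeSet : ↑(crossEdges k) ⊆ (Gk k).edgeSet := by
  intro e he
  obtain ⟨⟨a, b⟩, hab, rfl⟩ := Finset.mem_image.mp he
  simpa [Gk] using hab

theorem not_connected_deleteEdges_crossEdges :
    ¬ ((Gk k).deleteEdges ↑(crossEdges k)).Connected := by
  refine not_connected_deleteEdges_of_boundary_subset (S := range .inl) ?_
    (u := .inl 0) (v := .inr 0) (mem_range_self _) (by simp)
  rintro _ (b | b) hadj ⟨a, rfl⟩ hb
  · exact absurd (mem_range_self b) hb
  · exact mk_mem_crossEdges.mpr hadj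

theorem connected_deleteEdges {F : Finset (Sym2 (Fin (k ^ 2 + 2) ⊕ Fin (k ^ 2 + 2)))}
    (hF : F.card < k ^ 2) : ((Gk k).deleteEdges ↑F).Connected := by
  obtain ⟨_, he, heF⟩ := Finset.exists_mem_notMem_of_card_lt_card (hF.trans_eq card_crossEdges.symm)
  obtain ⟨⟨a, b⟩, -, rfl⟩ := Finset.mem_image.mp he
  have hcross : ((Gk k).deleteEdges ↑F).Adj (.inl a) (.inr b) :=
    deleteEdges_adj.mpr ⟨crossEdges_subset_edgeSet he, heF⟩
  have hsame {x y : Fin (k ^ 2 + 2) ⊕ Fin (k ^ 2 + 2)} (hxy : (Gk k).Adj x y)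
      (hloc : k ^ 2 ≤ locDeg (Gk k) x y) : ((Gk k).deleteEdges ↑F).Reachable x y :=
    reachable_deleteEdges_of_card_le_ncard_commonNeighbors hxy (hF.le.trans hloc)
  have hleft (c : Fin (k ^ 2 + 2)) : ((Gk k).deleteEdges ↑F).Reachable (.inl a) (.inl c) := by
    rcases eq_or_ne a c with rfl | hac
    exacts [.rfl, hsame hac (sq_le_locDeg_inl_inl hac)]
  have hright (c : Fin (k ^ 2 + 2)) : ((Gk k).deleteEdges ↑F).Reachable (.inr b) (.inr c) := by
    rcases eq_or_ne b c with rfl | hbc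
    exacts [.rfl, hsame hbc (sq_le_locDeg_inr_inr hbc)]
  refine (connected_iff_exists_forall_reachable _).mpr ⟨.inl a, ?_⟩
  rintro (c | c)
  exacts [hleft c, hcross.reachable.trans (hright c)]

theorem edgeConn_eq : edgeConn (Gk k) = k ^ 2 :=
  edgeConn_eq_of_forall_card_lt _ crossEdges_subset_edgeSet card_crossEdges
    not_connected_deleteEdges_crossEdges fun _ => connected_deleteEdges

end Gk

/-- For every `k ≥ 3`, the graph `Gk k` is locally Ore, has minimum degree `k² + 1`,
and edge-connectivity `k²`. -/
theorem stmt9 (k : ℕ) (hk : 3 ≤ k) :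
    LocallyOre (Gk k) ∧ minDeg (Gk k) = k ^ 2 + 1 ∧ edgeConn (Gk k) = k ^ 2 :=
  ⟨Gk.locallyOre hk, Gk.minDeg_eq, Gk.edgeConn_eq⟩
end

section
/- Let C = v_0 v_1 … v_{t−1} v_0 be a non-extendable cycle in a graph G, with v_i and v_j distinct vertices of C sharing a common off-cycle neighbour x. If v_{i−1}v_{i+1} ∈ E(G), then neither v_{j−1}v_i nor v_{j+1}v_i is an edge of G (indices mod t). -/
/-- `v : ZMod t → V` lists the vertices of a cycle of length `t ≥ 3` in `G`. -/
def IsCycleFun {V : Type*} (G : SimpleGraph V) (t : ℕ) (v : ZMod t → V) : Prop :=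
  3 ≤ t ∧ Function.Injective v ∧ ∀ i : ZMod t, G.Adj (v i) (v (i + 1))

/-- The cycle `v` is extendable: there is a cycle through all vertices of `v` plus exactly
one new vertex. -/
def CycleExtendable {V : Type*} (G : SimpleGraph V) (t : ℕ) (v : ZMod t → V) : Prop :=
  ∃ x ∉ Set.range v, ∃ w : ZMod (t + 1) → V,
    IsCycleFun G (t + 1) w ∧ Set.range w = insert x (Set.range v)

private lemma cast_inj_aux {t : ℕ} (ht : 3 ≤ t) {a b : ℕ} (ha1 : 1 ≤ a) (ha2 : a ≤ t)
    (hb1 : 1 ≤ b) (hb2 : b ≤ t) (h : (a : ZMod t) = b) : a = b := by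
  have h' : a % t = b % t := (ZMod.natCast_eq_natCast_iff a b t).mp h
  rcases eq_or_lt_of_le ha2 with rfl | ha
  · rcases eq_or_lt_of_le hb2 with h2 | hb
    · omega
    · rw [Nat.mod_self, Nat.mod_eq_of_lt hb] at h'; omega
  · rcases eq_or_lt_of_le hb2 with rfl | hb
    · rw [Nat.mod_self, Nat.mod_eq_of_lt ha] at h'; omega
    · rw [Nat.mod_eq_of_lt ha, Nat.mod_eq_of_lt hb] at h'; exact h'

private lemma key_s12 {V : Type*} (G : SimpleGraph V) (t : ℕ) (v : ZMod t → V)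
    (hC : IsCycleFun G t v) (hne : ¬ CycleExtendable G t v)
    (x : V) (hx : x ∉ Set.range v) (i j : ZMod t) (hij : i ≠ j)
    (hxi : G.Adj x (v i)) (hxj : G.Adj x (v j))
    (hchord : G.Adj (v (i - 1)) (v (i + 1))) :
    ¬ G.Adj (v (j - 1)) (v i) := by
  intro h
  obtain ⟨ht, hinj, hadj⟩ := hC
  haveI : NeZero t := ⟨by omega⟩
  haveI : Fact (1 < t + 1) := ⟨by omega⟩
  classical
  set m : ℕ := (j - i).val with hmdef
  have hmcast : (m : ZMod t) = j - i := ZMod.natCast_zmod_val _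
  have hmlt : m < t := ZMod.val_lt _
  have hm0 : m ≠ 0 := by
    intro h0
    apply hij
    have h1 : j - i = 0 := by rw [← hmcast, h0, Nat.cast_zero]
    exact (sub_eq_zero.mp h1).symm
  have hm1 : m ≠ 1 := by
    intro h1
    have h2 : j - i = 1 := by rw [← hmcast, h1, Nat.cast_one]
    have h3 : j - 1 = i := by linear_combination h2
    exact G.irrefl (h3 ▸ h)
  have hm2 : 2 ≤ m := by omega
  set τ : ℕ → ℕ := fun s => if s = 1 then m else if s ≤ m then s - 1 else s with hτ
  set w : ZMod (t+1) → V :=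
    fun k => if k.val = 0 then x else v (j - (τ k.val : ZMod t)) with hw
  have hτ1 : τ 1 = m := by simp [hτ]
  have hτrange : ∀ s, 1 ≤ s → s ≤ t → 1 ≤ τ s ∧ τ s ≤ t := by
    intro s hs1 hs2; simp only [hτ]; split_ifs <;> omega
  have hτinj : ∀ s1 s2, 1 ≤ s1 → s1 ≤ t → 1 ≤ s2 → s2 ≤ t → τ s1 = τ s2 → s1 = s2 := by
    intro s1 s2 a b c d hyp; simp only [hτ] at hyp; split_ifs at hyp <;> omega
  have hval : ∀ k : ZMod (t+1), k.val ≤ t := fun k => by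
    have := ZMod.val_lt k; omega
  have hii : j - ((m : ℕ) : ZMod t) = i := by rw [hmcast]; ring
  have hwx : ∀ k : ZMod (t+1), k.val = 0 → w k = x := by
    intro k hk; simp only [hw]; rw [if_pos hk]
  have hwv : ∀ k : ZMod (t+1), k.val ≠ 0 → w k = v (j - (τ k.val : ZMod t)) := by
    intro k hk; simp only [hw]; rw [if_neg hk]
  -- adjacency of w
  have hadjw : ∀ k : ZMod (t+1), G.Adj (w k) (w (k + 1)) := by
    intro k
    rcases eq_or_lt_of_le (hval k) with hkt | hkt
    · -- k.val = t : from v j back to x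
      have hk : k = ((t : ℕ) : ZMod (t+1)) := by
        rw [← ZMod.natCast_zmod_val k, hkt]
      have hk1 : k + 1 = 0 := by
        rw [hk]
        have h5 := ZMod.natCast_self (t+1)
        push_cast at h5 ⊢
        linear_combination h5
      have hτt : τ t = t := by simp only [hτ]; split_ifs <;> omega
      have h1 : w k = v j := by
        rw [hwv k (by omega), hkt, hτt, ZMod.natCast_self, sub_zero]
      have h2 : w (k + 1) = x := by
        rw [hk1]; exact hwx 0 (by simp)
      rw [h1, h2]; exact hxj.symm
    · -- k.val < t
      have hk1 : (k + 1).val = k.val + 1 := by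
        rw [ZMod.val_add_of_lt]
        · rw [ZMod.val_one]
        · rw [ZMod.val_one]; omega
      have hwk1 : w (k + 1) = if k.val + 1 = 0 then x else v (j - (τ (k.val + 1) : ZMod t)) := by
        simp only [hw, hk1]
      rw [if_neg (by omega)] at hwk1
      by_cases hs0 : k.val = 0
      · -- x → v i
        have h2 : w (k + 1) = v i := by rw [hwk1, hs0, hτ1, hii]
        rw [hwx k hs0, h2]; exact hxi
      by_cases hs1 : k.val = 1
      · -- v i → v (j - 1)
        have h1 : w k = v i := by rw [hwv k hs0, hs1, hτ1, hii]
        have hτ2 : τ 2 = 1 := by simp only [hτ]; split_ifs <;> omega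
        have h2 : w (k + 1) = v (j - 1) := by
          rw [hwk1, hs1, hτ2, Nat.cast_one]
        rw [h1, h2]; exact h.symm
      -- now 2 ≤ k.val ≤ t - 1
      have hs2 : 2 ≤ k.val := by omega
      rcases lt_trichotomy (k.val + 1) (m + 1) with hsm | hsm | hsm
      · have hτs : τ k.val = k.val - 1 := by simp only [hτ]; split_ifs <;> omega
        have hτs1 : τ (k.val + 1) = k.val := by simp only [hτ]; split_ifs <;> omega
        have e : j - ((k.val - 1 : ℕ) : ZMod t) = (j - (k.val : ZMod t)) + 1 := by
          rw [Nat.cast_sub (by omega : 1 ≤ k.val)]; push_cast; ring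
        rw [hwv k hs0, hwk1, hτs, hτs1, e]
        exact (hadj (j - (k.val : ZMod t))).symm
      · -- k.val = m : the chord
        have hsm' : k.val = m := by omega
        have hτs : τ k.val = m - 1 := by simp only [hτ]; split_ifs <;> omega
        have hτs1 : τ (k.val + 1) = m + 1 := by simp only [hτ]; split_ifs <;> omega
        have e1 : j - ((m - 1 : ℕ) : ZMod t) = i + 1 := by
          rw [Nat.cast_sub (by omega : 1 ≤ m), hmcast]; push_cast; ring
        have e2 : j - ((m + 1 : ℕ) : ZMod t) = i - 1 := by
          have : ((m + 1 : ℕ) : ZMod t) = (j - i) + 1 := by push_cast [hmcast]; ring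
          rw [this]; ring
        rw [hwv k hs0, hwk1, hτs, hτs1, e1, e2]
        exact hchord.symm
      · -- m < k.val
        have hτs : τ k.val = k.val := by simp only [hτ]; split_ifs <;> omega
        have hτs1 : τ (k.val + 1) = k.val + 1 := by simp only [hτ]; split_ifs <;> omega
        have e : j - ((k.val : ℕ) : ZMod t) = (j - ((k.val + 1 : ℕ) : ZMod t)) + 1 := by
          push_cast; ring
        rw [hwv k hs0, hwk1, hτs, hτs1, e]
        exact (hadj (j - ((k.val + 1 : ℕ) : ZMod t))).symm
  -- injectivity of w
  have hwinj : Function.Injective w := by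
    intro k1 k2 hk
    by_cases h1 : k1.val = 0 <;> by_cases h2 : k2.val = 0
    · exact ZMod.val_injective _ (by omega)
    · rw [hwx k1 h1, hwv k2 h2] at hk; exact absurd ⟨_, hk.symm⟩ hx
    · rw [hwv k1 h1, hwx k2 h2] at hk; exact absurd ⟨_, hk⟩ hx
    · rw [hwv k1 h1, hwv k2 h2] at hk
      have e := hinj hk
      have h3 : ((τ k1.val : ℕ) : ZMod t) = ((τ k2.val : ℕ) : ZMod t) := by
        linear_combination -e
      have b1 := hτrange k1.val (by omega) (hval k1)
      have b2 := hτrange k2.val (by omega) (hval k2)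
      have h4 : τ k1.val = τ k2.val :=
        cast_inj_aux ht b1.1 b1.2 b2.1 b2.2 h3
      have h5 : k1.val = k2.val :=
        hτinj _ _ (by omega) (hval k1) (by omega) (hval k2) h4
      exact ZMod.val_injective _ h5
  -- range of w
  have hwrange : Set.range w = insert x (Set.range v) := by
    apply Set.eq_of_subset_of_subset
    · rintro _ ⟨k, rfl⟩
      by_cases h1 : k.val = 0
      · rw [hwx k h1]; exact Set.mem_insert _ _
      · rw [hwv k h1]; exact Set.mem_insert_of_mem _ ⟨_, rfl⟩
    · rintro y hy
      rcases hy with rfl | ⟨a, rfl⟩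
      · exact ⟨0, hwx 0 (by simp)⟩
      · set b : ZMod t := j - a with hb
        have hab : j - b = a := by rw [hb]; ring
        set b' : ℕ := if b = 0 then t else b.val with hb'
        have hb'1 : 1 ≤ b' := by
          simp only [hb']; split_ifs with hb0
          · omega
          · have := ZMod.val_pos.mpr hb0; omega
        have hb'2 : b' ≤ t := by
          simp only [hb']; split_ifs with hb0
          · rfl
          · exact le_of_lt (ZMod.val_lt b)
        have hb'cast : ((b' : ℕ) : ZMod t) = b := by
          simp only [hb']; split_ifs with hb0
          · rw [ZMod.natCast_self, hb0]
          · exact ZMod.natCast_zmod_val b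
        obtain ⟨s, hs1, hs2, hsτ⟩ : ∃ s, 1 ≤ s ∧ s ≤ t ∧ τ s = b' := by
          rcases lt_trichotomy b' m with hc | hc | hc
          · exact ⟨b' + 1, by omega, by omega, by simp only [hτ]; split_ifs <;> omega⟩
          · exact ⟨1, le_refl 1, by omega, by simp only [hτ]; split_ifs <;> omega⟩
          · exact ⟨b', by omega, hb'2, by simp only [hτ]; split_ifs <;> omega⟩
        refine ⟨((s : ℕ) : ZMod (t+1)), ?_⟩
        have hsv : ((s : ℕ) : ZMod (t+1)).val = s := ZMod.val_natCast_of_lt (by omega)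
        rw [hwv _ (by omega), hsv, hsτ, hb'cast, hab]
  exact hne ⟨x, hx, w, ⟨by omega, hwinj, hadjw⟩, hwrange⟩

/-- Lemma 3.1(3): if `v_i, v_j` are distinct vertices of a non-extendable cycle with a common
off-cycle neighbour `x`, and `v_{i-1}v_{i+1} ∈ E(G)`, then neither `v_{j-1}v_i` nor
`v_{j+1}v_i` is an edge. -/
theorem stmt12 {V : Type*} (G : SimpleGraph V) (t : ℕ) (v : ZMod t → V)
    (hC : IsCycleFun G t v) (hne : ¬ CycleExtendable G t v)
    (x : V) (hx : x ∉ Set.range v) (i j : ZMod t) (hij : i ≠ j)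
    (hxi : G.Adj x (v i)) (hxj : G.Adj x (v j))
    (hchord : G.Adj (v (i - 1)) (v (i + 1))) :
    ¬ G.Adj (v (j - 1)) (v i) ∧ ¬ G.Adj (v (j + 1)) (v i) := by
  constructor
  · exact key_s12 G t v hC hne x hx i j hij hxi hxj hchord
  · -- apply `key` to the reversed cycle
    set u : ZMod t → V := fun k => v (-k) with hu
    have hur : Set.range u = Set.range v :=
      Function.Surjective.range_comp neg_surjective v
    have hCu : IsCycleFun G t u := by
      obtain ⟨ht, hinj, hadj⟩ := hC
      refine ⟨ht, ?_, ?_⟩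
      · intro a b hab
        exact neg_injective (hinj hab)
      · intro k
        show G.Adj (v (-k)) (v (-(k + 1)))
        have e : -(k + 1) = -k - 1 := by ring
        rw [e]
        have h0 := hadj (-k - 1)
        rw [sub_add_cancel] at h0
        exact h0.symm
    have hneu : ¬ CycleExtendable G t u := by
      simpa only [CycleExtendable, hur] using hne
    have hxu : x ∉ Set.range u := by rw [hur]; exact hx
    have hres := key_s12 G t u hCu hneu x hxu (-i) (-j)
      (fun hh => hij (neg_injective hh))
      (by show G.Adj x (v (- -i)); rw [neg_neg]; exact hxi)
      (by show G.Adj x (v (- -j)); rw [neg_neg]; exact hxj)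
      (by
        show G.Adj (v (-(-i - 1))) (v (-(-i + 1)))
        have e1 : -(-i - 1) = i + 1 := by ring
        have e2 : -(-i + 1) = i - 1 := by ring
        rw [e1, e2]
        exact hchord.symm)
    intro hcon
    apply hres
    show G.Adj (v (-(-j - 1))) (v (- -i))
    have e3 : -(-j - 1) = j + 1 := by ring
    rw [e3, neg_neg]
    exact hcon
end

section
/- Let C = v_0 v_1 … v_{t−1} v_0 be a non-extendable cycle in a graph G, and suppose an off-cycle vertex x is adjacent to both v_i and v_{i+2} (indices mod t). Then v_{i+1} does not have two consecutive neighbours v_k, v_{k+1} on the path v_{i+2} … v_i along C. -/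
/-- Lemma 3.1(4): if an off-cycle vertex `x` is adjacent to `v_i` and `v_{i+2}` on a
non-extendable cycle, then `v_{i+1}` has no two consecutive neighbours `v_k, v_{k+1}` on the
path `v_{i+2} … v_i` along the cycle. -/
theorem stmt13 {V : Type*} (G : SimpleGraph V) (t : ℕ) (v : ZMod t → V)
    (hC : IsCycleFun G t v) (hne : ¬ CycleExtendable G t v)
    (x : V) (hx : x ∉ Set.range v) (i : ZMod t)
    (hxi : G.Adj x (v i)) (hxi2 : G.Adj x (v (i + 2))) :
    ∀ k : ZMod t, k ≠ i → k ≠ i + 1 →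
      ¬ (G.Adj (v (i + 1)) (v k) ∧ G.Adj (v (i + 1)) (v (k + 1))) := by
  obtain ⟨ht3, hvinj, hadj⟩ := hC
  haveI : NeZero t := ⟨by omega⟩
  rintro k hk0 hk1 ⟨h1, h2⟩
  apply hne
  set m : ℕ := (k - i).val with hm
  have hmc : (m : ZMod t) = k - i := ZMod.natCast_rightInverse _
  have hmt : m < t := ZMod.val_lt _
  have hm2 : 2 ≤ m := by
    rcases Nat.lt_or_ge m 2 with h | h
    · exfalso
      have h01 : m = 0 ∨ m = 1 := by omega
      rcases h01 with h' | h'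
      · apply hk0
        rw [h'] at hmc; push_cast at hmc
        linear_combination -hmc
      · apply hk1
        rw [h'] at hmc; push_cast at hmc
        linear_combination -hmc
    · exact h
  -- index map
  set c : ℕ → ℕ := fun p => if p < m then p + 1 else if p = m then 1 else if p = t then 0 else p with hc
  have hclt : ∀ p, p ≤ t → c p < t := by
    intro p hp; simp only [hc]; split_ifs <;> omega
  have hcinj : ∀ p p', 1 ≤ p → p ≤ t → 1 ≤ p' → p' ≤ t → c p = c p' → p = p' := by
    intro p p' h1p h2p h1p' h2p' h
    simp only [hc] at h; split_ifs at h <;> omega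
  -- the new cycle
  set w : ZMod (t + 1) → V := fun j => if j = 0 then x else v (i + ((c j.val : ℕ) : ZMod t)) with hw
  have hwp : ∀ p : ℕ, 1 ≤ p → p ≤ t → w ((p : ℕ) : ZMod (t + 1)) = v (i + ((c p : ℕ) : ZMod t)) := by
    intro p h1p h2p
    have hv : ((p : ℕ) : ZMod (t + 1)).val = p := ZMod.val_cast_of_lt (by omega)
    have hne0 : ((p : ℕ) : ZMod (t + 1)) ≠ 0 := by
      intro h; rw [← ZMod.val_eq_zero, hv] at h; omega
    simp only [hw, if_neg hne0, hv]
  have hts : ((t : ℕ) : ZMod (t+1)) + 1 = 0 := by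
    have h := ZMod.natCast_self (t+1)
    push_cast at h
    linear_combination h
  refine ⟨x, hx, w, ⟨by omega, ?_, ?_⟩, ?_⟩
  · -- injectivity
    intro j j' hjj'
    have hj := ZMod.val_lt j
    have hj' := ZMod.val_lt j'
    have hrj : ((j.val : ℕ) : ZMod (t+1)) = j := ZMod.natCast_rightInverse _
    have hrj' : ((j'.val : ℕ) : ZMod (t+1)) = j' := ZMod.natCast_rightInverse _
    by_cases h0 : j = 0 <;> by_cases h0' : j' = 0
    · rw [h0, h0']
    · exfalso; rw [h0] at hjj'
      simp only [hw, if_pos rfl, if_neg h0'] at hjj'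
      exact hx ⟨_, hjj'.symm⟩
    · exfalso; rw [h0'] at hjj'
      simp only [hw, if_neg h0, if_pos rfl] at hjj'
      exact hx ⟨_, hjj'⟩
    · simp only [hw, if_neg h0, if_neg h0'] at hjj'
      have hvv := hvinj hjj'
      have hcc : ((c j.val : ℕ) : ZMod t) = ((c j'.val : ℕ) : ZMod t) :=
        add_left_cancel hvv
      have h1j : 1 ≤ j.val := by
        rcases Nat.eq_zero_or_pos j.val with h | h
        · exfalso; apply h0; rw [← hrj, h]; norm_num
        · exact h
      have h1j' : 1 ≤ j'.val := by
        rcases Nat.eq_zero_or_pos j'.val with h | h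
        · exfalso; apply h0'; rw [← hrj', h]; norm_num
        · exact h
      have hval : c j.val = c j'.val := by
        have e1 := ZMod.val_cast_of_lt (hclt j.val (by omega))
        have e2 := ZMod.val_cast_of_lt (hclt j'.val (by omega))
        rw [← e1, ← e2, hcc]
      have := hcinj _ _ h1j (by omega) h1j' (by omega) hval
      rw [← hrj, ← hrj', this]
  · -- edges
    intro j
    have hj := ZMod.val_lt j
    have hrj : ((j.val : ℕ) : ZMod (t+1)) = j := ZMod.natCast_rightInverse _
    rcases Nat.eq_zero_or_pos j.val with h0 | hpos
    · -- j = 0 : edge x — v (i+2)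
      have hj0 : j = 0 := by rw [← hrj, h0]; norm_num
      have e0 : w j = x := by rw [hj0]; simp only [hw, if_pos rfl]
      have e1 : w (j + 1) = v (i + 2) := by
        have hh : j + 1 = ((1 : ℕ) : ZMod (t+1)) := by rw [hj0]; norm_num
        rw [hh, hwp 1 le_rfl (by omega)]
        have hc1 : c 1 = 2 := by simp only [hc]; split_ifs <;> omega
        rw [hc1]
        norm_num
      rw [e0, e1]
      exact hxi2
    · rcases Nat.lt_or_ge j.val t with hlt | hge
      · -- 1 ≤ p ≤ t-1
        set p := j.val with hp
        have e1 : w j = v (i + ((c p : ℕ) : ZMod t)) := by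
          rw [← hrj]; exact hwp p hpos (by omega)
        have e2 : w (j + 1) = v (i + ((c (p+1) : ℕ) : ZMod t)) := by
          have hh : j + 1 = ((p + 1 : ℕ) : ZMod (t+1)) := by rw [← hrj]; push_cast; ring
          rw [hh]; exact hwp (p+1) (by omega) (by omega)
        rw [e1, e2]
        rcases Nat.lt_trichotomy (p+1) m with hcase | hcase | hcase
        · -- p + 1 < m
          have f1 : c p = p + 1 := by simp only [hc]; split_ifs <;> omega
          have f2 : c (p+1) = p + 2 := by simp only [hc]; split_ifs <;> omega
          rw [f1, f2]
          have := hadj (i + ((p+1 : ℕ) : ZMod t))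
          convert this using 2
          push_cast; ring
        · -- p + 1 = m : edge v k — v (i+1)
          have f1 : c p = m := by simp only [hc]; split_ifs <;> omega
          have f2 : c (p+1) = 1 := by simp only [hc]; split_ifs <;> omega
          rw [f1, f2]
          have g1 : i + ((m : ℕ) : ZMod t) = k := by rw [hmc]; ring
          have g2 : i + ((1 : ℕ) : ZMod t) = i + 1 := by push_cast; ring
          rw [g1, g2]
          exact h1.symm
        · rcases Nat.lt_trichotomy p m with hcase2 | hcase2 | hcase2
          · omega
          · -- p = m : edge v (i+1) — v (k+1)
            have f1 : c p = 1 := by simp only [hc]; split_ifs <;> omega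
            have f2 : ((c (p+1) : ℕ) : ZMod t) = ((p + 1 : ℕ) : ZMod t) := by
              simp only [hc]
              split_ifs with ha hb hd
              · exfalso; omega
              · exfalso; omega
              · rw [hd]; simp
              · rfl
            rw [f1, f2, hcase2]
            have g1 : i + ((1 : ℕ) : ZMod t) = i + 1 := by push_cast; ring
            have g2 : i + ((m + 1 : ℕ) : ZMod t) = k + 1 := by push_cast; rw [hmc]; ring
            rw [g1, g2]
            exact h2
          · -- m < p ≤ t - 1
            have f1 : c p = p := by simp only [hc]; split_ifs <;> omega
            have f2 : ((c (p+1) : ℕ) : ZMod t) = ((p + 1 : ℕ) : ZMod t) := by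
              simp only [hc]
              split_ifs with ha hb hd
              · exfalso; omega
              · exfalso; omega
              · rw [hd]; simp
              · rfl
            rw [f1, f2]
            have := hadj (i + ((p : ℕ) : ZMod t))
            convert this using 2
            push_cast; ring
      · -- p = t : edge v i — x
        have hpt : j.val = t := by omega
        have e0 : w j = v i := by
          rw [← hrj, hpt, hwp t (by omega) le_rfl]
          have f1 : c t = 0 := by simp only [hc]; split_ifs <;> omega
          rw [f1]
          congr 1
          push_cast; ring
        have e1 : w (j + 1) = x := by
          have hh : j + 1 = 0 := by rw [← hrj, hpt]; exact hts
          rw [hh]; simp only [hw, if_pos rfl]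
        rw [e0, e1]
        exact hxi.symm
  · -- range
    apply Set.eq_of_subset_of_subset
    · rintro _ ⟨j, rfl⟩
      by_cases h0 : j = 0
      · simp only [hw, if_pos h0]; exact Set.mem_insert _ _
      · simp only [hw, if_neg h0]; exact Set.mem_insert_of_mem _ ⟨_, rfl⟩
    · rintro y hy
      rcases hy with rfl | ⟨a, rfl⟩
      · exact ⟨0, by simp only [hw, if_pos rfl]⟩
      · set d := (a - i).val with hd
        have hdc : ((d : ℕ) : ZMod t) = a - i := ZMod.natCast_rightInverse _
        have hdt : d < t := ZMod.val_lt _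
        have key : ∀ p : ℕ, 1 ≤ p → p ≤ t → c p = d → v a ∈ Set.range w := by
          intro p h1p h2p hcp
          refine ⟨((p : ℕ) : ZMod (t+1)), ?_⟩
          rw [hwp p h1p h2p, hcp, hdc]
          congr 1; ring
        rcases Nat.eq_zero_or_pos d with h | h
        · exact key t (by omega) le_rfl (by simp only [hc]; split_ifs <;> omega)
        · rcases Nat.lt_or_ge d 2 with h' | h'
          · exact key m (by omega) (by omega) (by simp only [hc]; split_ifs <;> omega)
          · rcases Nat.lt_or_ge d (m+1) with h'' | h''
            · exact key (d - 1) (by omega) (by omega) (by simp only [hc]; split_ifs <;> omega)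
            · exact key d (by omega) (by omega) (by simp only [hc]; split_ifs <;> omega)
end

section
/- Let G be a connected locally Dirac graph and C = v_0 v_1 … v_{t−1} v_0 a non-extendable cycle in G. Suppose v_0 is, among all cycle vertices adjacent to some off-cycle vertex, one of maximum degree d, and that v_0 has s ≥ 1 off-cycle neighbours. Then d ≥ 6; moreover s ≤ d/2 − 2 if v_1 is not adjacent to v_{t−1}, and s ≤ d/2 − 1 if v_1 is adjacent to v_{t−1}. -/
lemma extend_of_insert {V : Type*} (G : SimpleGraph V) (t : ℕ) (v : ZMod t → V)
    (hC : IsCycleFun G t v) (x : V) (hx : x ∉ Set.range v) (i : ZMod t)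
    (h1 : G.Adj (v i) x) (h2 : G.Adj x (v (i + 1))) :
    CycleExtendable G t v := by
  obtain ⟨ht3, hinj, hadj⟩ := hC
  haveI : NeZero t := ⟨by omega⟩
  set c := i + 1 with hc
  refine ⟨x, hx, fun k => if k.val < t then v ((k.val : ZMod t) + c) else x,
    ⟨by omega, ?_, ?_⟩, ?_⟩
  · -- injective
    intro a b hab
    by_cases ha : a.val < t <;> by_cases hb : b.val < t <;> simp only [ha, hb, if_pos, if_neg,
      if_true, if_false] at hab
    · have h3 : (a.val : ZMod t) = (b.val : ZMod t) := by
        have := hinj hab; exact add_right_cancel this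
      have h4 := congrArg ZMod.val h3
      rw [ZMod.val_cast_of_lt ha, ZMod.val_cast_of_lt hb] at h4
      exact ZMod.val_injective _ h4
    · exact absurd ⟨_, hab⟩ hx
    · exact absurd ⟨_, hab.symm⟩ hx
    · have := ZMod.val_lt a; have := ZMod.val_lt b
      apply ZMod.val_injective; omega
  · -- adjacency
    intro k
    by_cases hk : k.val < t
    · have hkk : ((k.val + 1 : ℕ) : ZMod (t+1)) = k + 1 := by
        push_cast; rw [ZMod.natCast_rightInverse k]
      have hv : (k + 1).val = k.val + 1 := by
        rw [← hkk, ZMod.val_cast_of_lt (by omega)]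
      by_cases hk1 : k.val + 1 < t
      · simp only [hk, hv, hk1, if_true]
        have hcast : ((k.val + 1 : ℕ) : ZMod t) = (k.val : ZMod t) + 1 := by push_cast; ring
        rw [hcast]
        have := hadj ((k.val : ZMod t) + c)
        convert this using 2
        ring
      · have hkt : k.val + 1 = t := by omega
        simp only [hk, hv, if_true, if_neg (by omega : ¬ (k.val + 1 < t))]
        have h0 : (k.val : ZMod t) + 1 = 0 := by
          have : ((k.val + 1 : ℕ) : ZMod t) = 0 := by rw [hkt]; exact ZMod.natCast_self t
          push_cast at this; linear_combination this
        have : (k.val : ZMod t) = -1 := eq_neg_of_add_eq_zero_left h0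
        rw [this, hc, show (-1 : ZMod t) + (i + 1) = i by ring]
        exact h1
    · have hkt : k.val = t := by have := ZMod.val_lt k; omega
      have hkeq : k = ((t : ℕ) : ZMod (t+1)) := by
        apply ZMod.val_injective; rw [ZMod.val_cast_of_lt (by omega)]; exact hkt
      have h0 : k + 1 = 0 := by
        rw [hkeq]
        have := ZMod.natCast_self (t+1)
        push_cast at this
        linear_combination this
      simp only [if_neg (by omega : ¬ (k.val < t)), h0, ZMod.val_zero,
        if_pos (by omega : 0 < t)]
      rw [Nat.cast_zero, zero_add, hc]
      exact h2
  · -- range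
    ext y
    simp only [Set.mem_range, Set.mem_insert_iff]
    constructor
    · rintro ⟨k, rfl⟩
      by_cases hk : k.val < t
      · simp only [hk, if_true]; exact Or.inr ⟨_, rfl⟩
      · simp [hk]
    · rintro (rfl | ⟨j, rfl⟩)
      · refine ⟨((t : ℕ) : ZMod (t+1)), ?_⟩
        rw [if_neg]
        rw [ZMod.val_cast_of_lt (by omega)]; omega
      · refine ⟨(((j - c).val : ℕ) : ZMod (t+1)), ?_⟩
        have hlt : (j - c).val < t := ZMod.val_lt _
        have hv : ((((j - c).val : ℕ) : ZMod (t+1)).val) = (j - c).val :=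
          ZMod.val_cast_of_lt (by omega)
        rw [if_pos (by rw [hv]; exact hlt), hv, ZMod.natCast_rightInverse (j - c)]
        congr 1; ring

/-- Lemma 3.2(1): Let `C = v_0 v_1 … v_{t-1} v_0` be a non-extendable cycle in a connected
locally Dirac graph `G`, and let `v_0` be an attachment vertex of maximum degree `d` with
`s ≥ 1` off-cycle neighbours.  Then `d ≥ 6`; moreover `s ≤ d/2 - 2` if `v_1 ≁ v_{t-1}`,
and `s ≤ d/2 - 1` if `v_1 ~ v_{t-1}`. -/
theorem stmt14 {V : Type*} [Fintype V] (G : SimpleGraph V) (hc : G.Connected)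
    (hLD : LocallyDirac G) (t : ℕ) (v : ZMod t → V)
    (hC : IsCycleFun G t v) (hne : ¬ CycleExtendable G t v)
    (hmax : ∀ i : ZMod t, (∃ y, y ∉ Set.range v ∧ G.Adj (v i) y) →
      degN G (v i) ≤ degN G (v 0))
    (hs : 1 ≤ (G.neighborSet (v 0) \ Set.range v).ncard) :
    6 ≤ degN G (v 0) ∧
    (¬ G.Adj (v 1) (v (-1)) →
      2 * (G.neighborSet (v 0) \ Set.range v).ncard + 4 ≤ degN G (v 0)) ∧
    (G.Adj (v 1) (v (-1)) →
      2 * (G.neighborSet (v 0) \ Set.range v).ncard + 2 ≤ degN G (v 0)) := by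
  obtain ⟨ht3, hinj, hadj⟩ := id hC
  haveI : NeZero t := ⟨by omega⟩
  have hA01 : G.Adj (v 0) (v 1) := by have := hadj 0; rwa [zero_add] at this
  have hAm0 : G.Adj (v (-1)) (v 0) := by have := hadj (-1); rwa [neg_add_cancel] at this
  have key : ∀ n : ℕ, 0 < n → n < t → ((n : ZMod t) ≠ 0) := by
    intro n hn hnt h
    rw [ZMod.natCast_eq_zero_iff] at h
    have := Nat.le_of_dvd hn h; omega
  have hz10 : (1 : ZMod t) ≠ 0 := by
    have := key 1 (by omega) (by omega); rwa [Nat.cast_one] at this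
  have hz1m : (1 : ZMod t) ≠ -1 := by
    intro h
    have h2 : ((2 : ℕ) : ZMod t) = 0 := by push_cast; linear_combination h
    exact key 2 (by omega) (by omega) h2
  have hz0m : (0 : ZMod t) ≠ -1 := by
    intro h
    have h2 : ((1 : ℕ) : ZMod t) = 0 := by push_cast; linear_combination h
    exact key 1 (by omega) (by omega) h2
  have hv1m : v 1 ≠ v (-1) := fun h => hz1m (hinj h)
  have hv01 : v 0 ≠ v 1 := fun h => hz10 (hinj h).symm
  have hv0m : v 0 ≠ v (-1) := fun h => hz0m (hinj h)
  set A := G.neighborSet (v 0) \ Set.range v with hA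
  have hAsub : A ⊆ G.neighborSet (v 0) := Set.diff_subset
  have hAadj : ∀ y ∈ A, G.Adj (v 0) y ∧ ¬ G.Adj y (v 1) ∧ ¬ G.Adj y (v (-1)) := by
    intro y hy
    have hyadj : G.Adj (v 0) y := hy.1
    refine ⟨hyadj, fun h => hne ?_, fun h => hne ?_⟩
    · refine extend_of_insert G t v hC y hy.2 0 hyadj ?_
      rwa [zero_add]
    · refine extend_of_insert G t v hC y hy.2 (-1) h.symm ?_
      rw [neg_add_cancel]; exact hyadj.symm
  have hAne : A.Nonempty := by
    rcases Set.eq_empty_or_nonempty A with h | h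
    · rw [h, Set.ncard_empty] at hs; omega
    · exact h
  obtain ⟨x, hxA⟩ := hAne
  have hxnr : x ∉ Set.range v := hxA.2
  have hsum : ∀ S T : Set V, S ⊆ G.neighborSet (v 0) → T ⊆ G.neighborSet (v 0) →
      Disjoint S T → S.ncard + T.ncard ≤ degN G (v 0) := by
    intro S T hS hT hd
    rw [← Set.ncard_union_eq hd (Set.toFinite _) (Set.toFinite _)]
    exact Set.ncard_le_ncard (Set.union_subset hS hT) (Set.toFinite _)
  -- Part 1 : d ≥ 6
  obtain ⟨hxadj, hxn1, hxnm⟩ := hAadj x hxA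
  have hLDx := hLD (v 0) x hxadj
  have hv1x : v 1 ≠ x := fun h => hxnr ⟨1, h⟩
  have hvmx : v (-1) ≠ x := fun h => hxnr ⟨-1, h⟩
  have hT1card : ({v 1, v (-1), x} : Set V).ncard = 3 := by
    rw [Set.ncard_insert_of_notMem (by simp [hv1m, hv1x]),
      Set.ncard_pair hvmx]
  have hT1sub : ({v 1, v (-1), x} : Set V) ⊆ G.neighborSet (v 0) := by
    intro a ha
    rcases ha with rfl | rfl | rfl
    · exact hA01
    · exact hAm0.symm
    · exact hxadj
  have hd1 : Disjoint (G.neighborSet (v 0) ∩ G.neighborSet x)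
      ({v 1, v (-1), x} : Set V) := by
    rw [Set.disjoint_right]
    intro a ha hmem
    have hax : G.Adj x a := hmem.2
    rcases ha with rfl | rfl | rfl
    · exact hxn1 hax
    · exact hxnm hax
    · exact G.irrefl hax
  have h6 : (G.neighborSet (v 0) ∩ G.neighborSet x).ncard + 3 ≤ degN G (v 0) := by
    have := hsum _ _ Set.inter_subset_left hT1sub hd1
    rwa [hT1card] at this
  have hpart1 : 6 ≤ degN G (v 0) := by
    have : locDeg G (v 0) x = (G.neighborSet (v 0) ∩ G.neighborSet x).ncard := rfl
    omega
  -- Parts 2 and 3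
  have hLD1 := hLD (v 0) (v 1) hA01
  have hAn1 : ∀ a ∈ A, a ∉ G.neighborSet (v 1) := by
    intro a ha hmem
    exact (hAadj a ha).2.1 hmem.symm
  have hv1A : v 1 ∉ A := fun h => h.2 ⟨1, rfl⟩
  have hvmA : v (-1) ∉ A := fun h => h.2 ⟨-1, rfl⟩
  refine ⟨hpart1, ?_, ?_⟩
  · -- v 1 not adjacent to v (-1)
    intro hnadj
    have hTsub : A ∪ {v 1, v (-1)} ⊆ G.neighborSet (v 0) := by
      apply Set.union_subset hAsub
      intro a ha
      rcases ha with rfl | rfl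
      · exact hA01
      · exact hAm0.symm
    have hTcard : (A ∪ {v 1, v (-1)}).ncard = A.ncard + 2 := by
      rw [Set.ncard_union_eq (by simp [Set.disjoint_right, hv1A, hvmA])
        (Set.toFinite _) (Set.toFinite _), Set.ncard_pair hv1m]
    have hdisj : Disjoint (G.neighborSet (v 0) ∩ G.neighborSet (v 1))
        (A ∪ {v 1, v (-1)}) := by
      rw [Set.disjoint_right]
      intro a ha hmem
      have ha1 : G.Adj (v 1) a := hmem.2
      rcases ha with ha | rfl | rfl
      · exact hAn1 a ha ha1
      · exact G.irrefl ha1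
      · exact hnadj ha1
    have hfin := hsum _ _ Set.inter_subset_left hTsub hdisj
    rw [hTcard] at hfin
    have : locDeg G (v 0) (v 1) = (G.neighborSet (v 0) ∩ G.neighborSet (v 1)).ncard := rfl
    omega
  · -- v 1 adjacent to v (-1)
    intro _
    have hTsub : A ∪ {v 1} ⊆ G.neighborSet (v 0) := by
      apply Set.union_subset hAsub
      intro a ha
      rcases ha with rfl
      exact hA01
    have hTcard : (A ∪ {v 1}).ncard = A.ncard + 1 := by
      rw [Set.ncard_union_eq (by simp [Set.disjoint_right, hv1A])
        (Set.toFinite _) (Set.toFinite _), Set.ncard_singleton]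
    have hdisj : Disjoint (G.neighborSet (v 0) ∩ G.neighborSet (v 1)) (A ∪ {v 1}) := by
      rw [Set.disjoint_right]
      intro a ha hmem
      have ha1 : G.Adj (v 1) a := hmem.2
      rcases ha with ha | rfl
      · exact hAn1 a ha ha1
      · exact G.irrefl ha1
    have hfin := hsum _ _ Set.inter_subset_left hTsub hdisj
    rw [hTcard] at hfin
    have : locDeg G (v 0) (v 1) = (G.neighborSet (v 0) ∩ G.neighborSet (v 1)).ncard := rfl
    omega
end

section
/- Let C = v_0 v_1 … v_{t−1} v_0 be a non-extendable cycle in a graph G and y an off-cycle vertex adjacent to v_i and v_j with i < j. Then there are no two consecutive vertices on the path v_j → v_i along C such that one of them is adjacent to v_{i+1} and the other to v_{j−1}. -/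
lemma natCast_val_self {t : ℕ} [NeZero t] (z : ZMod t) : ((z.val : ℕ) : ZMod t) = z := by
  simp [ZMod.natCast_val, ZMod.cast_id]

lemma extend_aux {V : Type*} (G : SimpleGraph V) (t : ℕ) (v : ZMod t → V)
    (hC : IsCycleFun G t v) (y : V) (hy : y ∉ Set.range v) (j : ℕ) (τ : ℕ → ℕ)
    (hτlt : ∀ k, k < t → τ k < t)
    (hτinj : ∀ k, k < t → ∀ l, l < t → τ k = τ l → k = l)
    (hadj : ∀ k, k + 1 < t → G.Adj (v ((j + τ k : ℕ) : ZMod t)) (v ((j + τ (k+1) : ℕ) : ZMod t)))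
    (hlast : G.Adj (v ((j + τ (t-1) : ℕ) : ZMod t)) y)
    (hfirst : G.Adj y (v ((j + τ 0 : ℕ) : ZMod t))) :
    CycleExtendable G t v := by
  obtain ⟨ht3, hvinj, hvadj⟩ := hC
  haveI : NeZero t := ⟨by omega⟩
  haveI : Fact (1 < t + 1) := ⟨by omega⟩
  set w : ZMod (t+1) → V := fun x => if x.val < t then v ((j + τ x.val : ℕ) : ZMod t) else y
    with hw
  -- helper: casts of small nats equal implies equal
  have castinj : ∀ p q : ℕ, p < t → q < t → ((p : ℕ) : ZMod t) = q → p = q := by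
    intro p q hp hq h
    have := congrArg ZMod.val h
    rwa [ZMod.val_cast_of_lt hp, ZMod.val_cast_of_lt hq] at this
  have key : ∀ k l : ℕ, k < t → l < t →
      v ((j + τ k : ℕ) : ZMod t) = v ((j + τ l : ℕ) : ZMod t) → k = l := by
    intro k l hk hl h
    have h2 := hvinj h
    have h3 : ((τ k : ℕ) : ZMod t) = ((τ l : ℕ) : ZMod t) := by
      have : ((j : ZMod t)) + (τ k : ℕ) = ((j : ZMod t)) + (τ l : ℕ) := by
        push_cast at h2 ⊢; exact h2
      exact add_left_cancel this
    exact hτinj k hk l hl (castinj _ _ (hτlt k hk) (hτlt l hl) h3)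
  refine ⟨y, hy, w, ⟨by omega, ?_, ?_⟩, ?_⟩
  · -- injective
    intro x x' h
    have hx : x.val < t + 1 := x.val_lt
    have hx' : x'.val < t + 1 := x'.val_lt
    by_cases h1 : x.val < t <;> by_cases h2 : x'.val < t
    · simp only [hw, h1, h2, if_pos] at h
      have := key _ _ h1 h2 h
      exact ZMod.val_injective _ this
    · exfalso; simp only [hw, h1, h2, if_pos, if_neg, if_true, if_false] at h
      exact hy ⟨_, h⟩
    · exfalso; simp only [hw, h1, h2, if_pos, if_neg, if_true, if_false] at h
      exact hy ⟨_, h.symm⟩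
    · have : x.val = x'.val := by omega
      exact ZMod.val_injective _ this
  · -- adjacency
    intro k
    have hk : k.val < t + 1 := k.val_lt
    have hrep : k = ((k.val : ℕ) : ZMod (t+1)) := (natCast_val_self k).symm
    by_cases h1 : k.val + 1 < t
    · have hval1 : (k + 1).val = k.val + 1 := by
        rw [ZMod.val_add_of_lt (by rw [ZMod.val_one]; omega), ZMod.val_one]
      have e1 : k.val < t := by omega
      have e2 : k.val + 1 < t := by omega
      simp only [hw, hval1]
      rw [if_pos e1, if_pos e2]
      exact hadj k.val h1
    · by_cases h2 : k.val < t
      · -- k.val = t - 1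
        have hkv : k.val = t - 1 := by omega
        have hval1 : (k + 1).val = t := by
          rw [ZMod.val_add_of_lt (by rw [ZMod.val_one]; omega), ZMod.val_one, hkv]
          omega
        simp only [hw, hval1]
        rw [if_pos h2, if_neg (lt_irrefl t), hkv]
        exact hlast
      · -- k.val = t
        have hkv : k.val = t := by omega
        have hval1 : (k + 1).val = 0 := by
          have : k + 1 = 0 := by
            rw [hrep, hkv, show ((t : ℕ) : ZMod (t+1)) + 1 = ((t + 1 : ℕ) : ZMod (t+1)) by push_cast; ring]
            simp
          rw [this, ZMod.val_zero]
        simp only [hw, hval1]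
        rw [if_neg (show ¬ k.val < t by omega), if_pos (show 0 < t by omega)]
        exact hfirst
  · -- range
    ext z
    simp only [Set.mem_range, Set.mem_insert_iff]
    constructor
    · rintro ⟨x, rfl⟩
      by_cases h1 : x.val < t
      · right; simp only [hw]; rw [if_pos h1]; exact ⟨_, rfl⟩
      · left; simp only [hw]; rw [if_neg h1]
    · rintro (rfl | ⟨z0, rfl⟩)
      · refine ⟨((t : ℕ) : ZMod (t+1)), ?_⟩
        have : (((t:ℕ) : ZMod (t+1))).val = t := ZMod.val_cast_of_lt (by omega)
        simp only [hw, this]; rw [if_neg (lt_irrefl t)]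
      · -- surjectivity of τ
        have hsurj : ∀ b < t, ∃ k < t, τ k = b := by
          intro b hb
          have := Finset.surj_on_of_inj_on_of_card_le (s := Finset.range t) (t := Finset.range t)
            (fun a _ => τ a) (fun a ha => Finset.mem_range.2 (hτlt a (Finset.mem_range.1 ha)))
            (fun a₁ a₂ h₁ h₂ h => hτinj a₁ (Finset.mem_range.1 h₁) a₂ (Finset.mem_range.1 h₂) h)
            le_rfl b (Finset.mem_range.2 hb)
          obtain ⟨a, ha, hab⟩ := this
          exact ⟨a, Finset.mem_range.1 ha, hab.symm⟩
        obtain ⟨k, hk, hkb⟩ := hsurj (z0 - (j : ZMod t)).val (ZMod.val_lt _)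
        refine ⟨((k : ℕ) : ZMod (t+1)), ?_⟩
        have hkval : (((k:ℕ) : ZMod (t+1))).val = k := ZMod.val_cast_of_lt (by omega)
        simp only [hw, hkval]; rw [if_pos hk]
        congr 1
        push_cast
        rw [hkb, natCast_val_self]
        ring

/-- Lemma 3.2(5)(i): if an off-cycle vertex `y` is adjacent to `v_i` and `v_j` (`i < j`) on a
non-extendable cycle, there are no two consecutive vertices on the arc `v_j → v_i` (in the
forward direction) such that one of them is adjacent to `v_{i+1}` and the other to `v_{j-1}`. -/
theorem stmt15 {V : Type*} (G : SimpleGraph V) (t : ℕ) (v : ZMod t → V)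
    (hC : IsCycleFun G t v) (hne : ¬ CycleExtendable G t v)
    (y : V) (hy : y ∉ Set.range v) (i j : ℕ) (hij : i < j) (hjt : j < t)
    (hyi : G.Adj y (v (i : ZMod t))) (hyj : G.Adj y (v (j : ZMod t))) :
    ∀ m : ℕ, m < t - j + i →
      ¬ ((G.Adj (v ((j + m : ℕ) : ZMod t)) (v ((i + 1 : ℕ) : ZMod t)) ∧
            G.Adj (v ((j + m + 1 : ℕ) : ZMod t)) (v ((j - 1 : ℕ) : ZMod t))) ∨
          (G.Adj (v ((j + m : ℕ) : ZMod t)) (v ((j - 1 : ℕ) : ZMod t)) ∧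
            G.Adj (v ((j + m + 1 : ℕ) : ZMod t)) (v ((i + 1 : ℕ) : ZMod t)))) := by
  intro m hm hcontra
  apply hne
  have ht3 : 3 ≤ t := hC.1
  haveI : NeZero t := ⟨by omega⟩
  have step : ∀ s : ℕ, G.Adj (v ((s : ℕ) : ZMod t)) (v ((s + 1 : ℕ) : ZMod t)) := by
    intro s
    have h := hC.2.2 ((s : ℕ) : ZMod t)
    rwa [show ((s : ℕ) : ZMod t) + 1 = ((s + 1 : ℕ) : ZMod t) by push_cast; ring] at h
  have step2 : ∀ p q : ℕ, q = p + 1 → G.Adj (v ((p : ℕ) : ZMod t)) (v ((q : ℕ) : ZMod t)) :=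
    fun p q h => h ▸ step p
  have step2' : ∀ p q : ℕ, p = q + 1 → G.Adj (v ((p : ℕ) : ZMod t)) (v ((q : ℕ) : ZMod t)) :=
    fun p q h => (step2 q p h).symm
  have redt : ∀ p q : ℕ, p = q + t → ((p : ℕ) : ZMod t) = ((q : ℕ) : ZMod t) := by
    intro p q h; subst h; push_cast; simp
  by_cases hji : j = i + 1
  · -- y is adjacent to two consecutive cycle vertices: extend directly
    refine extend_aux G t v hC y hy j (fun k => k) (fun k hk => hk)
      (fun k _ l _ h => h) ?_ ?_ ?_
    · intro k hk
      exact step2 (j + k) (j + (k + 1)) (by omega)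
    · show G.Adj (v ((j + (t - 1) : ℕ) : ZMod t)) y
      rw [redt (j + (t - 1)) (j - 1) (by omega), show j - 1 = i by omega]
      exact hyi.symm
    · show G.Adj y (v ((j + 0 : ℕ) : ZMod t))
      exact hyj
  · have hj2 : i + 2 ≤ j := by omega
    set a : ℕ := t - j + i + 1 with ha
    have ham : m + 1 < a := by omega
    have hat : a + 1 ≤ t := by omega
    rcases hcontra with ⟨c1, c2⟩ | ⟨c1, c2⟩
    · -- case 1
      set τ : ℕ → ℕ := fun k =>
        if k ≤ m then k else if k ≤ m + (t - a) then a + (k - (m + 1)) else k - (t - a)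
        with hτ
      refine extend_aux G t v hC y hy j τ ?_ ?_ ?_ ?_ ?_
      · intro k hk; simp only [hτ]; split_ifs <;> omega
      · intro k hk l hl h; simp only [hτ] at h; split_ifs at h <;> omega
      · intro k hk
        by_cases hA : k < m
        · have ek : τ k = k := by simp only [hτ]; split_ifs <;> omega
          have ek1 : τ (k + 1) = k + 1 := by simp only [hτ]; split_ifs <;> omega
          rw [ek, ek1]; exact step2 _ _ (by omega)
        · by_cases hB : k = m
          · have ek : τ k = m := by simp only [hτ]; split_ifs <;> omega
            have ek1 : τ (k + 1) = a := by simp only [hτ]; split_ifs <;> omega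
            rw [ek, ek1, redt (j + a) (i + 1) (by omega)]
            exact c1
          · by_cases hD : k + 1 ≤ m + (t - a)
            · have ek : τ k = a + (k - (m + 1)) := by simp only [hτ]; split_ifs <;> omega
              have ek1 : τ (k + 1) = a + (k + 1 - (m + 1)) := by
                simp only [hτ]; split_ifs <;> omega
              rw [ek, ek1]; exact step2 _ _ (by omega)
            · by_cases hE : k = m + (t - a)
              · have ek : τ k = t - 1 := by simp only [hτ]; split_ifs <;> omega
                have ek1 : τ (k + 1) = m + 1 := by simp only [hτ]; split_ifs <;> omega
                rw [ek, ek1, redt (j + (t - 1)) (j - 1) (by omega),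
                  show j + (m + 1) = j + m + 1 by omega]
                exact c2.symm
              · have ek : τ k = k - (t - a) := by simp only [hτ]; split_ifs <;> omega
                have ek1 : τ (k + 1) = k + 1 - (t - a) := by
                  simp only [hτ]; split_ifs <;> omega
                rw [ek, ek1]; exact step2 _ _ (by omega)
      · have ek : τ (t - 1) = a - 1 := by simp only [hτ]; split_ifs <;> omega
        rw [ek, redt (j + (a - 1)) i (by omega)]
        exact hyi.symm
      · have ek : τ 0 = 0 := by simp only [hτ]; split_ifs <;> omega
        rw [ek]
        exact hyj
    · -- case 2
      set τ : ℕ → ℕ := fun k =>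
        if k ≤ m then k else if k ≤ m + (t - a) then t + m - k else k - (t - a)
        with hτ
      refine extend_aux G t v hC y hy j τ ?_ ?_ ?_ ?_ ?_
      · intro k hk; simp only [hτ]; split_ifs <;> omega
      · intro k hk l hl h; simp only [hτ] at h; split_ifs at h <;> omega
      · intro k hk
        by_cases hA : k < m
        · have ek : τ k = k := by simp only [hτ]; split_ifs <;> omega
          have ek1 : τ (k + 1) = k + 1 := by simp only [hτ]; split_ifs <;> omega
          rw [ek, ek1]; exact step2 _ _ (by omega)
        · by_cases hB : k = m
          · have ek : τ k = m := by simp only [hτ]; split_ifs <;> omega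
            have ek1 : τ (k + 1) = t - 1 := by simp only [hτ]; split_ifs <;> omega
            rw [ek, ek1, redt (j + (t - 1)) (j - 1) (by omega)]
            exact c1
          · by_cases hD : k + 1 ≤ m + (t - a)
            · have ek : τ k = t + m - k := by simp only [hτ]; split_ifs <;> omega
              have ek1 : τ (k + 1) = t + m - (k + 1) := by
                simp only [hτ]; split_ifs <;> omega
              rw [ek, ek1]; exact step2' _ _ (by omega)
            · by_cases hE : k = m + (t - a)
              · have ek : τ k = a := by simp only [hτ]; split_ifs <;> omega
                have ek1 : τ (k + 1) = m + 1 := by simp only [hτ]; split_ifs <;> omega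
                rw [ek, ek1, redt (j + a) (i + 1) (by omega),
                  show j + (m + 1) = j + m + 1 by omega]
                exact c2.symm
              · have ek : τ k = k - (t - a) := by simp only [hτ]; split_ifs <;> omega
                have ek1 : τ (k + 1) = k + 1 - (t - a) := by
                  simp only [hτ]; split_ifs <;> omega
                rw [ek, ek1]; exact step2 _ _ (by omega)
      · have ek : τ (t - 1) = a - 1 := by simp only [hτ]; split_ifs <;> omega
        rw [ek, redt (j + (a - 1)) i (by omega)]
        exact hyi.symm
      · have ek : τ 0 = 0 := by simp only [hτ]; split_ifs <;> omega
        rw [ek]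
        exact hyj
end

section
/- Let C = v_0 v_1 … v_{t−1} v_0 be a cycle in a graph G and x an off-cycle vertex. Suppose there exist indices i, j, k with 0 ≤ i < j−1 and j < k−1 < t−2 such that x is adjacent to v_i and v_j, v_{k−1} is adjacent to v_{i+1}, v_{j+1} is adjacent to v_{i−1}, and v_i is adjacent to v_k. Then C is extendable. -/
/-- Index function for the extended cycle in Lemma 3.2(6)(i). -/
def ext16aux (t i j k p : ℕ) : ℕ :=
  if p = 0 then i
  else if p ≤ j - i + 1 then j + 2 - p
  else if p ≤ k - i then k + j - i + 1 - p
  else t + k - p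

/-- Lemma 3.2(6)(i): if `0 ≤ i < j - 1`, `j < k - 1 < t - 2`, the off-cycle vertex `x` is
adjacent to `v_i` and `v_j`, `v_{k-1} ~ v_{i+1}`, `v_{j+1} ~ v_{i-1}`, and `v_i ~ v_k`,
then the cycle is extendable. -/
theorem stmt16 {V : Type*} (G : SimpleGraph V) (t : ℕ) (v : ZMod t → V)
    (hC : IsCycleFun G t v)
    (x : V) (hx : x ∉ Set.range v) (i j k : ℕ)
    (hij : i + 1 < j) (hjk : j + 1 < k) (hkt : k + 1 < t)
    (hxi : G.Adj x (v (i : ZMod t))) (hxj : G.Adj x (v (j : ZMod t)))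
    (h1 : G.Adj (v ((k - 1 : ℕ) : ZMod t)) (v ((i + 1 : ℕ) : ZMod t)))
    (h2 : G.Adj (v ((j + 1 : ℕ) : ZMod t)) (v ((i : ZMod t) - 1)))
    (h3 : G.Adj (v (i : ZMod t)) (v (k : ZMod t))) :
    CycleExtendable G t v := by
  obtain ⟨ht3, hvinj, hadj⟩ := hC
  haveI : NeZero t := ⟨by omega⟩
  set g : ℕ → ℕ := ext16aux t i j k with hgdef
  set w : ZMod (t + 1) → V := fun p => if p.val = 1 then x else v ((g p.val : ℕ) : ZMod t)
    with hwdef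
  -- basic facts about g
  have hg0 : g 0 = i := by simp [hgdef, ext16aux]
  have hgB : ∀ p, 1 ≤ p → p ≤ j - i + 1 → g p = j + 2 - p := by
    intro p h1p h2p
    simp only [hgdef, ext16aux]
    rw [if_neg (by omega), if_pos h2p]
  have hgC : ∀ p, j - i + 1 < p → p ≤ k - i → g p = k + j - i + 1 - p := by
    intro p h1p h2p
    simp only [hgdef, ext16aux]
    rw [if_neg (by omega), if_neg (by omega), if_pos h2p]
  have hgD : ∀ p, k - i < p → g p = t + k - p := by
    intro p h1p
    simp only [hgdef, ext16aux]
    rw [if_neg (by omega), if_neg (by omega), if_neg (by omega)]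
  -- range of w
  have hw1 : ∀ p : ZMod (t+1), p.val = 1 → w p = x := by
    intro p hp; simp [hwdef, hp]
  have hwn : ∀ p : ZMod (t+1), p.val ≠ 1 → w p = v ((g p.val : ℕ) : ZMod t) := by
    intro p hp; simp [hwdef, hp]
  have hval : ∀ p : ℕ, p < t + 1 → ((p : ZMod (t+1))).val = p := fun p hp =>
    ZMod.val_cast_of_lt hp
  have hrange : Set.range w = insert x (Set.range v) := by
    apply Set.eq_of_subset_of_subset
    · rintro y ⟨p, rfl⟩
      by_cases hp : p.val = 1
      · rw [hw1 p hp]; exact Set.mem_insert _ _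
      · rw [hwn p hp]; exact Set.mem_insert_of_mem _ ⟨_, rfl⟩
    · rintro y hy
      rcases hy with rfl | ⟨m, rfl⟩
      · refine ⟨((1 : ℕ) : ZMod (t+1)), ?_⟩
        rw [hw1 _ (hval 1 (by omega))]
      · -- find a position p with g p ≡ m.val
        have hmv : m.val < t := ZMod.val_lt m
        have hm : ((m.val : ℕ) : ZMod t) = m := ZMod.natCast_rightInverse m
        set n := m.val with hn
        have key : ∃ p ≤ t, p ≠ 1 ∧ ((g p : ℕ) : ZMod t) = ((n : ℕ) : ZMod t) := by
          rcases Nat.lt_or_ge n i with hni | hni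
          · -- n < i : p = k - n
            refine ⟨k - n, by omega, by omega, ?_⟩
            rw [hgD (k - n) (by omega)]
            have : t + k - (k - n) = t + n := by omega
            rw [this]
            push_cast
            simp [ZMod.natCast_self]
          · rcases Nat.lt_or_ge j n with hnj | hnj
            · rcases Nat.lt_or_ge n k with hnk | hnk
              · -- j < n < k : p = k + j - i + 1 - n
                refine ⟨k + j - i + 1 - n, by omega, by omega, ?_⟩
                rw [hgC _ (by omega) (by omega)]
                congr 1
                omega
              · -- k ≤ n < t : p = t + k - n
                refine ⟨t + k - n, by omega, by omega, ?_⟩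
                rw [hgD _ (by omega)]
                congr 1
                omega
            · rcases Nat.eq_or_lt_of_le hni with hni' | hni'
              · -- n = i : p = 0
                exact ⟨0, by omega, by omega, by rw [hg0, hni']⟩
              · -- i < n ≤ j : p = j + 2 - n
                refine ⟨j + 2 - n, by omega, by omega, ?_⟩
                rw [hgB _ (by omega) (by omega)]
                congr 1
                omega
        obtain ⟨p, hpt, hp1, hpg⟩ := key
        refine ⟨((p : ℕ) : ZMod (t+1)), ?_⟩
        rw [hwn _ (by rw [hval p (by omega)]; exact hp1), hval p (by omega), hpg, hm]
  -- injectivity of w via counting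
  classical
  have hwinj : Function.Injective w := by
    have hcoe : ((Finset.univ.image w : Finset V) : Set V) = insert x (Set.range v) := by
      rw [Finset.coe_image, Finset.coe_univ, Set.image_univ, hrange]
    have hcoe2 : ((insert x (Finset.univ.image v) : Finset V) : Set V)
        = insert x (Set.range v) := by
      simp [Finset.coe_insert, Finset.coe_image, Set.image_univ]
    have heq : (Finset.univ.image w : Finset V) = insert x (Finset.univ.image v) :=
      Finset.coe_injective (hcoe.trans hcoe2.symm)
    have hxnm : x ∉ Finset.univ.image v := by
      simp only [Finset.mem_image, Finset.mem_univ, true_and]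
      rintro ⟨a, ha⟩; exact hx ⟨a, ha⟩
    have hcard : (Finset.univ.image w).card = t + 1 := by
      rw [heq, Finset.card_insert_of_notMem hxnm,
        Finset.card_image_of_injective _ hvinj, Finset.card_univ, ZMod.card]
    have hcard2 : (Finset.univ.image w).card = (Finset.univ : Finset (ZMod (t+1))).card := by
      rw [hcard, Finset.card_univ, ZMod.card]
    have := Finset.card_image_iff.mp hcard2
    intro a b hab
    exact this (by simp) (by simp) hab
  refine ⟨x, hx, w, ⟨by omega, hwinj, ?_⟩, hrange⟩
  -- adjacency
  -- first a cast helper for cycle edges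
  have hcyc : ∀ a b : ℕ, b = a + 1 → G.Adj (v ((a : ℕ) : ZMod t)) (v ((b : ℕ) : ZMod t)) := by
    intro a b hb
    have := hadj ((a : ℕ) : ZMod t)
    have hcast : ((a : ℕ) : ZMod t) + 1 = ((b : ℕ) : ZMod t) := by
      subst hb; push_cast; ring
    rwa [hcast] at this
  have main : ∀ n ≤ t, G.Adj (w ((n : ℕ) : ZMod (t+1))) (w (((n + 1) % (t+1) : ℕ) : ZMod (t+1))) := by
    intro n hnt
    rcases Nat.eq_or_lt_of_le hnt with hnt' | hnt'
    · -- n = t : v k ~ v i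
      have hm : (n + 1) % (t + 1) = 0 := by rw [hnt']; exact Nat.mod_self _
      rw [hm, hwn _ (by rw [hval n (by omega)]; omega),
        hwn _ (by rw [hval 0 (by omega)]; omega), hval n (by omega), hval 0 (by omega),
        hg0, hgD n (by omega)]
      have : t + k - n = k := by omega
      rw [this]
      exact h3.symm
    · have hm : (n + 1) % (t + 1) = n + 1 := Nat.mod_eq_of_lt (by omega)
      rw [hm]
      rcases Nat.eq_zero_or_pos n with rfl | hn0
      · -- n = 0 : v i ~ x
        rw [hwn _ (by rw [hval 0 (by omega)]; omega), hw1 _ (by rw [hval 1 (by omega)]),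
          hval 0 (by omega), hg0]
        exact hxi.symm
      rcases Nat.eq_or_lt_of_le hn0 with hn1 | hn1
      · -- n = 1 : x ~ v j
        rw [← hn1, hw1 _ (by rw [hval 1 (by omega)]),
          hwn _ (by rw [hval 2 (by omega)]; omega), hval 2 (by omega),
          hgB 2 (by omega) (by omega)]
        have : j + 2 - 2 = j := by omega
        rw [this]
        exact hxj
      -- now 2 ≤ n
      rw [hwn _ (by rw [hval n (by omega)]; omega),
        hwn _ (by rw [hval (n+1) (by omega)]; omega), hval n (by omega),
        hval (n+1) (by omega)]
      rcases Nat.lt_or_ge n (j - i + 1) with hB | hB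
      · -- interior of B : v (j+2-n) ~ v (j+1-n)
        rw [hgB n (by omega) (by omega), hgB (n+1) (by omega) (by omega)]
        have e1 : j + 2 - n = (j + 2 - (n+1)) + 1 := by omega
        exact (hcyc _ _ e1).symm
      rcases Nat.eq_or_lt_of_le hB with hB' | hB'
      · -- n = j - i + 1 : v (i+1) ~ v (k-1)
        rw [hgB n (by omega) (by omega), hgC (n+1) (by omega) (by omega)]
        have e1 : j + 2 - n = i + 1 := by omega
        have e2 : k + j - i + 1 - (n + 1) = k - 1 := by omega
        rw [e1, e2]
        exact h1.symm
      rcases Nat.lt_or_ge n (k - i) with hCc | hCc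
      · -- interior of C
        rw [hgC n (by omega) (by omega), hgC (n+1) (by omega) (by omega)]
        have e1 : k + j - i + 1 - n = (k + j - i + 1 - (n+1)) + 1 := by omega
        exact (hcyc _ _ e1).symm
      rcases Nat.eq_or_lt_of_le hCc with hC' | hC'
      · -- n = k - i : v (j+1) ~ v (i-1)
        rw [hgC n (by omega) (by omega), hgD (n+1) (by omega)]
        have e1 : k + j - i + 1 - n = j + 1 := by omega
        have e2 : t + k - (n + 1) = t + i - 1 := by omega
        rw [e1, e2]
        have e3 : ((t + i - 1 : ℕ) : ZMod t) = (i : ZMod t) - 1 := by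
          have h4 : (t + i - 1) + 1 = t + i := by omega
          have : ((t + i - 1 : ℕ) : ZMod t) + 1 = ((t + i : ℕ) : ZMod t) := by
            rw [← h4]; push_cast; ring
          have h5 : ((t + i : ℕ) : ZMod t) = (i : ZMod t) := by
            push_cast; simp [ZMod.natCast_self]
          rw [h5] at this
          linear_combination this
        rw [e3]
        exact h2
      · -- interior of D
        rw [hgD n (by omega), hgD (n+1) (by omega)]
        have e1 : t + k - n = (t + k - (n+1)) + 1 := by omega
        exact (hcyc _ _ e1).symm
  -- conclude for arbitrary p : ZMod (t+1)
  intro p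
  have hpv : p.val < t + 1 := ZMod.val_lt p
  have hp : ((p.val : ℕ) : ZMod (t+1)) = p := by
    simp [ZMod.natCast_val, ZMod.cast_id]
  have hp1 : p + 1 = (((p.val + 1) % (t+1) : ℕ) : ZMod (t+1)) := by
    rw [← hp]
    push_cast [Nat.cast_add, ZMod.natCast_mod]
    simp
  have hmain := main p.val (by omega)
  rw [hp] at hmain
  rwa [← hp1] at hmain
end
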